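/- Let x_1, …, x_10 be the complex roots (with multiplicity) of Lehmer's polynomial x^10 + x^9 − x^7 − x^6 − x^5 − x^4 − x^3 + x + 1. Then the cyclotomic norms satisfy N_630 := ∏_{r=1}^{10} Φ_630(x_r) = 5^6 and N_126 := ∏_{r=1}^{10} Φ_126(x_r) = 5^6, where Φ_k denotes the k-th cyclotomic polynomial. -/

import Mathlib

open Polynomial

private theorem card_roots_cx (P : ℂ[X]) : P.roots.card = P.natDegree := by
  rcases eq_or_ne P 0 with rfl | hP
  · simp
  · exact splits_iff_card_roots.mp (IsAlgClosed.splits P)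

private theorem prod_map_const_mul (s : Multiset ℂ) (c : ℂ) (f : ℂ → ℂ) :
    (s.map fun x => c * f x).prod = c ^ s.card * (s.map f).prod := by
  rw [Multiset.prod_map_mul (f := fun _ => c) (g := f)]
  congr 1
  simp [Multiset.map_const', Multiset.prod_replicate]

private theorem eval_eq_lc_prod (P : ℂ[X]) (x : ℂ) :
    P.eval x = P.leadingCoeff * (P.roots.map fun a => x - a).prod := by
  conv_lhs => rw [(IsAlgClosed.splits P).eq_prod_roots]
  simp [eval_multiset_prod, Multiset.map_map, Function.comp]

private theorem swap_prod (P Q : ℂ[X]) :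
    Q.leadingCoeff ^ P.natDegree * (Q.roots.map fun x => P.eval x).prod =
    (-1) ^ (P.natDegree * Q.natDegree) * P.leadingCoeff ^ Q.natDegree *
      (P.roots.map fun x => Q.eval x).prod := by
  have hc : ∀ R : ℂ[X], R.roots.card = R.natDegree := card_roots_cx
  have e1 : (Q.roots.map fun x => P.eval x).prod
      = P.leadingCoeff ^ Q.natDegree *
        (Q.roots.map fun x => (P.roots.map fun a => x - a).prod).prod := by
    rw [Multiset.map_congr rfl (fun x _ => eval_eq_lc_prod P x), prod_map_const_mul, hc]
  have e2 : (P.roots.map fun x => Q.eval x).prod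
      = Q.leadingCoeff ^ P.natDegree *
        (P.roots.map fun a => (Q.roots.map fun x => a - x).prod).prod := by
    rw [Multiset.map_congr rfl (fun x _ => eval_eq_lc_prod Q x), prod_map_const_mul, hc]
  have key : (Q.roots.map fun x => (P.roots.map fun a => x - a).prod).prod
      = (-1) ^ (P.natDegree * Q.natDegree) *
        (P.roots.map fun a => (Q.roots.map fun x => a - x).prod).prod := by
    rw [Multiset.prod_map_prod_map]
    have inner : ∀ a : ℂ, (Q.roots.map fun x => x - a).prod
        = (-1) ^ Q.natDegree * (Q.roots.map fun x => a - x).prod := by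
      intro a
      have h : (Q.roots.map fun x => x - a) = (Q.roots.map fun x => a - x).map Neg.neg := by
        rw [Multiset.map_map]
        exact Multiset.map_congr rfl (by intros; simp)
      rw [h, Multiset.prod_map_neg]
      simp [Multiset.card_map, hc]
    rw [Multiset.map_congr rfl (fun a _ => inner a), prod_map_const_mul, hc, ← pow_mul,
      mul_comm Q.natDegree]
  rw [e1, e2, key]; ring

private theorem res_step (A B r : ℂ[X]) (c lA lB v w : ℂ) (dA dB : ℕ)
    (hdA : A.natDegree = dA) (hdB : B.natDegree = dB)
    (hlA : A.leadingCoeff = lA) (hlB : B.leadingCoeff = lB)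
    (hid : ∀ x : ℂ, B.eval x = 0 → c * A.eval x = r.eval x)
    (hv : (B.roots.map fun x => r.eval x).prod = v)
    (hne : lA ^ dB * c ^ dB ≠ 0)
    (hw : lA ^ dB * c ^ dB * w = (-1) ^ (dB * dA) * lB ^ dA * v) :
    (A.roots.map fun x => B.eval x).prod = w := by
  have hs := swap_prod B A
  rw [hdA, hdB, hlA, hlB] at hs
  have hr : c ^ dB * (B.roots.map fun x => A.eval x).prod
      = (B.roots.map fun x => r.eval x).prod := by
    rw [← hdB, ← card_roots_cx, ← prod_map_const_mul]
    exact congrArg _ (Multiset.map_congr rfl fun x hx => hid x (isRoot_of_mem_roots hx))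
  apply mul_left_cancel₀ hne
  rw [hw]
  calc lA ^ dB * c ^ dB * (A.roots.map fun x => B.eval x).prod
      = c ^ dB * (lA ^ dB * (A.roots.map fun x => B.eval x).prod) := by ring
    _ = c ^ dB * ((-1) ^ (dB * dA) * lB ^ dA * (B.roots.map fun x => A.eval x).prod) := by
        rw [hs]
    _ = (-1) ^ (dB * dA) * lB ^ dA * (c ^ dB * (B.roots.map fun x => A.eval x).prod) := by ring
    _ = (-1) ^ (dB * dA) * lB ^ dA * v := by rw [hr, hv]

private theorem res_const (B : ℂ[X]) (c v : ℂ) (dB : ℕ) (hdB : B.natDegree = dB)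
    (hv : c ^ dB = v) :
    (B.roots.map fun x => (C c).eval x).prod = v := by
  simp only [eval_C]
  rw [Multiset.map_const', Multiset.prod_replicate, card_roots_cx, hdB, hv]
private noncomputable def P3_1 : ℂ[X] := C (1 : ℂ) * X ^ 3 + C ((-1 : ℂ))
private noncomputable def P3_2 : ℂ[X] := C (1 : ℂ) * X ^ 2
private noncomputable def P6_1 : ℂ[X] := C (1 : ℂ) * X ^ 6 + C ((-1 : ℂ))
private noncomputable def P6_2 : ℂ[X] := C (1 : ℂ) * X ^ 5
private noncomputable def P9_1 : ℂ[X] := C (1 : ℂ) * X ^ 9 + C ((-1 : ℂ))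
private noncomputable def P9_2 : ℂ[X] := C (1 : ℂ) * X ^ 7 + C (1 : ℂ) * X ^ 6 + C (1 : ℂ) * X ^ 5 + C (1 : ℂ) * X ^ 4 + C (1 : ℂ) * X ^ 3 + C ((-2 : ℂ)) * X + C ((-2 : ℂ))
private noncomputable def P9_3 : ℂ[X] := C (1 : ℂ) * X ^ 4 + C (2 : ℂ) * X ^ 3 + C ((-2 : ℂ)) * X + C ((-1 : ℂ))
private noncomputable def P9_4 : ℂ[X] := C (6 : ℂ) * X ^ 3 + C (5 : ℂ) * X ^ 2 + C ((-5 : ℂ)) * X + C ((-5 : ℂ))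
private noncomputable def P9_5 : ℂ[X] := C (5 : ℂ) * X ^ 2 + C (7 : ℂ) * X + C (1 : ℂ)
private noncomputable def P9_6 : ℂ[X] := C (1 : ℂ) * X + C (3 : ℂ)
private noncomputable def P15_1 : ℂ[X] := C (1 : ℂ) * X ^ 8 + C (1 : ℂ) * X ^ 7 + C (1 : ℂ) * X ^ 6 + C (1 : ℂ) * X ^ 5 + C (1 : ℂ) * X ^ 4 + C ((-1 : ℂ)) * X + C ((-2 : ℂ))
private noncomputable def P15_2 : ℂ[X] := C (1 : ℂ) * X ^ 7 + C (1 : ℂ) * X ^ 6 + C ((-2 : ℂ)) * X ^ 2 + C (1 : ℂ)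
private noncomputable def P15_3 : ℂ[X] := C (1 : ℂ) * X ^ 6 + C (1 : ℂ) * X ^ 5 + C (1 : ℂ) * X ^ 4 + C (2 : ℂ) * X ^ 3 + C ((-2 : ℂ)) * X + C ((-2 : ℂ))
private noncomputable def P15_4 : ℂ[X] := C (1 : ℂ) * X ^ 5 + C (2 : ℂ) * X ^ 4 + C ((-2 : ℂ)) * X + C ((-1 : ℂ))
private noncomputable def P15_5 : ℂ[X] := C (3 : ℂ) * X ^ 4 + C (2 : ℂ) * X ^ 3 + C (2 : ℂ) * X ^ 2 + C ((-3 : ℂ)) * X + C ((-3 : ℂ))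
private noncomputable def P15_6 : ℂ[X] := C (14 : ℂ) * X ^ 3 + C ((-1 : ℂ)) * X ^ 2 + C ((-3 : ℂ)) * X + C ((-3 : ℂ))
private noncomputable def P15_7 : ℂ[X] := C (61 : ℂ) * X ^ 2 + C ((-41 : ℂ)) * X + C ((-55 : ℂ))
private noncomputable def P15_8 : ℂ[X] := C (10 : ℂ) * X + C (3 : ℂ)
private noncomputable def P18_1 : ℂ[X] := C (1 : ℂ) * X ^ 9 + C (2 : ℂ) * X ^ 8 + C (2 : ℂ) * X ^ 7 + C (1 : ℂ) * X ^ 6 + C (1 : ℂ) * X ^ 5 + C ((-1 : ℂ)) * X ^ 3 + C ((-1 : ℂ)) * X ^ 2 + C ((-1 : ℂ)) * X + C ((-1 : ℂ))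
private noncomputable def P18_2 : ℂ[X] := C (1 : ℂ) * X ^ 6 + C (1 : ℂ) * X ^ 3 + C ((-1 : ℂ)) * X
private noncomputable def P18_3 : ℂ[X] := C (1 : ℂ) * X ^ 5 + C (1 : ℂ) * X ^ 4 + C ((-1 : ℂ)) * X ^ 3 + C ((-1 : ℂ)) * X ^ 2 + C (1 : ℂ) * X + C (1 : ℂ)
private noncomputable def P18_4 : ℂ[X] := C (2 : ℂ) * X ^ 4 + C (1 : ℂ) * X ^ 3 + C ((-2 : ℂ)) * X ^ 2 + C ((-1 : ℂ)) * X + C (1 : ℂ)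
private noncomputable def P18_5 : ℂ[X] := C (1 : ℂ) * X ^ 3 + C ((-3 : ℂ)) * X + C ((-3 : ℂ))
private noncomputable def P18_6 : ℂ[X] := C (1 : ℂ) * X ^ 2 + C (2 : ℂ) * X + C (1 : ℂ)
private noncomputable def P21_1 : ℂ[X] := C (1 : ℂ) * X ^ 9 + C (3 : ℂ) * X ^ 8 + C (3 : ℂ) * X ^ 7 + C (2 : ℂ) * X ^ 6 + C (2 : ℂ) * X ^ 5 + C (1 : ℂ) * X ^ 4 + C ((-2 : ℂ)) * X ^ 2 + C ((-2 : ℂ)) * X + C ((-2 : ℂ))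
private noncomputable def P21_2 : ℂ[X] := C (3 : ℂ) * X ^ 8 + C (3 : ℂ) * X ^ 7 + C (1 : ℂ) * X ^ 6 + C (2 : ℂ) * X ^ 5 + C (1 : ℂ) * X ^ 4 + C (1 : ℂ) * X ^ 3 + C ((-2 : ℂ)) * X ^ 2 + C ((-1 : ℂ)) * X + C ((-3 : ℂ))
private noncomputable def P21_3 : ℂ[X] := C (2 : ℂ) * X ^ 7 + C (2 : ℂ) * X ^ 6 + C (1 : ℂ) * X ^ 5 + C ((-1 : ℂ)) * X ^ 2 + C ((-1 : ℂ)) * X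
private noncomputable def P21_4 : ℂ[X] := C (1 : ℂ) * X ^ 6 + C ((-4 : ℂ)) * X ^ 5 + C ((-2 : ℂ)) * X ^ 4 + C ((-5 : ℂ)) * X ^ 3 + C (1 : ℂ) * X ^ 2 + C (2 : ℂ) * X + C (6 : ℂ)
private noncomputable def P21_5 : ℂ[X] := C (15 : ℂ) * X ^ 5 + C (10 : ℂ) * X ^ 4 + C (16 : ℂ) * X ^ 3 + C ((-5 : ℂ)) * X ^ 2 + C ((-11 : ℂ)) * X + C ((-20 : ℂ))
private noncomputable def P21_6 : ℂ[X] := C (1 : ℂ) * X ^ 4 + C (7 : ℂ) * X ^ 3 + C (4 : ℂ) * X ^ 2 + C ((-2 : ℂ)) * X + C ((-5 : ℂ))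
private noncomputable def P21_7 : ℂ[X] := C (69 : ℂ) * X ^ 3 + C (45 : ℂ) * X ^ 2 + C ((-14 : ℂ)) * X + C ((-55 : ℂ))
private noncomputable def P21_8 : ℂ[X] := C (20 : ℂ) * X ^ 2 + C (27 : ℂ) * X + C (19 : ℂ)
private noncomputable def P21_9 : ℂ[X] := C (11 : ℂ) * X + C (7 : ℂ)
private noncomputable def P30_1 : ℂ[X] := C (5 : ℂ) * X ^ 9 + C (11 : ℂ) * X ^ 8 + C (14 : ℂ) * X ^ 7 + C (11 : ℂ) * X ^ 6 + C (7 : ℂ) * X ^ 5 + C (3 : ℂ) * X ^ 4 + C ((-1 : ℂ)) * X ^ 3 + C ((-7 : ℂ)) * X ^ 2 + C ((-8 : ℂ)) * X + C ((-6 : ℂ))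
private noncomputable def P30_2 : ℂ[X] := C (4 : ℂ) * X ^ 8 + C ((-4 : ℂ)) * X ^ 7 + C ((-6 : ℂ)) * X ^ 6 + C ((-2 : ℂ)) * X ^ 5 + C (2 : ℂ) * X ^ 4 + C ((-4 : ℂ)) * X ^ 3 + C (2 : ℂ) * X ^ 2 + C ((-7 : ℂ)) * X + C (11 : ℂ)
private noncomputable def P30_3 : ℂ[X] := C (6 : ℂ) * X ^ 7 + C (6 : ℂ) * X ^ 6 + C (2 : ℂ) * X ^ 5 + C (2 : ℂ) * X ^ 3 + C ((-1 : ℂ)) * X ^ 2 + C (1 : ℂ) * X + C ((-8 : ℂ))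
private noncomputable def P30_4 : ℂ[X] := C (2 : ℂ) * X ^ 6 + C (2 : ℂ) * X ^ 5 + C (2 : ℂ) * X ^ 4 + C ((-2 : ℂ)) * X ^ 3 + C ((-1 : ℂ)) * X + C (1 : ℂ)
private noncomputable def P30_5 : ℂ[X] := C (2 : ℂ) * X ^ 5 + C ((-3 : ℂ)) * X ^ 4 + C ((-1 : ℂ)) * X ^ 3 + C ((-1 : ℂ)) * X ^ 2 + C (1 : ℂ) * X + C (4 : ℂ)
private noncomputable def P30_6 : ℂ[X] := C (7 : ℂ) * X ^ 4 + C (1 : ℂ) * X ^ 3 + C (1 : ℂ) * X ^ 2 + C ((-5 : ℂ)) * X + C ((-6 : ℂ))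
private noncomputable def P30_7 : ℂ[X] := C (20 : ℂ) * X ^ 3 + C ((-22 : ℂ)) * X ^ 2 + C ((-9 : ℂ)) * X + C ((-29 : ℂ))
private noncomputable def P30_8 : ℂ[X] := C (56 : ℂ) * X ^ 2 + C (37 : ℂ) * X + C (27 : ℂ)
private noncomputable def P30_9 : ℂ[X] := C (5 : ℂ) * X + C ((-13 : ℂ))
private noncomputable def P42_1 : ℂ[X] := C (37 : ℂ) * X ^ 9 + C (81 : ℂ) * X ^ 8 + C (94 : ℂ) * X ^ 7 + C (74 : ℂ) * X ^ 6 + C (50 : ℂ) * X ^ 5 + C (22 : ℂ) * X ^ 4 + C ((-11 : ℂ)) * X ^ 3 + C ((-49 : ℂ)) * X ^ 2 + C ((-58 : ℂ)) * X + C ((-32 : ℂ))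
private noncomputable def P42_2 : ℂ[X] := C (86 : ℂ) * X ^ 8 + C (29 : ℂ) * X ^ 7 + C (37 : ℂ) * X ^ 6 + C (17 : ℂ) * X ^ 5 + C (6 : ℂ) * X ^ 4 + C ((-40 : ℂ)) * X ^ 3 + C ((-10 : ℂ)) * X ^ 2 + C (1 : ℂ) * X + C ((-39 : ℂ))
private noncomputable def P42_3 : ℂ[X] := C (297 : ℂ) * X ^ 7 + C (201 : ℂ) * X ^ 6 + C (183 : ℂ) * X ^ 5 + C (186 : ℂ) * X ^ 4 + C (136 : ℂ) * X ^ 3 + C ((-224 : ℂ)) * X ^ 2 + C ((-227 : ℂ)) * X + C ((-5 : ℂ))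
private noncomputable def P42_4 : ℂ[X] := C (15 : ℂ) * X ^ 6 + C ((-75 : ℂ)) * X ^ 5 + C ((-60 : ℂ)) * X ^ 4 + C (152 : ℂ) * X ^ 3 + C (134 : ℂ) * X ^ 2 + C ((-79 : ℂ)) * X + C ((-157 : ℂ))
private noncomputable def P42_5 : ℂ[X] := C (5 : ℂ) * X ^ 5 + C (2 : ℂ) * X ^ 4 + C ((-10 : ℂ)) * X ^ 3 + C ((-7 : ℂ)) * X ^ 2 + C (6 : ℂ) * X + C (9 : ℂ)
private noncomputable def P42_6 : ℂ[X] := C (12 : ℂ) * X ^ 4 + C (55 : ℂ) * X ^ 3 + C (13 : ℂ) * X ^ 2 + C ((-44 : ℂ)) * X + C ((-56 : ℂ))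
private noncomputable def P42_7 : ℂ[X] := C (2317 : ℂ) * X ^ 3 + C (979 : ℂ) * X ^ 2 + C ((-1364 : ℂ)) * X + C ((-2552 : ℂ))
private noncomputable def P42_8 : ℂ[X] := C (2566 : ℂ) * X ^ 2 + C (3454 : ℂ) * X + C (2501 : ℂ)
private noncomputable def P42_9 : ℂ[X] := C (35 : ℂ) * X + C (22 : ℂ)
private noncomputable def P45_1 : ℂ[X] := C (61 : ℂ) * X ^ 9 + C (131 : ℂ) * X ^ 8 + C (153 : ℂ) * X ^ 7 + C (120 : ℂ) * X ^ 6 + C (82 : ℂ) * X ^ 5 + C (36 : ℂ) * X ^ 4 + C ((-18 : ℂ)) * X ^ 3 + C ((-81 : ℂ)) * X ^ 2 + C ((-94 : ℂ)) * X + C ((-51 : ℂ))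
private noncomputable def P45_2 : ℂ[X] := C (163 : ℂ) * X ^ 8 + C (331 : ℂ) * X ^ 7 + C (323 : ℂ) * X ^ 6 + C (177 : ℂ) * X ^ 5 + C (103 : ℂ) * X ^ 4 + C (40 : ℂ) * X ^ 3 + C ((-64 : ℂ)) * X ^ 2 + C ((-252 : ℂ)) * X + C ((-151 : ℂ))
private noncomputable def P45_3 : ℂ[X] := C (126 : ℂ) * X ^ 7 + C (283 : ℂ) * X ^ 6 + C (255 : ℂ) * X ^ 5 + C (118 : ℂ) * X ^ 4 + C (30 : ℂ) * X ^ 3 + C (115 : ℂ) * X ^ 2 + C ((-189 : ℂ)) * X + C ((-317 : ℂ))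
private noncomputable def P45_4 : ℂ[X] := C (43 : ℂ) * X ^ 6 + C (57 : ℂ) * X ^ 5 + C (58 : ℂ) * X ^ 4 + C ((-60 : ℂ)) * X ^ 3 + C (127 : ℂ) * X ^ 2 + C (63 : ℂ) * X + C ((-143 : ℂ))
private noncomputable def P45_5 : ℂ[X] := C (8 : ℂ) * X ^ 5 + C ((-16 : ℂ)) * X ^ 4 + C (21 : ℂ) * X ^ 3 + C (48 : ℂ) * X ^ 2 + C ((-7 : ℂ)) * X + C ((-8 : ℂ))
private noncomputable def P45_6 : ℂ[X] := C (1 : ℂ) * X ^ 4 + C ((-3 : ℂ)) * X ^ 3 + C ((-3 : ℂ)) * X ^ 2 + C (1 : ℂ) * X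
private noncomputable def P45_7 : ℂ[X] := C (69 : ℂ) * X ^ 3 + C (64 : ℂ) * X ^ 2 + C ((-15 : ℂ)) * X + C ((-8 : ℂ))
private noncomputable def P45_8 : ℂ[X] := C (512 : ℂ) * X ^ 2 + C (156 : ℂ) * X + C ((-271 : ℂ))
private noncomputable def P45_9 : ℂ[X] := C (4 : ℂ) * X + C (7 : ℂ)
private noncomputable def P63_1 : ℂ[X] := C (1116 : ℂ) * X ^ 9 + C (2428 : ℂ) * X ^ 8 + C (2856 : ℂ) * X ^ 7 + C (2244 : ℂ) * X ^ 6 + C (1524 : ℂ) * X ^ 5 + C (676 : ℂ) * X ^ 4 + C ((-320 : ℂ)) * X ^ 3 + C ((-1492 : ℂ)) * X ^ 2 + C ((-1755 : ℂ)) * X + C ((-949 : ℂ))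
private noncomputable def P63_2 : ℂ[X] := C (440 : ℂ) * X ^ 8 + C (672 : ℂ) * X ^ 7 + C (528 : ℂ) * X ^ 6 + C (96 : ℂ) * X ^ 5 + C (356 : ℂ) * X ^ 4 + C (56 : ℂ) * X ^ 3 + C ((-269 : ℂ)) * X ^ 2 + C ((-495 : ℂ)) * X + C ((-92 : ℂ))
private noncomputable def P63_3 : ℂ[X] := C (32 : ℂ) * X ^ 7 + C (88 : ℂ) * X ^ 6 + C (36 : ℂ) * X ^ 5 + C ((-4 : ℂ)) * X ^ 4 + C (21 : ℂ) * X ^ 3 + C (16 : ℂ) * X ^ 2 + C ((-55 : ℂ)) * X + C ((-62 : ℂ))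
private noncomputable def P63_4 : ℂ[X] := C (8 : ℂ) * X ^ 6 + C (4 : ℂ) * X ^ 5 + C (1 : ℂ) * X ^ 3 + C (4 : ℂ) * X ^ 2 + C ((-3 : ℂ)) * X + C ((-6 : ℂ))
private noncomputable def P63_5 : ℂ[X] := C (2 : ℂ) * X ^ 4 + C (1 : ℂ) * X ^ 3 + C (2 : ℂ) * X ^ 2 + C (1 : ℂ) * X + C (2 : ℂ)
private noncomputable def P63_6 : ℂ[X] := C (1 : ℂ) * X ^ 3 + C (4 : ℂ) * X ^ 2 + C (1 : ℂ) * X + C (2 : ℂ)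
private noncomputable def P63_7 : ℂ[X] := C (7 : ℂ) * X ^ 2 + C (1 : ℂ) * X + C (4 : ℂ)
private noncomputable def P63_8 : ℂ[X] := C (3 : ℂ) * X + C (5 : ℂ)
private noncomputable def P90_1 : ℂ[X] := C (89403 : ℂ) * X ^ 9 + C (194564 : ℂ) * X ^ 8 + C (228862 : ℂ) * X ^ 7 + C (179804 : ℂ) * X ^ 6 + C (122098 : ℂ) * X ^ 5 + C (54219 : ℂ) * X ^ 4 + C ((-25625 : ℂ)) * X ^ 3 + C ((-119545 : ℂ)) * X ^ 2 + C ((-140618 : ℂ)) * X + C ((-76005 : ℂ))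
private noncomputable def P90_2 : ℂ[X] := C (404582 : ℂ) * X ^ 8 + C (556639 : ℂ) * X ^ 7 + C (455459 : ℂ) * X ^ 6 + C (289888 : ℂ) * X ^ 5 + C (220275 : ℂ) * X ^ 4 + C ((-34601 : ℂ)) * X ^ 3 + C ((-199309 : ℂ)) * X ^ 2 + C ((-441926 : ℂ)) * X + C ((-134604 : ℂ))
private noncomputable def P90_3 : ℂ[X] := C (609485 : ℂ) * X ^ 7 + C (720591 : ℂ) * X ^ 6 + C (453586 : ℂ) * X ^ 5 + C (469053 : ℂ) * X ^ 4 + C (502505 : ℂ) * X ^ 3 + C (273655 : ℂ) * X ^ 2 + C ((-669838 : ℂ)) * X + C ((-1068944 : ℂ))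
private noncomputable def P90_4 : ℂ[X] := C (140218 : ℂ) * X ^ 6 + C ((-180982 : ℂ)) * X ^ 5 + C ((-393866 : ℂ)) * X ^ 4 + C ((-637285 : ℂ)) * X ^ 3 + C (476980 : ℂ) * X ^ 2 + C (802706 : ℂ) * X + C (6193 : ℂ)
private noncomputable def P90_5 : ℂ[X] := C (108794 : ℂ) * X ^ 5 + C (197763 : ℂ) * X ^ 4 + C (139720 : ℂ) * X ^ 3 + C ((-220780 : ℂ)) * X ^ 2 + C ((-246785 : ℂ)) * X + C ((-30050 : ℂ))
private noncomputable def P90_6 : ℂ[X] := C (262915 : ℂ) * X ^ 4 + C (249270 : ℂ) * X ^ 3 + C ((-107730 : ℂ)) * X ^ 2 + C ((-177317 : ℂ)) * X + C ((-137496 : ℂ))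
private noncomputable def P90_7 : ℂ[X] := C (220975 : ℂ) * X ^ 3 + C ((-253782 : ℂ)) * X ^ 2 + C ((-294524 : ℂ)) * X + C (45391 : ℂ)
private noncomputable def P90_8 : ℂ[X] := C (1546589 : ℂ) * X ^ 2 + C (888948 : ℂ) * X + C ((-442782 : ℂ))
private noncomputable def P90_9 : ℂ[X] := C (578 : ℂ) * X + C (2969 : ℂ)
private noncomputable def P105_1 : ℂ[X] := C (1020972 : ℂ) * X ^ 9 + C (2221922 : ℂ) * X ^ 8 + C (2613603 : ℂ) * X ^ 7 + C (2053359 : ℂ) * X ^ 6 + C (1394355 : ℂ) * X ^ 5 + C (619182 : ℂ) * X ^ 4 + C ((-292640 : ℂ)) * X ^ 3 + C ((-1365198 : ℂ)) * X ^ 2 + C ((-1605856 : ℂ)) * X + C ((-867966 : ℂ))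
private noncomputable def P105_2 : ℂ[X] := C (871892 : ℂ) * X ^ 8 + C (326559 : ℂ) * X ^ 7 + C (126603 : ℂ) * X ^ 6 + C ((-336219 : ℂ)) * X ^ 5 + C (22098 : ℂ) * X ^ 4 + C ((-450164 : ℂ)) * X ^ 3 + C ((-263034 : ℂ)) * X ^ 2 + C (22268 : ℂ) * X + C (28542 : ℂ)
private noncomputable def P105_3 : ℂ[X] := C (5181941 : ℂ) * X ^ 7 + C (6359249 : ℂ) * X ^ 6 + C (6061347 : ℂ) * X ^ 5 + C (3207966 : ℂ) * X ^ 4 + C (2815420 : ℂ) * X ^ 3 + C ((-2439670 : ℂ)) * X ^ 2 + C ((-4919060 : ℂ)) * X + C ((-2707646 : ℂ))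
private noncomputable def P105_4 : ℂ[X] := C (336790 : ℂ) * X ^ 6 + C ((-112911 : ℂ)) * X ^ 5 + C (152149 : ℂ) * X ^ 4 + C (6432987 : ℂ) * X ^ 3 + C (3790562 : ℂ) * X ^ 2 + C ((-4024415 : ℂ)) * X + C ((-6356539 : ℂ))
private noncomputable def P105_5 : ℂ[X] := C (27181 : ℂ) * X ^ 5 + C ((-419999 : ℂ)) * X ^ 4 + C ((-887727 : ℂ)) * X ^ 3 + C ((-133672 : ℂ)) * X ^ 2 + C (801025 : ℂ) * X + C (634059 : ℂ)
private noncomputable def P105_6 : ℂ[X] := C (585038 : ℂ) * X ^ 4 + C (1135723 : ℂ) * X ^ 3 + C (123123 : ℂ) * X ^ 2 + C ((-1054642 : ℂ)) * X + C ((-814960 : ℂ))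
private noncomputable def P105_7 : ℂ[X] := C (11267813 : ℂ) * X ^ 3 + C (6866503 : ℂ) * X ^ 2 + C ((-6189470 : ℂ)) * X + C ((-11352164 : ℂ))
private noncomputable def P105_8 : ℂ[X] := C (11259577 : ℂ) * X ^ 2 + C (13800053 : ℂ) * X + C (11098975 : ℂ)
private noncomputable def P105_9 : ℂ[X] := C (4261 : ℂ) * X + C (2186 : ℂ)
private noncomputable def P126_1 : ℂ[X] := C (30884816 : ℂ) * X ^ 9 + C (67214032 : ℂ) * X ^ 8 + C (79062576 : ℂ) * X ^ 7 + C (62114976 : ℂ) * X ^ 6 + C (42179840 : ℂ) * X ^ 5 + C (18730520 : ℂ) * X ^ 4 + C ((-8852464 : ℂ)) * X ^ 3 + C ((-41297799 : ℂ)) * X ^ 2 + C ((-48577808 : ℂ)) * X + C ((-26256329 : ℂ))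
private noncomputable def P126_2 : ℂ[X] := C (1592944 : ℂ) * X ^ 8 + C (3933616 : ℂ) * X ^ 7 + C (4795280 : ℂ) * X ^ 6 + C (308296 : ℂ) * X ^ 5 + C (1918432 : ℂ) * X ^ 4 + C (801381 : ℂ) * X ^ 3 + C ((-97984 : ℂ)) * X ^ 2 + C ((-4357237 : ℂ)) * X + C ((-734112 : ℂ))
private noncomputable def P126_3 : ℂ[X] := C (22464 : ℂ) * X ^ 7 + C (221832 : ℂ) * X ^ 6 + C (17920 : ℂ) * X ^ 5 + C (37497 : ℂ) * X ^ 4 + C ((-6380 : ℂ)) * X ^ 3 + C (113392 : ℂ) * X ^ 2 + C ((-157236 : ℂ)) * X + C ((-80945 : ℂ))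
private noncomputable def P126_4 : ℂ[X] := C (136 : ℂ) * X ^ 6 + C (8 : ℂ) * X ^ 5 + C (25 : ℂ) * X ^ 4 + C ((-12 : ℂ)) * X ^ 3 + C (80 : ℂ) * X ^ 2 + C ((-92 : ℂ)) * X + C ((-49 : ℂ))
private noncomputable def P126_5 : ℂ[X] := C (5920 : ℂ) * X ^ 5 + C ((-7629 : ℂ)) * X ^ 4 + C ((-992 : ℂ)) * X ^ 3 + C ((-8120 : ℂ)) * X ^ 2 + C (192 : ℂ) * X + C ((-10811 : ℂ))
private noncomputable def P126_6 : ℂ[X] := C (12263 : ℂ) * X ^ 4 + C (8864 : ℂ) * X ^ 3 + C (14120 : ℂ) * X ^ 2 + C (6496 : ℂ) * X + C (12337 : ℂ)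
private noncomputable def P126_7 : ℂ[X] := C (6857 : ℂ) * X ^ 3 + C (21072 : ℂ) * X ^ 2 + C (4671 : ℂ) * X + C (10032 : ℂ)
private noncomputable def P126_8 : ℂ[X] := C (29495 : ℂ) * X ^ 2 + C (2560 : ℂ) * X + C (17041 : ℂ)
private noncomputable def P126_9 : ℂ[X] := C (19 : ℂ) * X + C (32 : ℂ)
private noncomputable def P210_1 : ℂ[X] := C (25862486198938 : ℂ) * X ^ 9 + C (56284032627261 : ℂ) * X ^ 8 + C (66205827953761 : ℂ) * X ^ 7 + C (52014159280088 : ℂ) * X ^ 6 + C (35320771640146 : ℂ) * X ^ 5 + C (15684659967505 : ℂ) * X ^ 4 + C ((-7412921538233 : ℂ)) * X ^ 3 + C ((-34582163611627 : ℂ)) * X ^ 2 + C ((-40678335710283 : ℂ)) * X + C ((-21986659815806 : ℂ))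
private noncomputable def P210_2 : ℂ[X] := C (59561201007485 : ℂ) * X ^ 8 + C (7664202298415 : ℂ) * X ^ 7 + C (9570557439632 : ℂ) * X ^ 6 + C (3935580417624 : ℂ) * X ^ 5 + C (15166890312825 : ℂ) * X ^ 4 + C ((-10090259048977 : ℂ)) * X ^ 3 + C ((-12086894632067 : ℂ)) * X ^ 2 + C (2159511596463 : ℂ) * X + C ((-27329049145494 : ℂ))
private noncomputable def P210_3 : ℂ[X] := C (58591879813067 : ℂ) * X ^ 7 + C (44335488716070 : ℂ) * X ^ 6 + C (26769194614982 : ℂ) * X ^ 5 + C (6980931861888 : ℂ) * X ^ 4 + C (7220266114362 : ℂ) * X ^ 3 + C ((-26278534301698 : ℂ)) * X ^ 2 + C ((-32598822866205 : ℂ)) * X + C (2452163717033 : ℂ)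
private noncomputable def P210_4 : ℂ[X] := C (257945992548012 : ℂ) * X ^ 6 + C (336970246609774 : ℂ) * X ^ 5 + C (297179956446555 : ℂ) * X ^ 4 + C (513673337489583 : ℂ) * X ^ 3 + C (103428263298278 : ℂ) * X ^ 2 + C ((-511538147026517 : ℂ)) * X + C ((-623296278866309 : ℂ))
private noncomputable def P210_5 : ℂ[X] := C (2594734881608 : ℂ) * X ^ 5 + C ((-140695803522183 : ℂ)) * X ^ 4 + C (92764488714999 : ℂ) * X ^ 3 + C (199297992838144 : ℂ) * X ^ 2 + C (87432959459849 : ℂ) * X + C ((-146079248227129 : ℂ))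
private noncomputable def P210_6 : ℂ[X] := C (18279500972335 : ℂ) * X ^ 4 + C ((-12651742929127 : ℂ)) * X ^ 3 + C ((-26398694203832 : ℂ)) * X ^ 2 + C ((-11157951732193 : ℂ)) * X + C (19184706430473 : ℂ)
private noncomputable def P210_7 : ℂ[X] := C (2691404993579616 : ℂ) * X ^ 3 + C (2057102244951296 : ℂ) * X ^ 2 + C ((-544124975549896 : ℂ)) * X + C ((-2158431554695589 : ℂ))
private noncomputable def P210_8 : ℂ[X] := C (93823196082392 : ℂ) * X ^ 2 + C (74948179493543 : ℂ) * X + C (86329154053633 : ℂ)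
private noncomputable def P210_9 : ℂ[X] := C (1853863 : ℂ) * X + C (1304327 : ℂ)
private noncomputable def P315_1 : ℂ[X] := C (655129032415041026264 : ℂ) * X ^ 9 + C (1425744746730033504712 : ℂ) * X ^ 8 + C (1677076197313382655628 : ℂ) * X ^ 7 + C (1317583529244975589736 : ℂ) * X ^ 6 + C (894719199491028808405 : ℂ) * X ^ 5 + C (397311999675124707536 : ℂ) * X ^ 4 + C ((-187778548332701256756 : ℂ)) * X ^ 3 + C ((-876009336899490328776 : ℂ)) * X ^ 2 + C ((-1030432979611460230272 : ℂ)) * X + C ((-556949516004332306297 : ℂ))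
private noncomputable def P315_2 : ℂ[X] := C (9085679898012875244 : ℂ) * X ^ 8 + C (4584060933436715304 : ℂ) * X ^ 7 + C (9362935487709582817 : ℂ) * X ^ 6 + C (9327617151915082590 : ℂ) * X ^ 5 + C (2232887303707711956 : ℂ) * X ^ 4 + C (624835228842858680 : ℂ) * X ^ 3 + C ((-4170337804749811440 : ℂ)) * X ^ 2 + C ((-1285810646256395557 : ℂ)) * X + C ((-10641027541276245510 : ℂ))
private noncomputable def P315_3 : ℂ[X] := C (33305351226816299326 : ℂ) * X ^ 7 + C ((-35842770421647368666 : ℂ)) * X ^ 6 + C ((-28952930566825539477 : ℂ)) * X ^ 5 + C (6158886807600504008 : ℂ) * X ^ 4 + C (2787221007532179668 : ℂ) * X ^ 3 + C ((-20795775773084573578 : ℂ)) * X ^ 2 + C ((-8016131686974998086 : ℂ)) * X + C (53787443559939810561 : ℂ)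
private noncomputable def P315_4 : ℂ[X] := C (930991449816223829399 : ℂ) * X ^ 6 + C (572883078050583078912 : ℂ) * X ^ 5 + C ((-33671508980478485700 : ℂ)) * X ^ 4 + C (145009514148392965204 : ℂ) * X ^ 3 + C (198734055594930373104 : ℂ) * X ^ 2 + C ((-355758877356999807059 : ℂ)) * X + C ((-962800732511385847344 : ℂ))
private noncomputable def P315_5 : ℂ[X] := C (7208025490112709574625 : ℂ) * X ^ 5 + C ((-1110873935048034034984 : ℂ)) * X ^ 4 + C (4638973557233552367908 : ℂ) * X ^ 3 + C (4122747493780565059396 : ℂ) * X ^ 2 + C (5104104993191909062408 : ℂ) * X + C ((-4661788525410220951109 : ℂ))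
private noncomputable def P315_6 : ℂ[X] := C (3914601403108780727832 : ℂ) * X ^ 4 + C (6357947057412608754341 : ℂ) * X ^ 3 + C (6520717764558574293717 : ℂ) * X ^ 2 + C (1954962813223792405216 : ℂ) * X + C (3742658803537362745207 : ℂ)
private noncomputable def P315_7 : ℂ[X] := C (3967190342958049069121 : ℂ) * X ^ 3 + C (6451742205981229753641 : ℂ) * X ^ 2 + C (1360869815631548735032 : ℂ) * X + C (2239549010657841728275 : ℂ)
private noncomputable def P315_8 : ℂ[X] := C (5331756908754002058316 : ℂ) * X ^ 2 + C ((-258879480902500509463 : ℂ)) * X + C (3848687826070549513588 : ℂ)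
private noncomputable def P315_9 : ℂ[X] := C (31079650841 : ℂ) * X + C (67326797668 : ℂ)
private noncomputable def P630_1 : ℂ[X] := C (10648699402510886229334132989629606002223831 : ℂ) * X ^ 9 + C (23174560249100286133718183712802529035435800 : ℂ) * X ^ 8 + C (27259790692625442252605558473646959458901265 : ℂ) * X ^ 7 + C (21416469499004652376912957054411004410158065 : ℂ) * X ^ 6 + C (14543082864016871805545108986578337637140321 : ℂ) * X ^ 5 + C (6458050008796664339372667222902512216589785 : ℂ) * X ^ 4 + C ((-3052219053800078449122081871454923124998263 : ℂ)) * X ^ 3 + C ((-14238966128623353681821644902045640915516176 : ℂ)) * X ^ 2 + C ((-16749022728952328254673732618939204392161001 : ℂ)) * X + C ((-9052854758155114957837247156588012516273410 : ℂ))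
private noncomputable def P630_2 : ℂ[X] := C (28814166879975559291049040304062144167956015 : ℂ) * X ^ 8 + C (51774811145202135464545167821766073056922791 : ℂ) * X ^ 7 + C (50370134697779730495380829971992554881626327 : ℂ) * X ^ 6 + C (31623566699532781613019097638101437912780847 : ℂ) * X ^ 5 + C (16136254616926269052402794520012695186974343 : ℂ) * X ^ 4 + C (5303765484812514916033673506854242606936152 : ℂ) * X ^ 3 + C ((-6472247648253246844946824183664526934704287 : ℂ)) * X ^ 2 + C ((-41192156434556338382468426546791616229729302 : ℂ)) * X + C ((-26054351947486327659441691798346602935872271 : ℂ))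
private noncomputable def P630_3 : ℂ[X] := C (10138761289754509163400653791294987859432721 : ℂ) * X ^ 7 + C (19523262997506501597974700113737425961902217 : ℂ) * X ^ 6 + C (30351374199540409146698560817930860165762297 : ℂ) * X ^ 5 + C (16366366790854393728086258777547140437893968 : ℂ) * X ^ 4 + C ((-10279951698786526238625734839041739204625048 : ℂ)) * X ^ 3 + C (13851133685467052199732536983371264364161823 : ℂ) * X ^ 2 + C ((-9841655739091534957345716482822798938350232 : ℂ)) * X + C ((-39533636769992612162481268962687067534811881 : ℂ))
private noncomputable def P630_4 : ℂ[X] := C (3558813844013272046057047260638264946371552 : ℂ) * X ^ 6 + C (468411776822119368676010609817919058470001 : ℂ) * X ^ 5 + C ((-6356482222725963691953411795528263718232175 : ℂ)) * X ^ 4 + C (4682823160448659800318844963388609012724041 : ℂ) * X ^ 3 + C ((-3289138411936075643742075466987118547770425 : ℂ)) * X ^ 2 + C ((-8364699394237537857324636757937433280214849 : ℂ)) * X + C (5016844141000191655947052478180607212023327 : ℂ)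
private noncomputable def P630_5 : ℂ[X] := C (227031140059125053617325535635985291531705 : ℂ) * X ^ 5 + C (175019389300354708397419430136553100220633 : ℂ) * X ^ 4 + C ((-122434708294716361287918735081954025104111 : ℂ)) * X ^ 3 + C (268554990460220929781026136277458121957695 : ℂ) * X ^ 2 + C (91751168558437925472812461573772534565111 : ℂ) * X + C ((-321201185002025344732116827631759393139593 : ℂ))
private noncomputable def P630_6 : ℂ[X] := C (3640169712318783053349877956190497334371 : ℂ) * X ^ 4 + C (1022605124501912842234820130402695242483 : ℂ) * X ^ 3 + C (2762187808632182803163996618607619485520 : ℂ) * X ^ 2 + C (3269694593914793968934230308568937813352 : ℂ) * X + C ((-2439183084858221525699026783482152287371 : ℂ))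
private noncomputable def P630_7 : ℂ[X] := C (251394060956804148735817534941840031781 : ℂ) * X ^ 3 + C (15256002565237436543288905861437892211 : ℂ) * X ^ 2 + C ((-111028032192896717656277523366715513272 : ℂ)) * X + C (190236868137026165551109292951816427731 : ℂ)
private noncomputable def P630_8 : ℂ[X] := C (61829236598379014270829828188872393090 : ℂ) * X ^ 2 + C (12436015850651684880115240957789796745 : ℂ) * X + C ((-43580949826864997725103742208360136439 : ℂ))
private noncomputable def P630_9 : ℂ[X] := C (792900597110923453 : ℂ) * X + C (1789321000179503059 : ℂ)
private theorem hdL : (X^10 + X^9 - X^7 - X^6 - X^5 - X^4 - X^3 + X + 1 : ℂ[X]).natDegree = 10 := by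
  compute_degree!

private theorem hlL : (X^10 + X^9 - X^7 - X^6 - X^5 - X^4 - X^3 + X + 1 : ℂ[X]).leadingCoeff = 1 := by
  rw [Polynomial.leadingCoeff, hdL]
  compute_degree!

private theorem hroot : ∀ x ∈ (X^10 + X^9 - X^7 - X^6 - X^5 - X^4 - X^3 + X + 1 : ℂ[X]).roots,
    x ^ 10 + x ^ 9 - x ^ 7 - x ^ 6 - x ^ 5 - x ^ 4 - x ^ 3 + x + 1 = 0 := by
  intro x hx
  have h := isRoot_of_mem_roots hx
  simp only [IsRoot, eval_add, eval_sub, eval_pow, eval_X, eval_one] at h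
  exact h
private theorem pw15 (x : ℂ) (h : x ^ 10 + x ^ 9 - x ^ 7 - x ^ 6 - x ^ 5 - x ^ 4 - x ^ 3 + x + 1 = 0) :
    x ^ 15 = (1 : ℂ) * x ^ 8 + (1 : ℂ) * x ^ 7 + (1 : ℂ) * x ^ 6 + (1 : ℂ) * x ^ 5 + (1 : ℂ) * x ^ 4 + ((-1 : ℂ)) * x + ((-1 : ℂ)) := by
  linear_combination ((1 : ℂ) * x ^ 5 + ((-1 : ℂ)) * x ^ 4 + (1 : ℂ) * x ^ 3 + (1 : ℂ)) * h
private theorem pw18 (x : ℂ) (h : x ^ 10 + x ^ 9 - x ^ 7 - x ^ 6 - x ^ 5 - x ^ 4 - x ^ 3 + x + 1 = 0) :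
    x ^ 18 = (1 : ℂ) * x ^ 9 + (2 : ℂ) * x ^ 8 + (2 : ℂ) * x ^ 7 + (1 : ℂ) * x ^ 6 + (1 : ℂ) * x ^ 5 + ((-1 : ℂ)) * x ^ 3 + ((-1 : ℂ)) * x ^ 2 + ((-1 : ℂ)) * x := by
  linear_combination ((1 : ℂ) * x ^ 8 + ((-1 : ℂ)) * x ^ 7 + (1 : ℂ) * x ^ 6 + (1 : ℂ) * x ^ 3 + (1 : ℂ) * x) * h
private theorem pw21 (x : ℂ) (h : x ^ 10 + x ^ 9 - x ^ 7 - x ^ 6 - x ^ 5 - x ^ 4 - x ^ 3 + x + 1 = 0) :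
    x ^ 21 = (1 : ℂ) * x ^ 9 + (3 : ℂ) * x ^ 8 + (3 : ℂ) * x ^ 7 + (2 : ℂ) * x ^ 6 + (2 : ℂ) * x ^ 5 + (1 : ℂ) * x ^ 4 + ((-2 : ℂ)) * x ^ 2 + ((-2 : ℂ)) * x + ((-1 : ℂ)) := by
  linear_combination ((1 : ℂ) * x ^ 6) * pw15 x h + ((1 : ℂ) * x ^ 4 + (1 : ℂ) * x ^ 2 + (1 : ℂ) * x + (1 : ℂ)) * h
private theorem pw30 (x : ℂ) (h : x ^ 10 + x ^ 9 - x ^ 7 - x ^ 6 - x ^ 5 - x ^ 4 - x ^ 3 + x + 1 = 0) :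
    x ^ 30 = (5 : ℂ) * x ^ 9 + (11 : ℂ) * x ^ 8 + (14 : ℂ) * x ^ 7 + (11 : ℂ) * x ^ 6 + (7 : ℂ) * x ^ 5 + (3 : ℂ) * x ^ 4 + ((-1 : ℂ)) * x ^ 3 + ((-7 : ℂ)) * x ^ 2 + ((-8 : ℂ)) * x + ((-5 : ℂ)) := by
  linear_combination ((1 : ℂ) * x ^ 15) * pw15 x h + ((1 : ℂ) * x ^ 8 + (1 : ℂ) * x ^ 7 + (1 : ℂ) * x ^ 6 + (1 : ℂ) * x ^ 5 + (1 : ℂ) * x ^ 4 + ((-1 : ℂ)) * x + ((-1 : ℂ))) * pw15 x h + ((1 : ℂ) * x ^ 6 + (1 : ℂ) * x ^ 5 + (2 : ℂ) * x ^ 4 + (3 : ℂ) * x ^ 3 + (4 : ℂ) * x ^ 2 + (4 : ℂ) * x + (6 : ℂ)) * h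
private theorem pw42 (x : ℂ) (h : x ^ 10 + x ^ 9 - x ^ 7 - x ^ 6 - x ^ 5 - x ^ 4 - x ^ 3 + x + 1 = 0) :
    x ^ 42 = (37 : ℂ) * x ^ 9 + (81 : ℂ) * x ^ 8 + (94 : ℂ) * x ^ 7 + (74 : ℂ) * x ^ 6 + (50 : ℂ) * x ^ 5 + (22 : ℂ) * x ^ 4 + ((-11 : ℂ)) * x ^ 3 + ((-49 : ℂ)) * x ^ 2 + ((-58 : ℂ)) * x + ((-31 : ℂ)) := by
  linear_combination ((1 : ℂ) * x ^ 21) * pw21 x h + ((1 : ℂ) * x ^ 9 + (3 : ℂ) * x ^ 8 + (3 : ℂ) * x ^ 7 + (2 : ℂ) * x ^ 6 + (2 : ℂ) * x ^ 5 + (1 : ℂ) * x ^ 4 + ((-2 : ℂ)) * x ^ 2 + ((-2 : ℂ)) * x + ((-1 : ℂ))) * pw21 x h + ((1 : ℂ) * x ^ 8 + (5 : ℂ) * x ^ 7 + (10 : ℂ) * x ^ 6 + (13 : ℂ) * x ^ 5 + (18 : ℂ) * x ^ 4 + (24 : ℂ) * x ^ 3 + (27 : ℂ) * x ^ 2 +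 (30 : ℂ) * x + (32 : ℂ)) * h
private theorem pw45 (x : ℂ) (h : x ^ 10 + x ^ 9 - x ^ 7 - x ^ 6 - x ^ 5 - x ^ 4 - x ^ 3 + x + 1 = 0) :
    x ^ 45 = (61 : ℂ) * x ^ 9 + (131 : ℂ) * x ^ 8 + (153 : ℂ) * x ^ 7 + (120 : ℂ) * x ^ 6 + (82 : ℂ) * x ^ 5 + (36 : ℂ) * x ^ 4 + ((-18 : ℂ)) * x ^ 3 + ((-81 : ℂ)) * x ^ 2 + ((-94 : ℂ)) * x + ((-50 : ℂ)) := by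
  linear_combination ((1 : ℂ) * x ^ 30) * pw15 x h + ((1 : ℂ) * x ^ 8 + (1 : ℂ) * x ^ 7 + (1 : ℂ) * x ^ 6 + (1 : ℂ) * x ^ 5 + (1 : ℂ) * x ^ 4 + ((-1 : ℂ)) * x + ((-1 : ℂ))) * pw30 x h + ((5 : ℂ) * x ^ 7 + (11 : ℂ) * x ^ 6 + (19 : ℂ) * x ^ 5 + (27 : ℂ) * x ^ 4 + (37 : ℂ) * x ^ 3 + (44 : ℂ) * x ^ 2 + (52 : ℂ) * x + (55 : ℂ)) * h
private theorem pw63 (x : ℂ) (h : x ^ 10 + x ^ 9 - x ^ 7 - x ^ 6 - x ^ 5 - x ^ 4 - x ^ 3 + x + 1 = 0) :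
    x ^ 63 = (1116 : ℂ) * x ^ 9 + (2428 : ℂ) * x ^ 8 + (2856 : ℂ) * x ^ 7 + (2244 : ℂ) * x ^ 6 + (1524 : ℂ) * x ^ 5 + (676 : ℂ) * x ^ 4 + ((-320 : ℂ)) * x ^ 3 + ((-1492 : ℂ)) * x ^ 2 + ((-1755 : ℂ)) * x + ((-948 : ℂ)) := by
  linear_combination ((1 : ℂ) * x ^ 42) * pw21 x h + ((1 : ℂ) * x ^ 9 + (3 : ℂ) * x ^ 8 + (3 : ℂ) * x ^ 7 + (2 : ℂ) * x ^ 6 + (2 : ℂ) * x ^ 5 + (1 : ℂ) * x ^ 4 + ((-2 : ℂ)) * x ^ 2 + ((-2 : ℂ)) * x + ((-1 : ℂ))) * pw42 x h + ((37 : ℂ) * x ^ 8 + (155 : ℂ) * x ^ 7 + (293 : ℂ) * x ^ 6 + (417 : ℂ) * x ^ 5 + (565 : ℂ) * x ^ 4 + (701 : ℂ) * x ^ 3 + (823 : ℂ) * x ^ 2 + (896 : ℂ) * x + (979 : ℂ)) * h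
private theorem pw90 (x : ℂ) (h : x ^ 10 + x ^ 9 - x ^ 7 - x ^ 6 - x ^ 5 - x ^ 4 - x ^ 3 + x + 1 = 0) :
    x ^ 90 = (89403 : ℂ) * x ^ 9 + (194564 : ℂ) * x ^ 8 + (228862 : ℂ) * x ^ 7 + (179804 : ℂ) * x ^ 6 + (122098 : ℂ) * x ^ 5 + (54219 : ℂ) * x ^ 4 + ((-25625 : ℂ)) * x ^ 3 + ((-119545 : ℂ)) * x ^ 2 + ((-140618 : ℂ)) * x + ((-76004 : ℂ)) := by
  linear_combination ((1 : ℂ) * x ^ 45) * pw45 x h + ((61 : ℂ) * x ^ 9 + (131 : ℂ) * x ^ 8 + (153 : ℂ) * x ^ 7 + (120 : ℂ) * x ^ 6 + (82 : ℂ) * x ^ 5 + (36 : ℂ) * x ^ 4 + ((-18 : ℂ)) * x ^ 3 + ((-81 : ℂ)) * x ^ 2 + ((-94 : ℂ)) * x + ((-50 : ℂ))) * pw45 x h + ((3721 : ℂ) * x ^ 8 + (12261 : ℂ) * x ^ 7 + (23566 : ℂ) * x ^ 6 + (34881 : ℂ) * x ^ 5 + (45954 : ℂ) * x ^ 4 +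 (56190 : ℂ) * x ^ 3 + (64967 : ℂ) * x ^ 2 + (71514 : ℂ) * x + (78504 : ℂ)) * h
private theorem pw105 (x : ℂ) (h : x ^ 10 + x ^ 9 - x ^ 7 - x ^ 6 - x ^ 5 - x ^ 4 - x ^ 3 + x + 1 = 0) :
    x ^ 105 = (1020972 : ℂ) * x ^ 9 + (2221922 : ℂ) * x ^ 8 + (2613603 : ℂ) * x ^ 7 + (2053359 : ℂ) * x ^ 6 + (1394355 : ℂ) * x ^ 5 + (619182 : ℂ) * x ^ 4 + ((-292640 : ℂ)) * x ^ 3 + ((-1365198 : ℂ)) * x ^ 2 + ((-1605856 : ℂ)) * x + ((-867965 : ℂ)) := by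
  linear_combination ((1 : ℂ) * x ^ 63) * pw42 x h + ((37 : ℂ) * x ^ 9 + (81 : ℂ) * x ^ 8 + (94 : ℂ) * x ^ 7 + (74 : ℂ) * x ^ 6 + (50 : ℂ) * x ^ 5 + (22 : ℂ) * x ^ 4 + ((-11 : ℂ)) * x ^ 3 + ((-49 : ℂ)) * x ^ 2 + ((-58 : ℂ)) * x + ((-31 : ℂ))) * pw63 x h + ((41292 : ℂ) * x ^ 8 + (138940 : ℂ) * x ^ 7 + (268304 : ℂ) * x ^ 6 + (398168 : ℂ) * x ^ 5 + (524152 : ℂ) * x ^ 4 + (641072 : ℂ) * x ^ 3 + (741800 : ℂ) * x ^ 2 + (817892 : ℂ) * x + (897353 : ℂ)) * h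
private theorem pw126 (x : ℂ) (h : x ^ 10 + x ^ 9 - x ^ 7 - x ^ 6 - x ^ 5 - x ^ 4 - x ^ 3 + x + 1 = 0) :
    x ^ 126 = (30884816 : ℂ) * x ^ 9 + (67214032 : ℂ) * x ^ 8 + (79062576 : ℂ) * x ^ 7 + (62114976 : ℂ) * x ^ 6 + (42179840 : ℂ) * x ^ 5 + (18730520 : ℂ) * x ^ 4 + ((-8852464 : ℂ)) * x ^ 3 + ((-41297799 : ℂ)) * x ^ 2 + ((-48577808 : ℂ)) * x + ((-26256328 : ℂ)) := by
  linear_combination ((1 : ℂ) * x ^ 63) * pw63 x h + ((1116 : ℂ) * x ^ 9 + (2428 : ℂ) * x ^ 8 + (2856 : ℂ) * x ^ 7 + (2244 : ℂ) * x ^ 6 + (1524 : ℂ) * x ^ 5 + (676 : ℂ) * x ^ 4 + ((-320 : ℂ)) * x ^ 3 + ((-1492 : ℂ)) * x ^ 2 + ((-1755 : ℂ)) * x + ((-948 : ℂ))) * pw63 x h + ((1245456 : ℂ) * x ^ 8 + (4173840 : ℂ) * x ^ 7 + (8095936 : ℂ) * x ^ 6 + (12026864 : ℂ) * x ^ 5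 + (15847600 : ℂ) * x ^ 4 + (19394736 : ℂ) * x ^ 3 + (22456400 : ℂ) * x ^ 2 + (24750256 : ℂ) * x + (27155032 : ℂ)) * h
private theorem pw210 (x : ℂ) (h : x ^ 10 + x ^ 9 - x ^ 7 - x ^ 6 - x ^ 5 - x ^ 4 - x ^ 3 + x + 1 = 0) :
    x ^ 210 = (25862486198938 : ℂ) * x ^ 9 + (56284032627261 : ℂ) * x ^ 8 + (66205827953761 : ℂ) * x ^ 7 + (52014159280088 : ℂ) * x ^ 6 + (35320771640146 : ℂ) * x ^ 5 + (15684659967505 : ℂ) * x ^ 4 + ((-7412921538233 : ℂ)) * x ^ 3 + ((-34582163611627 : ℂ)) * x ^ 2 + ((-40678335710283 : ℂ)) * x + ((-21986659815805 : ℂ)) := by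
  linear_combination ((1 : ℂ) * x ^ 105) * pw105 x h + ((1020972 : ℂ) * x ^ 9 + (2221922 : ℂ) * x ^ 8 + (2613603 : ℂ) * x ^ 7 + (2053359 : ℂ) * x ^ 6 + (1394355 : ℂ) * x ^ 5 + (619182 : ℂ) * x ^ 4 + ((-292640 : ℂ)) * x ^ 3 + ((-1365198 : ℂ)) * x ^ 2 + ((-1605856 : ℂ)) * x + ((-867965 : ℂ))) * pw105 x h + ((1042383824784 : ℂ) * x ^ 8 + (3494656471584 : ℂ) * x ^ 7 + (6779111866732 : ℂ) * x ^ 6 + (10070560057880 : ℂ) * x ^ 5 + (13269402778213 : ℂ) * x ^ 4 + (16240710940269 : ℂ) * x ^ 3 + (18804859009170 : ℂ) * x ^ 2 + (20725966259333 : ℂ) * x + (22740023057030 : ℂ)) * h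
private theorem pw315 (x : ℂ) (h : x ^ 10 + x ^ 9 - x ^ 7 - x ^ 6 - x ^ 5 - x ^ 4 - x ^ 3 + x + 1 = 0) :
    x ^ 315 = (655129032415041026264 : ℂ) * x ^ 9 + (1425744746730033504712 : ℂ) * x ^ 8 + (1677076197313382655628 : ℂ) * x ^ 7 + (1317583529244975589736 : ℂ) * x ^ 6 + (894719199491028808405 : ℂ) * x ^ 5 + (397311999675124707536 : ℂ) * x ^ 4 + ((-187778548332701256756 : ℂ)) * x ^ 3 + ((-876009336899490328776 : ℂ)) * x ^ 2 + ((-1030432979611460230272 : ℂ)) * x + ((-556949516004332306296 : ℂ)) := by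
  linear_combination ((1 : ℂ) * x ^ 210) * pw105 x h + ((1020972 : ℂ) * x ^ 9 + (2221922 : ℂ) * x ^ 8 + (2613603 : ℂ) * x ^ 7 + (2053359 : ℂ) * x ^ 6 + (1394355 : ℂ) * x ^ 5 + (619182 : ℂ) * x ^ 4 + ((-292640 : ℂ)) * x ^ 3 + ((-1365198 : ℂ)) * x ^ 2 + ((-1605856 : ℂ)) * x + ((-867965 : ℂ))) * pw210 x h + ((26404874259502127736 : ℂ) * x ^ 8 + (88523974160134508792 : ℂ) * x ^ 7 + (171723324277704736156 : ℂ) * x ^ 6 + (255099821194656309883 : ℂ) * x ^ 5 + (336130513356728983265 : ℂ) * x ^ 4 + (411397461223010295525 : ℂ) * x ^ 3 + (476350544356197854143 : ℂ) * x ^ 2 + (525014593660047875326 : ℂ) * x + (576033167191357493121 : ℂ)) * h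
private theorem pw630 (x : ℂ) (h : x ^ 10 + x ^ 9 - x ^ 7 - x ^ 6 - x ^ 5 - x ^ 4 - x ^ 3 + x + 1 = 0) :
    x ^ 630 = (10648699402510886229334132989629606002223831 : ℂ) * x ^ 9 + (23174560249100286133718183712802529035435800 : ℂ) * x ^ 8 + (27259790692625442252605558473646959458901265 : ℂ) * x ^ 7 + (21416469499004652376912957054411004410158065 : ℂ) * x ^ 6 + (14543082864016871805545108986578337637140321 : ℂ) * x ^ 5 + (6458050008796664339372667222902512216589785 : ℂ) * x ^ 4 + ((-3052219053800078449122081871454923124998263 : ℂ)) * x ^ 3 + ((-14238966128623353681821644902045640915516176 : ℂ)) * x ^ 2 + ((-16749022728952328254673732618939204392161001 : ℂ)) * x + ((-9052854758155114957837247156588012516273409 : ℂ)) := by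
  linear_combination ((1 : ℂ) * x ^ 315) * pw315 x h + ((655129032415041026264 : ℂ) * x ^ 9 + (1425744746730033504712 : ℂ) * x ^ 8 + (1677076197313382655628 : ℂ) * x ^ 7 + (1317583529244975589736 : ℂ) * x ^ 6 + (894719199491028808405 : ℂ) * x ^ 5 + (397311999675124707536 : ℂ) * x ^ 4 + ((-187778548332701256756 : ℂ)) * x ^ 3 + ((-876009336899490328776 : ℂ)) * x ^ 2 + ((-1030432979611460230272 : ℂ)) * x + ((-556949516004332306296 : ℂ))) * pw315 x h + ((429194049113067875725500846378274337797696 : ℂ) * x ^ 8 + (1438899503679081280560258879083271981714240 : ℂ) * x ^ 7 + (2791251192013631715232958303441179375316288 : ℂ) * x ^ 6 + (4146482458751020600245869044012536314772288 : ℂ) * x ^ 5 + (5463584302925762922309255665948390372383936 : ℂ) * x ^ 4 + (6687000040391606956557292327298108736172432 : ℂ) * x ^ 3 + (7742770700538437258258235212514951424824552 : ℂ) * x ^ 2 + (8533773505958762878223856222284071505433000 : ℂ) * x + (9363047521532574965626707830937854877513025 : ℂ)) * h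
set_option maxHeartbeats 1000000 in
private theorem hQ3 : (((X^10 + X^9 - X^7 - X^6 - X^5 - X^4 - X^3 + X + 1 : ℂ[X])).roots.map fun x => x ^ 3 - 1).prod = ((-1 : ℂ)) := by
  have hd3_1 : (P3_1).natDegree = 3 := by unfold P3_1; compute_degree!
  have hl3_1 : (P3_1).leadingCoeff = (1 : ℂ) := by
    rw [Polynomial.leadingCoeff, hd3_1]; unfold P3_1; compute_degree!
  have hd3_2 : (P3_2).natDegree = 2 := by unfold P3_2; compute_degree!
  have hl3_2 : (P3_2).leadingCoeff = (1 : ℂ) := by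
    rw [Polynomial.leadingCoeff, hd3_2]; unfold P3_2; compute_degree!
  have h3_3 : ((P3_2).roots.map fun x => (C (1 : ℂ)).eval x).prod = (1 : ℂ) :=
    res_const _ _ _ 2 hd3_2 (by norm_num)
  have h3_2 : ((P3_1).roots.map fun x => (P3_2).eval x).prod = (1 : ℂ) := by
    refine res_step _ _ _ ((-1 : ℂ)) ((1 : ℂ) : ℂ) (1 : ℂ) (1 : ℂ) _ 3 2 hd3_1 hd3_2 hl3_1 hl3_2 ?_ h3_3 (by norm_num) (by norm_num)
    intro x hx
    simp only [P3_1, P3_2, eval_add, eval_sub, eval_neg, eval_mul, eval_pow, eval_C, eval_X, eval_one] at hx ⊢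
    linear_combination (((-1 : ℂ)) * x) * hx
  have h3_1 : (((X^10 + X^9 - X^7 - X^6 - X^5 - X^4 - X^3 + X + 1 : ℂ[X])).roots.map fun x => (P3_1).eval x).prod = ((-1 : ℂ)) := by
    refine res_step _ _ _ ((-1 : ℂ)) (1 : ℂ) (1 : ℂ) (1 : ℂ) _ 10 3 hdL hd3_1 hlL hl3_1 ?_ h3_2 (by norm_num) (by norm_num)
    intro x hx
    simp only [P3_1, P3_2, eval_add, eval_sub, eval_neg, eval_mul, eval_pow, eval_C, eval_X, eval_one] at hx ⊢
    linear_combination (((-1 : ℂ)) * x ^ 7 + ((-1 : ℂ)) * x ^ 6 + (1 : ℂ) * x ^ 2 + (1 : ℂ) * x + (1 : ℂ)) * hx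
  rw [show (((X^10 + X^9 - X^7 - X^6 - X^5 - X^4 - X^3 + X + 1 : ℂ[X])).roots.map fun x => x ^ 3 - 1)
      = (((X^10 + X^9 - X^7 - X^6 - X^5 - X^4 - X^3 + X + 1 : ℂ[X])).roots.map fun x => (P3_1).eval x) from
    Multiset.map_congr rfl fun x hx => ?_]
  · exact h3_1
  · simp only [P3_1, eval_add, eval_sub, eval_neg, eval_mul, eval_pow, eval_C, eval_X, eval_one]
    ring
set_option maxHeartbeats 1000000 in
private theorem hQ6 : (((X^10 + X^9 - X^7 - X^6 - X^5 - X^4 - X^3 + X + 1 : ℂ[X])).roots.map fun x => x ^ 6 - 1).prod = ((-1 : ℂ)) := by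
  have hd6_1 : (P6_1).natDegree = 6 := by unfold P6_1; compute_degree!
  have hl6_1 : (P6_1).leadingCoeff = (1 : ℂ) := by
    rw [Polynomial.leadingCoeff, hd6_1]; unfold P6_1; compute_degree!
  have hd6_2 : (P6_2).natDegree = 5 := by unfold P6_2; compute_degree!
  have hl6_2 : (P6_2).leadingCoeff = (1 : ℂ) := by
    rw [Polynomial.leadingCoeff, hd6_2]; unfold P6_2; compute_degree!
  have h6_3 : ((P6_2).roots.map fun x => (C (1 : ℂ)).eval x).prod = (1 : ℂ) :=
    res_const _ _ _ 5 hd6_2 (by norm_num)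
  have h6_2 : ((P6_1).roots.map fun x => (P6_2).eval x).prod = ((-1 : ℂ)) := by
    refine res_step _ _ _ ((-1 : ℂ)) ((1 : ℂ) : ℂ) (1 : ℂ) (1 : ℂ) _ 6 5 hd6_1 hd6_2 hl6_1 hl6_2 ?_ h6_3 (by norm_num) (by norm_num)
    intro x hx
    simp only [P6_1, P6_2, eval_add, eval_sub, eval_neg, eval_mul, eval_pow, eval_C, eval_X, eval_one] at hx ⊢
    linear_combination (((-1 : ℂ)) * x) * hx
  have h6_1 : (((X^10 + X^9 - X^7 - X^6 - X^5 - X^4 - X^3 + X + 1 : ℂ[X])).roots.map fun x => (P6_1).eval x).prod = ((-1 : ℂ)) := by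
    refine res_step _ _ _ ((-1 : ℂ)) (1 : ℂ) (1 : ℂ) ((-1 : ℂ)) _ 10 6 hdL hd6_1 hlL hl6_1 ?_ h6_2 (by norm_num) (by norm_num)
    intro x hx
    simp only [P6_1, P6_2, eval_add, eval_sub, eval_neg, eval_mul, eval_pow, eval_C, eval_X, eval_one] at hx ⊢
    linear_combination (((-1 : ℂ)) * x ^ 4 + ((-1 : ℂ)) * x ^ 3 + (1 : ℂ) * x + (1 : ℂ)) * hx
  rw [show (((X^10 + X^9 - X^7 - X^6 - X^5 - X^4 - X^3 + X + 1 : ℂ[X])).roots.map fun x => x ^ 6 - 1)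
      = (((X^10 + X^9 - X^7 - X^6 - X^5 - X^4 - X^3 + X + 1 : ℂ[X])).roots.map fun x => (P6_1).eval x) from
    Multiset.map_congr rfl fun x hx => ?_]
  · exact h6_1
  · simp only [P6_1, eval_add, eval_sub, eval_neg, eval_mul, eval_pow, eval_C, eval_X, eval_one]
    ring
set_option maxHeartbeats 1000000 in
private theorem hQ9 : (((X^10 + X^9 - X^7 - X^6 - X^5 - X^4 - X^3 + X + 1 : ℂ[X])).roots.map fun x => x ^ 9 - 1).prod = ((-1 : ℂ)) := by
  have hd9_1 : (P9_1).natDegree = 9 := by unfold P9_1; compute_degree!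
  have hl9_1 : (P9_1).leadingCoeff = (1 : ℂ) := by
    rw [Polynomial.leadingCoeff, hd9_1]; unfold P9_1; compute_degree!
  have hd9_2 : (P9_2).natDegree = 7 := by unfold P9_2; compute_degree!
  have hl9_2 : (P9_2).leadingCoeff = (1 : ℂ) := by
    rw [Polynomial.leadingCoeff, hd9_2]; unfold P9_2; compute_degree!
  have hd9_3 : (P9_3).natDegree = 4 := by unfold P9_3; compute_degree!
  have hl9_3 : (P9_3).leadingCoeff = (1 : ℂ) := by
    rw [Polynomial.leadingCoeff, hd9_3]; unfold P9_3; compute_degree!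
  have hd9_4 : (P9_4).natDegree = 3 := by unfold P9_4; compute_degree!
  have hl9_4 : (P9_4).leadingCoeff = (6 : ℂ) := by
    rw [Polynomial.leadingCoeff, hd9_4]; unfold P9_4; compute_degree!
  have hd9_5 : (P9_5).natDegree = 2 := by unfold P9_5; compute_degree!
  have hl9_5 : (P9_5).leadingCoeff = (5 : ℂ) := by
    rw [Polynomial.leadingCoeff, hd9_5]; unfold P9_5; compute_degree!
  have hd9_6 : (P9_6).natDegree = 1 := by unfold P9_6; compute_degree!
  have hl9_6 : (P9_6).leadingCoeff = (1 : ℂ) := by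
    rw [Polynomial.leadingCoeff, hd9_6]; unfold P9_6; compute_degree!
  have h9_7 : ((P9_6).roots.map fun x => (C (1 : ℂ)).eval x).prod = (1 : ℂ) :=
    res_const _ _ _ 1 hd9_6 (by norm_num)
  have h9_6 : ((P9_5).roots.map fun x => (P9_6).eval x).prod = (5 : ℂ) := by
    refine res_step _ _ _ ((1 : ℂ) / 25) ((5 : ℂ) : ℂ) (1 : ℂ) (1 : ℂ) _ 2 1 hd9_5 hd9_6 hl9_5 hl9_6 ?_ h9_7 (by norm_num) (by norm_num)
    intro x hx
    simp only [P9_5, P9_6, eval_add, eval_sub, eval_neg, eval_mul, eval_pow, eval_C, eval_X, eval_one] at hx ⊢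
    linear_combination (((1 : ℂ) / 5) * x + ((-8 : ℂ) / 25)) * hx
  have h9_5 : ((P9_4).roots.map fun x => (P9_5).eval x).prod = (36 : ℂ) := by
    refine res_step _ _ _ ((-25 : ℂ) / 36) ((6 : ℂ) : ℂ) (5 : ℂ) (5 : ℂ) _ 3 2 hd9_4 hd9_5 hl9_4 hl9_5 ?_ h9_6 (by norm_num) (by norm_num)
    intro x hx
    simp only [P9_4, P9_5, P9_6, eval_add, eval_sub, eval_neg, eval_mul, eval_pow, eval_C, eval_X, eval_one] at hx ⊢
    linear_combination (((-5 : ℂ) / 6) * x + ((17 : ℂ) / 36)) * hx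
  have h9_4 : ((P9_3).roots.map fun x => (P9_4).eval x).prod = ((-1 : ℂ)) := by
    refine res_step _ _ _ ((-36 : ℂ)) ((1 : ℂ) : ℂ) (6 : ℂ) (36 : ℂ) _ 4 3 hd9_3 hd9_4 hl9_3 hl9_4 ?_ h9_5 (by norm_num) (by norm_num)
    intro x hx
    simp only [P9_3, P9_4, P9_5, eval_add, eval_sub, eval_neg, eval_mul, eval_pow, eval_C, eval_X, eval_one] at hx ⊢
    linear_combination (((-6 : ℂ)) * x + ((-7 : ℂ))) * hx
  have h9_3 : ((P9_2).roots.map fun x => (P9_3).eval x).prod = ((-1 : ℂ)) := by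
    refine res_step _ _ _ (1 : ℂ) ((1 : ℂ) : ℂ) (1 : ℂ) ((-1 : ℂ)) _ 7 4 hd9_2 hd9_3 hl9_2 hl9_3 ?_ h9_4 (by norm_num) (by norm_num)
    intro x hx
    simp only [P9_2, P9_3, P9_4, eval_add, eval_sub, eval_neg, eval_mul, eval_pow, eval_C, eval_X, eval_one] at hx ⊢
    linear_combination ((1 : ℂ) * x ^ 3 + ((-1 : ℂ)) * x ^ 2 + (3 : ℂ) * x + ((-3 : ℂ))) * hx
  have h9_2 : ((P9_1).roots.map fun x => (P9_2).eval x).prod = (1 : ℂ) := by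
    refine res_step _ _ _ (1 : ℂ) ((1 : ℂ) : ℂ) (1 : ℂ) ((-1 : ℂ)) _ 9 7 hd9_1 hd9_2 hl9_1 hl9_2 ?_ h9_3 (by norm_num) (by norm_num)
    intro x hx
    simp only [P9_1, P9_2, P9_3, eval_add, eval_sub, eval_neg, eval_mul, eval_pow, eval_C, eval_X, eval_one] at hx ⊢
    linear_combination ((1 : ℂ) * x ^ 2 + ((-1 : ℂ)) * x) * hx
  have h9_1 : (((X^10 + X^9 - X^7 - X^6 - X^5 - X^4 - X^3 + X + 1 : ℂ[X])).roots.map fun x => (P9_1).eval x).prod = ((-1 : ℂ)) := by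
    refine res_step _ _ _ ((-1 : ℂ)) (1 : ℂ) (1 : ℂ) (1 : ℂ) _ 10 9 hdL hd9_1 hlL hl9_1 ?_ h9_2 (by norm_num) (by norm_num)
    intro x hx
    simp only [P9_1, P9_2, eval_add, eval_sub, eval_neg, eval_mul, eval_pow, eval_C, eval_X, eval_one] at hx ⊢
    linear_combination (((-1 : ℂ)) * x + ((-1 : ℂ))) * hx
  rw [show (((X^10 + X^9 - X^7 - X^6 - X^5 - X^4 - X^3 + X + 1 : ℂ[X])).roots.map fun x => x ^ 9 - 1)
      = (((X^10 + X^9 - X^7 - X^6 - X^5 - X^4 - X^3 + X + 1 : ℂ[X])).roots.map fun x => (P9_1).eval x) from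
    Multiset.map_congr rfl fun x hx => ?_]
  · exact h9_1
  · simp only [P9_1, eval_add, eval_sub, eval_neg, eval_mul, eval_pow, eval_C, eval_X, eval_one]
    ring
set_option maxHeartbeats 1000000 in
private theorem hQ15 : (((X^10 + X^9 - X^7 - X^6 - X^5 - X^4 - X^3 + X + 1 : ℂ[X])).roots.map fun x => x ^ 15 - 1).prod = ((-841 : ℂ)) := by
  have hd15_1 : (P15_1).natDegree = 8 := by unfold P15_1; compute_degree!
  have hl15_1 : (P15_1).leadingCoeff = (1 : ℂ) := by
    rw [Polynomial.leadingCoeff, hd15_1]; unfold P15_1; compute_degree!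
  have hd15_2 : (P15_2).natDegree = 7 := by unfold P15_2; compute_degree!
  have hl15_2 : (P15_2).leadingCoeff = (1 : ℂ) := by
    rw [Polynomial.leadingCoeff, hd15_2]; unfold P15_2; compute_degree!
  have hd15_3 : (P15_3).natDegree = 6 := by unfold P15_3; compute_degree!
  have hl15_3 : (P15_3).leadingCoeff = (1 : ℂ) := by
    rw [Polynomial.leadingCoeff, hd15_3]; unfold P15_3; compute_degree!
  have hd15_4 : (P15_4).natDegree = 5 := by unfold P15_4; compute_degree!
  have hl15_4 : (P15_4).leadingCoeff = (1 : ℂ) := by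
    rw [Polynomial.leadingCoeff, hd15_4]; unfold P15_4; compute_degree!
  have hd15_5 : (P15_5).natDegree = 4 := by unfold P15_5; compute_degree!
  have hl15_5 : (P15_5).leadingCoeff = (3 : ℂ) := by
    rw [Polynomial.leadingCoeff, hd15_5]; unfold P15_5; compute_degree!
  have hd15_6 : (P15_6).natDegree = 3 := by unfold P15_6; compute_degree!
  have hl15_6 : (P15_6).leadingCoeff = (14 : ℂ) := by
    rw [Polynomial.leadingCoeff, hd15_6]; unfold P15_6; compute_degree!
  have hd15_7 : (P15_7).natDegree = 2 := by unfold P15_7; compute_degree!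
  have hl15_7 : (P15_7).leadingCoeff = (61 : ℂ) := by
    rw [Polynomial.leadingCoeff, hd15_7]; unfold P15_7; compute_degree!
  have hd15_8 : (P15_8).natDegree = 1 := by unfold P15_8; compute_degree!
  have hl15_8 : (P15_8).leadingCoeff = (10 : ℂ) := by
    rw [Polynomial.leadingCoeff, hd15_8]; unfold P15_8; compute_degree!
  have h15_9 : ((P15_8).roots.map fun x => (C (1 : ℂ)).eval x).prod = (1 : ℂ) :=
    res_const _ _ _ 1 hd15_8 (by norm_num)
  have h15_8 : ((P15_7).roots.map fun x => (P15_8).eval x).prod = ((-61 : ℂ)) := by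
    refine res_step _ _ _ ((-100 : ℂ) / 3721) ((61 : ℂ) : ℂ) (10 : ℂ) (1 : ℂ) _ 2 1 hd15_7 hd15_8 hl15_7 hl15_8 ?_ h15_9 (by norm_num) (by norm_num)
    intro x hx
    simp only [P15_7, P15_8, eval_add, eval_sub, eval_neg, eval_mul, eval_pow, eval_C, eval_X, eval_one] at hx ⊢
    linear_combination (((-10 : ℂ) / 61) * x + ((593 : ℂ) / 3721)) * hx
  have h15_7 : ((P15_6).roots.map fun x => (P15_7).eval x).prod = ((-164836 : ℂ)) := by
    refine res_step _ _ _ ((3721 : ℂ) / 5684) ((14 : ℂ) : ℂ) (61 : ℂ) ((-61 : ℂ)) _ 3 2 hd15_6 hd15_7 hl15_6 hl15_7 ?_ h15_8 (by norm_num) (by norm_num)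
    intro x hx
    simp only [P15_6, P15_7, P15_8, eval_add, eval_sub, eval_neg, eval_mul, eval_pow, eval_C, eval_X, eval_one] at hx ⊢
    linear_combination (((61 : ℂ) / 406) * x + ((513 : ℂ) / 5684)) * hx
  have h15_6 : ((P15_5).roots.map fun x => (P15_6).eval x).prod = ((-22707 : ℂ)) := by
    refine res_step _ _ _ ((196 : ℂ) / 9) ((3 : ℂ) : ℂ) (14 : ℂ) ((-164836 : ℂ)) _ 4 3 hd15_5 hd15_6 hl15_5 hl15_6 ?_ h15_7 (by norm_num) (by norm_num)
    intro x hx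
    simp only [P15_5, P15_6, P15_7, eval_add, eval_sub, eval_neg, eval_mul, eval_pow, eval_C, eval_X, eval_one] at hx ⊢
    linear_combination (((14 : ℂ) / 3) * x + ((31 : ℂ) / 9)) * hx
  have h15_5 : ((P15_4).roots.map fun x => (P15_5).eval x).prod = ((-841 : ℂ)) := by
    refine res_step _ _ _ ((-9 : ℂ)) ((1 : ℂ) : ℂ) (3 : ℂ) ((-22707 : ℂ)) _ 5 4 hd15_4 hd15_5 hl15_4 hl15_5 ?_ h15_6 (by norm_num) (by norm_num)
    intro x hx
    simp only [P15_4, P15_5, P15_6, eval_add, eval_sub, eval_neg, eval_mul, eval_pow, eval_C, eval_X, eval_one] at hx ⊢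
    linear_combination (((-3 : ℂ)) * x + ((-4 : ℂ))) * hx
  have h15_4 : ((P15_3).roots.map fun x => (P15_4).eval x).prod = ((-841 : ℂ)) := by
    refine res_step _ _ _ (1 : ℂ) ((1 : ℂ) : ℂ) (1 : ℂ) ((-841 : ℂ)) _ 6 5 hd15_3 hd15_4 hl15_3 hl15_4 ?_ h15_5 (by norm_num) (by norm_num)
    intro x hx
    simp only [P15_3, P15_4, P15_5, eval_add, eval_sub, eval_neg, eval_mul, eval_pow, eval_C, eval_X, eval_one] at hx ⊢
    linear_combination ((1 : ℂ) * x + ((-1 : ℂ))) * hx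
  have h15_3 : ((P15_2).roots.map fun x => (P15_3).eval x).prod = ((-841 : ℂ)) := by
    refine res_step _ _ _ ((-1 : ℂ)) ((1 : ℂ) : ℂ) (1 : ℂ) ((-841 : ℂ)) _ 7 6 hd15_2 hd15_3 hl15_2 hl15_3 ?_ h15_4 (by norm_num) (by norm_num)
    intro x hx
    simp only [P15_2, P15_3, P15_4, eval_add, eval_sub, eval_neg, eval_mul, eval_pow, eval_C, eval_X, eval_one] at hx ⊢
    linear_combination (((-1 : ℂ)) * x) * hx
  have h15_2 : ((P15_1).roots.map fun x => (P15_2).eval x).prod = ((-841 : ℂ)) := by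
    refine res_step _ _ _ (1 : ℂ) ((1 : ℂ) : ℂ) (1 : ℂ) ((-841 : ℂ)) _ 8 7 hd15_1 hd15_2 hl15_1 hl15_2 ?_ h15_3 (by norm_num) (by norm_num)
    intro x hx
    simp only [P15_1, P15_2, P15_3, eval_add, eval_sub, eval_neg, eval_mul, eval_pow, eval_C, eval_X, eval_one] at hx ⊢
    linear_combination ((1 : ℂ) * x) * hx
  have h15_1 : (((X^10 + X^9 - X^7 - X^6 - X^5 - X^4 - X^3 + X + 1 : ℂ[X])).roots.map fun x => (P15_1).eval x).prod = ((-841 : ℂ)) := by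
    refine res_step _ _ _ ((-1 : ℂ)) (1 : ℂ) (1 : ℂ) ((-841 : ℂ)) _ 10 8 hdL hd15_1 hlL hl15_1 ?_ h15_2 (by norm_num) (by norm_num)
    intro x hx
    simp only [P15_1, P15_2, eval_add, eval_sub, eval_neg, eval_mul, eval_pow, eval_C, eval_X, eval_one] at hx ⊢
    linear_combination (((-1 : ℂ)) * x ^ 2 + (1 : ℂ)) * hx
  rw [show (((X^10 + X^9 - X^7 - X^6 - X^5 - X^4 - X^3 + X + 1 : ℂ[X])).roots.map fun x => x ^ 15 - 1)
      = (((X^10 + X^9 - X^7 - X^6 - X^5 - X^4 - X^3 + X + 1 : ℂ[X])).roots.map fun x => (P15_1).eval x) from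
    Multiset.map_congr rfl fun x hx => ?_]
  · exact h15_1
  · simp only [P15_1, eval_add, eval_sub, eval_neg, eval_mul, eval_pow, eval_C, eval_X, eval_one]
    linear_combination pw15 x (hroot x hx)
set_option maxHeartbeats 1000000 in
private theorem hQ18 : (((X^10 + X^9 - X^7 - X^6 - X^5 - X^4 - X^3 + X + 1 : ℂ[X])).roots.map fun x => x ^ 18 - 1).prod = ((-1 : ℂ)) := by
  have hd18_1 : (P18_1).natDegree = 9 := by unfold P18_1; compute_degree!
  have hl18_1 : (P18_1).leadingCoeff = (1 : ℂ) := by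
    rw [Polynomial.leadingCoeff, hd18_1]; unfold P18_1; compute_degree!
  have hd18_2 : (P18_2).natDegree = 6 := by unfold P18_2; compute_degree!
  have hl18_2 : (P18_2).leadingCoeff = (1 : ℂ) := by
    rw [Polynomial.leadingCoeff, hd18_2]; unfold P18_2; compute_degree!
  have hd18_3 : (P18_3).natDegree = 5 := by unfold P18_3; compute_degree!
  have hl18_3 : (P18_3).leadingCoeff = (1 : ℂ) := by
    rw [Polynomial.leadingCoeff, hd18_3]; unfold P18_3; compute_degree!
  have hd18_4 : (P18_4).natDegree = 4 := by unfold P18_4; compute_degree!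
  have hl18_4 : (P18_4).leadingCoeff = (2 : ℂ) := by
    rw [Polynomial.leadingCoeff, hd18_4]; unfold P18_4; compute_degree!
  have hd18_5 : (P18_5).natDegree = 3 := by unfold P18_5; compute_degree!
  have hl18_5 : (P18_5).leadingCoeff = (1 : ℂ) := by
    rw [Polynomial.leadingCoeff, hd18_5]; unfold P18_5; compute_degree!
  have hd18_6 : (P18_6).natDegree = 2 := by unfold P18_6; compute_degree!
  have hl18_6 : (P18_6).leadingCoeff = (1 : ℂ) := by
    rw [Polynomial.leadingCoeff, hd18_6]; unfold P18_6; compute_degree!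
  have h18_7 : ((P18_6).roots.map fun x => (C (1 : ℂ)).eval x).prod = (1 : ℂ) :=
    res_const _ _ _ 2 hd18_6 (by norm_num)
  have h18_6 : ((P18_5).roots.map fun x => (P18_6).eval x).prod = (1 : ℂ) := by
    refine res_step _ _ _ ((-1 : ℂ)) ((1 : ℂ) : ℂ) (1 : ℂ) (1 : ℂ) _ 3 2 hd18_5 hd18_6 hl18_5 hl18_6 ?_ h18_7 (by norm_num) (by norm_num)
    intro x hx
    simp only [P18_5, P18_6, eval_add, eval_sub, eval_neg, eval_mul, eval_pow, eval_C, eval_X, eval_one] at hx ⊢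
    linear_combination (((-1 : ℂ)) * x + (2 : ℂ)) * hx
  have h18_5 : ((P18_4).roots.map fun x => (P18_5).eval x).prod = (8 : ℂ) := by
    refine res_step _ _ _ ((1 : ℂ) / 4) ((2 : ℂ) : ℂ) (1 : ℂ) (1 : ℂ) _ 4 3 hd18_4 hd18_5 hl18_4 hl18_5 ?_ h18_6 (by norm_num) (by norm_num)
    intro x hx
    simp only [P18_4, P18_5, P18_6, eval_add, eval_sub, eval_neg, eval_mul, eval_pow, eval_C, eval_X, eval_one] at hx ⊢
    linear_combination (((1 : ℂ) / 2) * x + ((1 : ℂ) / 4)) * hx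
  have h18_4 : ((P18_3).roots.map fun x => (P18_4).eval x).prod = (1 : ℂ) := by
    refine res_step _ _ _ ((-4 : ℂ)) ((1 : ℂ) : ℂ) (2 : ℂ) (8 : ℂ) _ 5 4 hd18_3 hd18_4 hl18_3 hl18_4 ?_ h18_5 (by norm_num) (by norm_num)
    intro x hx
    simp only [P18_3, P18_4, P18_5, eval_add, eval_sub, eval_neg, eval_mul, eval_pow, eval_C, eval_X, eval_one] at hx ⊢
    linear_combination (((-2 : ℂ)) * x + ((-1 : ℂ))) * hx
  have h18_3 : ((P18_2).roots.map fun x => (P18_3).eval x).prod = (1 : ℂ) := by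
    refine res_step _ _ _ (1 : ℂ) ((1 : ℂ) : ℂ) (1 : ℂ) (1 : ℂ) _ 6 5 hd18_2 hd18_3 hl18_2 hl18_3 ?_ h18_4 (by norm_num) (by norm_num)
    intro x hx
    simp only [P18_2, P18_3, P18_4, eval_add, eval_sub, eval_neg, eval_mul, eval_pow, eval_C, eval_X, eval_one] at hx ⊢
    linear_combination ((1 : ℂ) * x + ((-1 : ℂ))) * hx
  have h18_2 : ((P18_1).roots.map fun x => (P18_2).eval x).prod = (1 : ℂ) := by
    refine res_step _ _ _ ((-1 : ℂ)) ((1 : ℂ) : ℂ) (1 : ℂ) (1 : ℂ) _ 9 6 hd18_1 hd18_2 hl18_1 hl18_2 ?_ h18_3 (by norm_num) (by norm_num)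
    intro x hx
    simp only [P18_1, P18_2, P18_3, eval_add, eval_sub, eval_neg, eval_mul, eval_pow, eval_C, eval_X, eval_one] at hx ⊢
    linear_combination (((-1 : ℂ)) * x ^ 3 + ((-2 : ℂ)) * x ^ 2 + ((-2 : ℂ)) * x) * hx
  have h18_1 : (((X^10 + X^9 - X^7 - X^6 - X^5 - X^4 - X^3 + X + 1 : ℂ[X])).roots.map fun x => (P18_1).eval x).prod = ((-1 : ℂ)) := by
    refine res_step _ _ _ ((-1 : ℂ)) (1 : ℂ) (1 : ℂ) (1 : ℂ) _ 10 9 hdL hd18_1 hlL hl18_1 ?_ h18_2 (by norm_num) (by norm_num)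
    intro x hx
    simp only [P18_1, P18_2, eval_add, eval_sub, eval_neg, eval_mul, eval_pow, eval_C, eval_X, eval_one] at hx ⊢
    linear_combination (((-1 : ℂ)) * x + (1 : ℂ)) * hx
  rw [show (((X^10 + X^9 - X^7 - X^6 - X^5 - X^4 - X^3 + X + 1 : ℂ[X])).roots.map fun x => x ^ 18 - 1)
      = (((X^10 + X^9 - X^7 - X^6 - X^5 - X^4 - X^3 + X + 1 : ℂ[X])).roots.map fun x => (P18_1).eval x) from
    Multiset.map_congr rfl fun x hx => ?_]
  · exact h18_1
  · simp only [P18_1, eval_add, eval_sub, eval_neg, eval_mul, eval_pow, eval_C, eval_X, eval_one]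
    linear_combination pw18 x (hroot x hx)
set_option maxHeartbeats 1000000 in
private theorem hQ21 : (((X^10 + X^9 - X^7 - X^6 - X^5 - X^4 - X^3 + X + 1 : ℂ[X])).roots.map fun x => x ^ 21 - 1).prod = ((-1 : ℂ)) := by
  have hd21_1 : (P21_1).natDegree = 9 := by unfold P21_1; compute_degree!
  have hl21_1 : (P21_1).leadingCoeff = (1 : ℂ) := by
    rw [Polynomial.leadingCoeff, hd21_1]; unfold P21_1; compute_degree!
  have hd21_2 : (P21_2).natDegree = 8 := by unfold P21_2; compute_degree!
  have hl21_2 : (P21_2).leadingCoeff = (3 : ℂ) := by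
    rw [Polynomial.leadingCoeff, hd21_2]; unfold P21_2; compute_degree!
  have hd21_3 : (P21_3).natDegree = 7 := by unfold P21_3; compute_degree!
  have hl21_3 : (P21_3).leadingCoeff = (2 : ℂ) := by
    rw [Polynomial.leadingCoeff, hd21_3]; unfold P21_3; compute_degree!
  have hd21_4 : (P21_4).natDegree = 6 := by unfold P21_4; compute_degree!
  have hl21_4 : (P21_4).leadingCoeff = (1 : ℂ) := by
    rw [Polynomial.leadingCoeff, hd21_4]; unfold P21_4; compute_degree!
  have hd21_5 : (P21_5).natDegree = 5 := by unfold P21_5; compute_degree!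
  have hl21_5 : (P21_5).leadingCoeff = (15 : ℂ) := by
    rw [Polynomial.leadingCoeff, hd21_5]; unfold P21_5; compute_degree!
  have hd21_6 : (P21_6).natDegree = 4 := by unfold P21_6; compute_degree!
  have hl21_6 : (P21_6).leadingCoeff = (1 : ℂ) := by
    rw [Polynomial.leadingCoeff, hd21_6]; unfold P21_6; compute_degree!
  have hd21_7 : (P21_7).natDegree = 3 := by unfold P21_7; compute_degree!
  have hl21_7 : (P21_7).leadingCoeff = (69 : ℂ) := by
    rw [Polynomial.leadingCoeff, hd21_7]; unfold P21_7; compute_degree!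
  have hd21_8 : (P21_8).natDegree = 2 := by unfold P21_8; compute_degree!
  have hl21_8 : (P21_8).leadingCoeff = (20 : ℂ) := by
    rw [Polynomial.leadingCoeff, hd21_8]; unfold P21_8; compute_degree!
  have hd21_9 : (P21_9).natDegree = 1 := by unfold P21_9; compute_degree!
  have hl21_9 : (P21_9).leadingCoeff = (11 : ℂ) := by
    rw [Polynomial.leadingCoeff, hd21_9]; unfold P21_9; compute_degree!
  have h21_10 : ((P21_9).roots.map fun x => (C (1 : ℂ)).eval x).prod = (1 : ℂ) :=
    res_const _ _ _ 1 hd21_9 (by norm_num)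
  have h21_9 : ((P21_8).roots.map fun x => (P21_9).eval x).prod = (60 : ℂ) := by
    refine res_step _ _ _ ((121 : ℂ) / 1200) ((20 : ℂ) : ℂ) (11 : ℂ) (1 : ℂ) _ 2 1 hd21_8 hd21_9 hl21_8 hl21_9 ?_ h21_10 (by norm_num) (by norm_num)
    intro x hx
    simp only [P21_8, P21_9, eval_add, eval_sub, eval_neg, eval_mul, eval_pow, eval_C, eval_X, eval_one] at hx ⊢
    linear_combination (((11 : ℂ) / 60) * x + ((157 : ℂ) / 1200)) * hx
  have h21_8 : ((P21_7).roots.map fun x => (P21_8).eval x).prod = ((529 : ℂ) / 3) := by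
    refine res_step _ _ _ ((-400 : ℂ) / 529) ((69 : ℂ) : ℂ) (20 : ℂ) (60 : ℂ) _ 3 2 hd21_7 hd21_8 hl21_7 hl21_8 ?_ h21_9 (by norm_num) (by norm_num)
    intro x hx
    simp only [P21_7, P21_8, P21_9, eval_add, eval_sub, eval_neg, eval_mul, eval_pow, eval_C, eval_X, eval_one] at hx ⊢
    linear_combination (((-60 : ℂ) / 23) * x + ((963 : ℂ) / 529)) * hx
  have h21_7 : ((P21_6).roots.map fun x => (P21_7).eval x).prod = (125 : ℂ) := by
    refine res_step _ _ _ ((1587 : ℂ) / 5) ((1 : ℂ) : ℂ) (69 : ℂ) ((529 : ℂ) / 3) _ 4 3 hd21_6 hd21_7 hl21_6 hl21_7 ?_ h21_8 (by norm_num) (by norm_num)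
    intro x hx
    simp only [P21_6, P21_7, P21_8, eval_add, eval_sub, eval_neg, eval_mul, eval_pow, eval_C, eval_X, eval_one] at hx ⊢
    linear_combination (((23 : ℂ) / 5) * x + ((146 : ℂ) / 5)) * hx
  have h21_6 : ((P21_5).roots.map fun x => (P21_6).eval x).prod = ((81 : ℂ) / 5) := by
    refine res_step _ _ _ ((1 : ℂ) / 9) ((15 : ℂ) : ℂ) (1 : ℂ) (125 : ℂ) _ 5 4 hd21_5 hd21_6 hl21_5 hl21_6 ?_ h21_7 (by norm_num) (by norm_num)
    intro x hx
    simp only [P21_5, P21_6, P21_7, eval_add, eval_sub, eval_neg, eval_mul, eval_pow, eval_C, eval_X, eval_one] at hx ⊢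
    linear_combination (((5 : ℂ) / 3) * x + ((-95 : ℂ) / 9)) * hx
  have h21_5 : ((P21_4).roots.map fun x => (P21_5).eval x).prod = (32 : ℂ) := by
    refine res_step _ _ _ ((45 : ℂ) / 2) ((1 : ℂ) : ℂ) (15 : ℂ) ((81 : ℂ) / 5) _ 6 5 hd21_4 hd21_5 hl21_4 hl21_5 ?_ h21_6 (by norm_num) (by norm_num)
    intro x hx
    simp only [P21_4, P21_5, P21_6, eval_add, eval_sub, eval_neg, eval_mul, eval_pow, eval_C, eval_X, eval_one] at hx ⊢
    linear_combination (((3 : ℂ) / 2) * x + ((-7 : ℂ))) * hx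
  have h21_4 : ((P21_3).roots.map fun x => (P21_4).eval x).prod = ((729 : ℂ) / 2) := by
    refine res_step _ _ _ ((1 : ℂ) / 3) ((2 : ℂ) : ℂ) (1 : ℂ) (32 : ℂ) _ 7 6 hd21_3 hd21_4 hl21_3 hl21_4 ?_ h21_5 (by norm_num) (by norm_num)
    intro x hx
    simp only [P21_3, P21_4, P21_5, eval_add, eval_sub, eval_neg, eval_mul, eval_pow, eval_C, eval_X, eval_one] at hx ⊢
    linear_combination (((2 : ℂ) / 3) * x + ((10 : ℂ) / 3)) * hx
  have h21_3 : ((P21_2).roots.map fun x => (P21_3).eval x).prod = ((-1 : ℂ) / 3) := by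
    refine res_step _ _ _ ((-2 : ℂ)) ((3 : ℂ) : ℂ) (2 : ℂ) ((729 : ℂ) / 2) _ 8 7 hd21_2 hd21_3 hl21_2 hl21_3 ?_ h21_4 (by norm_num) (by norm_num)
    intro x hx
    simp only [P21_2, P21_3, P21_4, eval_add, eval_sub, eval_neg, eval_mul, eval_pow, eval_C, eval_X, eval_one] at hx ⊢
    linear_combination (((-3 : ℂ)) * x) * hx
  have h21_2 : ((P21_1).roots.map fun x => (P21_2).eval x).prod = ((-1 : ℂ)) := by
    refine res_step _ _ _ (3 : ℂ) ((1 : ℂ) : ℂ) (3 : ℂ) ((-1 : ℂ) / 3) _ 9 8 hd21_1 hd21_2 hl21_1 hl21_2 ?_ h21_3 (by norm_num) (by norm_num)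
    intro x hx
    simp only [P21_1, P21_2, P21_3, eval_add, eval_sub, eval_neg, eval_mul, eval_pow, eval_C, eval_X, eval_one] at hx ⊢
    linear_combination ((1 : ℂ) * x + (2 : ℂ)) * hx
  have h21_1 : (((X^10 + X^9 - X^7 - X^6 - X^5 - X^4 - X^3 + X + 1 : ℂ[X])).roots.map fun x => (P21_1).eval x).prod = ((-1 : ℂ)) := by
    refine res_step _ _ _ (1 : ℂ) (1 : ℂ) (1 : ℂ) ((-1 : ℂ)) _ 10 9 hdL hd21_1 hlL hl21_1 ?_ h21_2 (by norm_num) (by norm_num)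
    intro x hx
    simp only [P21_1, P21_2, eval_add, eval_sub, eval_neg, eval_mul, eval_pow, eval_C, eval_X, eval_one] at hx ⊢
    linear_combination ((1 : ℂ) * x + ((-2 : ℂ))) * hx
  rw [show (((X^10 + X^9 - X^7 - X^6 - X^5 - X^4 - X^3 + X + 1 : ℂ[X])).roots.map fun x => x ^ 21 - 1)
      = (((X^10 + X^9 - X^7 - X^6 - X^5 - X^4 - X^3 + X + 1 : ℂ[X])).roots.map fun x => (P21_1).eval x) from
    Multiset.map_congr rfl fun x hx => ?_]
  · exact h21_1
  · simp only [P21_1, eval_add, eval_sub, eval_neg, eval_mul, eval_pow, eval_C, eval_X, eval_one]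
    linear_combination pw21 x (hroot x hx)
set_option maxHeartbeats 1000000 in
private theorem hQ30 : (((X^10 + X^9 - X^7 - X^6 - X^5 - X^4 - X^3 + X + 1 : ℂ[X])).roots.map fun x => x ^ 30 - 1).prod = ((-841 : ℂ)) := by
  have hd30_1 : (P30_1).natDegree = 9 := by unfold P30_1; compute_degree!
  have hl30_1 : (P30_1).leadingCoeff = (5 : ℂ) := by
    rw [Polynomial.leadingCoeff, hd30_1]; unfold P30_1; compute_degree!
  have hd30_2 : (P30_2).natDegree = 8 := by unfold P30_2; compute_degree!
  have hl30_2 : (P30_2).leadingCoeff = (4 : ℂ) := by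
    rw [Polynomial.leadingCoeff, hd30_2]; unfold P30_2; compute_degree!
  have hd30_3 : (P30_3).natDegree = 7 := by unfold P30_3; compute_degree!
  have hl30_3 : (P30_3).leadingCoeff = (6 : ℂ) := by
    rw [Polynomial.leadingCoeff, hd30_3]; unfold P30_3; compute_degree!
  have hd30_4 : (P30_4).natDegree = 6 := by unfold P30_4; compute_degree!
  have hl30_4 : (P30_4).leadingCoeff = (2 : ℂ) := by
    rw [Polynomial.leadingCoeff, hd30_4]; unfold P30_4; compute_degree!
  have hd30_5 : (P30_5).natDegree = 5 := by unfold P30_5; compute_degree!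
  have hl30_5 : (P30_5).leadingCoeff = (2 : ℂ) := by
    rw [Polynomial.leadingCoeff, hd30_5]; unfold P30_5; compute_degree!
  have hd30_6 : (P30_6).natDegree = 4 := by unfold P30_6; compute_degree!
  have hl30_6 : (P30_6).leadingCoeff = (7 : ℂ) := by
    rw [Polynomial.leadingCoeff, hd30_6]; unfold P30_6; compute_degree!
  have hd30_7 : (P30_7).natDegree = 3 := by unfold P30_7; compute_degree!
  have hl30_7 : (P30_7).leadingCoeff = (20 : ℂ) := by
    rw [Polynomial.leadingCoeff, hd30_7]; unfold P30_7; compute_degree!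
  have hd30_8 : (P30_8).natDegree = 2 := by unfold P30_8; compute_degree!
  have hl30_8 : (P30_8).leadingCoeff = (56 : ℂ) := by
    rw [Polynomial.leadingCoeff, hd30_8]; unfold P30_8; compute_degree!
  have hd30_9 : (P30_9).natDegree = 1 := by unfold P30_9; compute_degree!
  have hl30_9 : (P30_9).leadingCoeff = (5 : ℂ) := by
    rw [Polynomial.leadingCoeff, hd30_9]; unfold P30_9; compute_degree!
  have h30_10 : ((P30_9).roots.map fun x => (C (1 : ℂ)).eval x).prod = (1 : ℂ) :=
    res_const _ _ _ 1 hd30_9 (by norm_num)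
  have h30_9 : ((P30_8).roots.map fun x => (P30_9).eval x).prod = (224 : ℂ) := by
    refine res_step _ _ _ ((25 : ℂ) / 12544) ((56 : ℂ) : ℂ) (5 : ℂ) (1 : ℂ) _ 2 1 hd30_8 hd30_9 hl30_8 hl30_9 ?_ h30_10 (by norm_num) (by norm_num)
    intro x hx
    simp only [P30_8, P30_9, eval_add, eval_sub, eval_neg, eval_mul, eval_pow, eval_C, eval_X, eval_one] at hx ⊢
    linear_combination (((5 : ℂ) / 224) * x + ((913 : ℂ) / 12544)) * hx
  have h30_8 : ((P30_7).roots.map fun x => (P30_8).eval x).prod = (84100 : ℂ) := by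
    refine res_step _ _ _ ((784 : ℂ) / 725) ((20 : ℂ) : ℂ) (56 : ℂ) (224 : ℂ) _ 3 2 hd30_7 hd30_8 hl30_7 hl30_8 ?_ h30_9 (by norm_num) (by norm_num)
    intro x hx
    simp only [P30_7, P30_8, P30_9, eval_add, eval_sub, eval_neg, eval_mul, eval_pow, eval_C, eval_X, eval_one] at hx ⊢
    linear_combination (((56 : ℂ) / 145) * x + ((-17 : ℂ) / 25)) * hx
  have h30_7 : ((P30_6).roots.map fun x => (P30_7).eval x).prod = (576926 : ℂ) := by
    refine res_step _ _ _ ((200 : ℂ) / 49) ((7 : ℂ) : ℂ) (20 : ℂ) (84100 : ℂ) _ 4 3 hd30_6 hd30_7 hl30_6 hl30_7 ?_ h30_8 (by norm_num) (by norm_num)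
    intro x hx
    simp only [P30_6, P30_7, P30_8, eval_add, eval_sub, eval_neg, eval_mul, eval_pow, eval_C, eval_X, eval_one] at hx ⊢
    linear_combination (((10 : ℂ) / 7) * x + ((87 : ℂ) / 49)) * hx
  have h30_6 : ((P30_5).roots.map fun x => (P30_6).eval x).prod = (1682 : ℂ) := by
    refine res_step _ _ _ ((-49 : ℂ) / 2) ((2 : ℂ) : ℂ) (7 : ℂ) (576926 : ℂ) _ 5 4 hd30_5 hd30_6 hl30_5 hl30_6 ?_ h30_7 (by norm_num) (by norm_num)
    intro x hx
    simp only [P30_5, P30_6, P30_7, eval_add, eval_sub, eval_neg, eval_mul, eval_pow, eval_C, eval_X, eval_one] at hx ⊢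
    linear_combination (((-7 : ℂ)) * x + ((23 : ℂ) / 2)) * hx
  have h30_5 : ((P30_4).roots.map fun x => (P30_5).eval x).prod = ((204363 : ℂ) / 8) := by
    refine res_step _ _ _ ((2 : ℂ) / 3) ((2 : ℂ) : ℂ) (2 : ℂ) (1682 : ℂ) _ 6 5 hd30_4 hd30_5 hl30_4 hl30_5 ?_ h30_6 (by norm_num) (by norm_num)
    intro x hx
    simp only [P30_4, P30_5, P30_6, eval_add, eval_sub, eval_neg, eval_mul, eval_pow, eval_C, eval_X, eval_one] at hx ⊢
    linear_combination (((2 : ℂ) / 3) * x + ((5 : ℂ) / 3)) * hx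
  have h30_4 : ((P30_3).roots.map fun x => (P30_4).eval x).prod = ((13456 : ℂ) / 3) := by
    refine res_step _ _ _ ((-1 : ℂ) / 2) ((6 : ℂ) : ℂ) (2 : ℂ) ((204363 : ℂ) / 8) _ 7 6 hd30_3 hd30_4 hl30_3 hl30_4 ?_ h30_5 (by norm_num) (by norm_num)
    intro x hx
    simp only [P30_3, P30_4, P30_5, eval_add, eval_sub, eval_neg, eval_mul, eval_pow, eval_C, eval_X, eval_one] at hx ⊢
    linear_combination (((-3 : ℂ) / 2) * x) * hx
  have h30_3 : ((P30_2).roots.map fun x => (P30_3).eval x).prod = ((841 : ℂ) / 4) := by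
    refine res_step _ _ _ (3 : ℂ) ((4 : ℂ) : ℂ) (6 : ℂ) ((13456 : ℂ) / 3) _ 8 7 hd30_2 hd30_3 hl30_2 hl30_3 ?_ h30_4 (by norm_num) (by norm_num)
    intro x hx
    simp only [P30_2, P30_3, P30_4, eval_add, eval_sub, eval_neg, eval_mul, eval_pow, eval_C, eval_X, eval_one] at hx ⊢
    linear_combination ((2 : ℂ) * x + ((-4 : ℂ))) * hx
  have h30_2 : ((P30_1).roots.map fun x => (P30_2).eval x).prod = (328515625 : ℂ) := by
    refine res_step _ _ _ ((4 : ℂ) / 25) ((5 : ℂ) : ℂ) (4 : ℂ) ((841 : ℂ) / 4) _ 9 8 hd30_1 hd30_2 hl30_1 hl30_2 ?_ h30_3 (by norm_num) (by norm_num)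
    intro x hx
    simp only [P30_1, P30_2, P30_3, eval_add, eval_sub, eval_neg, eval_mul, eval_pow, eval_C, eval_X, eval_one] at hx ⊢
    linear_combination (((1 : ℂ) / 5) * x + ((16 : ℂ) / 25)) * hx
  have h30_1 : (((X^10 + X^9 - X^7 - X^6 - X^5 - X^4 - X^3 + X + 1 : ℂ[X])).roots.map fun x => (P30_1).eval x).prod = ((-841 : ℂ)) := by
    refine res_step _ _ _ ((-25 : ℂ)) (1 : ℂ) (5 : ℂ) (328515625 : ℂ) _ 10 9 hdL hd30_1 hlL hl30_1 ?_ h30_2 (by norm_num) (by norm_num)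
    intro x hx
    simp only [P30_1, P30_2, eval_add, eval_sub, eval_neg, eval_mul, eval_pow, eval_C, eval_X, eval_one] at hx ⊢
    linear_combination (((-5 : ℂ)) * x + (6 : ℂ)) * hx
  rw [show (((X^10 + X^9 - X^7 - X^6 - X^5 - X^4 - X^3 + X + 1 : ℂ[X])).roots.map fun x => x ^ 30 - 1)
      = (((X^10 + X^9 - X^7 - X^6 - X^5 - X^4 - X^3 + X + 1 : ℂ[X])).roots.map fun x => (P30_1).eval x) from
    Multiset.map_congr rfl fun x hx => ?_]
  · exact h30_1
  · simp only [P30_1, eval_add, eval_sub, eval_neg, eval_mul, eval_pow, eval_C, eval_X, eval_one]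
    linear_combination pw30 x (hroot x hx)
set_option maxHeartbeats 1000000 in
private theorem hQ42 : (((X^10 + X^9 - X^7 - X^6 - X^5 - X^4 - X^3 + X + 1 : ℂ[X])).roots.map fun x => x ^ 42 - 1).prod = ((-169 : ℂ)) := by
  have hd42_1 : (P42_1).natDegree = 9 := by unfold P42_1; compute_degree!
  have hl42_1 : (P42_1).leadingCoeff = (37 : ℂ) := by
    rw [Polynomial.leadingCoeff, hd42_1]; unfold P42_1; compute_degree!
  have hd42_2 : (P42_2).natDegree = 8 := by unfold P42_2; compute_degree!
  have hl42_2 : (P42_2).leadingCoeff = (86 : ℂ) := by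
    rw [Polynomial.leadingCoeff, hd42_2]; unfold P42_2; compute_degree!
  have hd42_3 : (P42_3).natDegree = 7 := by unfold P42_3; compute_degree!
  have hl42_3 : (P42_3).leadingCoeff = (297 : ℂ) := by
    rw [Polynomial.leadingCoeff, hd42_3]; unfold P42_3; compute_degree!
  have hd42_4 : (P42_4).natDegree = 6 := by unfold P42_4; compute_degree!
  have hl42_4 : (P42_4).leadingCoeff = (15 : ℂ) := by
    rw [Polynomial.leadingCoeff, hd42_4]; unfold P42_4; compute_degree!
  have hd42_5 : (P42_5).natDegree = 5 := by unfold P42_5; compute_degree!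
  have hl42_5 : (P42_5).leadingCoeff = (5 : ℂ) := by
    rw [Polynomial.leadingCoeff, hd42_5]; unfold P42_5; compute_degree!
  have hd42_6 : (P42_6).natDegree = 4 := by unfold P42_6; compute_degree!
  have hl42_6 : (P42_6).leadingCoeff = (12 : ℂ) := by
    rw [Polynomial.leadingCoeff, hd42_6]; unfold P42_6; compute_degree!
  have hd42_7 : (P42_7).natDegree = 3 := by unfold P42_7; compute_degree!
  have hl42_7 : (P42_7).leadingCoeff = (2317 : ℂ) := by
    rw [Polynomial.leadingCoeff, hd42_7]; unfold P42_7; compute_degree!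
  have hd42_8 : (P42_8).natDegree = 2 := by unfold P42_8; compute_degree!
  have hl42_8 : (P42_8).leadingCoeff = (2566 : ℂ) := by
    rw [Polynomial.leadingCoeff, hd42_8]; unfold P42_8; compute_degree!
  have hd42_9 : (P42_9).natDegree = 1 := by unfold P42_9; compute_degree!
  have hl42_9 : (P42_9).leadingCoeff = (35 : ℂ) := by
    rw [Polynomial.leadingCoeff, hd42_9]; unfold P42_9; compute_degree!
  have h42_10 : ((P42_9).roots.map fun x => (C (1 : ℂ)).eval x).prod = (1 : ℂ) :=
    res_const _ _ _ 1 hd42_9 (by norm_num)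
  have h42_9 : ((P42_8).roots.map fun x => (P42_9).eval x).prod = ((1283 : ℂ) / 2) := by
    refine res_step _ _ _ ((1225 : ℂ) / 1646089) ((2566 : ℂ) : ℂ) (35 : ℂ) (1 : ℂ) _ 2 1 hd42_8 hd42_9 hl42_8 hl42_9 ?_ h42_10 (by norm_num) (by norm_num)
    intro x hx
    simp only [P42_8, P42_9, eval_add, eval_sub, eval_neg, eval_mul, eval_pow, eval_C, eval_X, eval_one] at hx ⊢
    linear_combination (((70 : ℂ) / 1283) * x + ((64438 : ℂ) / 1646089)) * hx
  have h42_8 : ((P42_7).roots.map fun x => (P42_8).eval x).prod = (907274641 : ℂ) := by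
    refine res_step _ _ _ ((-3292178 : ℂ) / 69790357) ((2317 : ℂ) : ℂ) (2566 : ℂ) ((1283 : ℂ) / 2) _ 3 2 hd42_7 hd42_8 hl42_7 hl42_8 ?_ h42_9 (by norm_num) (by norm_num)
    intro x hx
    simp only [P42_7, P42_8, P42_9, eval_add, eval_sub, eval_neg, eval_mul, eval_pow, eval_C, eval_X, eval_one] at hx ⊢
    linear_combination (((-1283 : ℂ) / 30121) * x + ((2745402 : ℂ) / 69790357)) * hx
  have h42_7 : ((P42_6).roots.map fun x => (P42_7).eval x).prod = ((-985608000 : ℂ)) := by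
    refine res_step _ _ _ ((-5368489 : ℂ) / 2160) ((12 : ℂ) : ℂ) (2317 : ℂ) (907274641 : ℂ) _ 4 3 hd42_6 hd42_7 hl42_6 hl42_7 ?_ h42_8 (by norm_num) (by norm_num)
    intro x hx
    simp only [P42_6, P42_7, P42_8, eval_add, eval_sub, eval_neg, eval_mul, eval_pow, eval_C, eval_X, eval_one] at hx ⊢
    linear_combination (((-2317 : ℂ) / 180) * x + ((-115687 : ℂ) / 2160)) * hx
  have h42_6 : ((P42_5).roots.map fun x => (P42_6).eval x).prod = ((-570375 : ℂ)) := by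
    refine res_step _ _ _ ((144 : ℂ) / 5) ((5 : ℂ) : ℂ) (12 : ℂ) ((-985608000 : ℂ)) _ 5 4 hd42_5 hd42_6 hl42_5 hl42_6 ?_ h42_7 (by norm_num) (by norm_num)
    intro x hx
    simp only [P42_5, P42_6, P42_7, eval_add, eval_sub, eval_neg, eval_mul, eval_pow, eval_C, eval_X, eval_one] at hx ⊢
    linear_combination ((12 : ℂ) * x + ((-251 : ℂ) / 5)) * hx
  have h42_5 : ((P42_4).roots.map fun x => (P42_5).eval x).prod = ((-169 : ℂ) / 45) := by
    refine res_step _ _ _ (5 : ℂ) ((15 : ℂ) : ℂ) (5 : ℂ) ((-570375 : ℂ)) _ 6 5 hd42_4 hd42_5 hl42_4 hl42_5 ?_ h42_6 (by norm_num) (by norm_num)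
    intro x hx
    simp only [P42_4, P42_5, P42_6, eval_add, eval_sub, eval_neg, eval_mul, eval_pow, eval_C, eval_X, eval_one] at hx ⊢
    linear_combination ((15 : ℂ) * x + ((-81 : ℂ))) * hx
  have h42_4 : ((P42_3).roots.map fun x => (P42_4).eval x).prod = ((-53036715082923 : ℂ)) := by
    refine res_step _ _ _ ((5 : ℂ) / 9801) ((297 : ℂ) : ℂ) (15 : ℂ) ((-169 : ℂ) / 45) _ 7 6 hd42_3 hd42_4 hl42_3 hl42_4 ?_ h42_5 (by norm_num) (by norm_num)
    intro x hx
    simp only [P42_3, P42_4, P42_5, eval_add, eval_sub, eval_neg, eval_mul, eval_pow, eval_C, eval_X, eval_one] at hx ⊢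
    linear_combination (((1 : ℂ) / 99) * x + ((562 : ℂ) / 9801)) * hx
  have h42_3 : ((P42_2).roots.map fun x => (P42_3).eval x).prod = ((-5879980195466624 : ℂ)) := by
    refine res_step _ _ _ ((29403 : ℂ) / 7396) ((86 : ℂ) : ℂ) (297 : ℂ) ((-53036715082923 : ℂ)) _ 8 7 hd42_2 hd42_3 hl42_2 hl42_3 ?_ h42_4 (by norm_num) (by norm_num)
    intro x hx
    simp only [P42_2, P42_3, P42_4, eval_add, eval_sub, eval_neg, eval_mul, eval_pow, eval_C, eval_X, eval_one] at hx ⊢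
    linear_combination (((99 : ℂ) / 86) * x + ((-2891 : ℂ) / 7396)) * hx
  have h42_2 : ((P42_1).roots.map fun x => (P42_2).eval x).prod = ((-593609027712649 : ℂ)) := by
    refine res_step _ _ _ ((7396 : ℂ) / 1369) ((37 : ℂ) : ℂ) (86 : ℂ) ((-5879980195466624 : ℂ)) _ 9 8 hd42_1 hd42_2 hl42_1 hl42_2 ?_ h42_3 (by norm_num) (by norm_num)
    intro x hx
    simp only [P42_1, P42_2, P42_3, eval_add, eval_sub, eval_neg, eval_mul, eval_pow, eval_C, eval_X, eval_one] at hx ⊢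
    linear_combination (((86 : ℂ) / 37) * x + ((5893 : ℂ) / 1369)) * hx
  have h42_1 : (((X^10 + X^9 - X^7 - X^6 - X^5 - X^4 - X^3 + X + 1 : ℂ[X])).roots.map fun x => (P42_1).eval x).prod = ((-169 : ℂ)) := by
    refine res_step _ _ _ (1369 : ℂ) (1 : ℂ) (37 : ℂ) ((-593609027712649 : ℂ)) _ 10 9 hdL hd42_1 hlL hl42_1 ?_ h42_2 (by norm_num) (by norm_num)
    intro x hx
    simp only [P42_1, P42_2, eval_add, eval_sub, eval_neg, eval_mul, eval_pow, eval_C, eval_X, eval_one] at hx ⊢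
    linear_combination ((37 : ℂ) * x + ((-44 : ℂ))) * hx
  rw [show (((X^10 + X^9 - X^7 - X^6 - X^5 - X^4 - X^3 + X + 1 : ℂ[X])).roots.map fun x => x ^ 42 - 1)
      = (((X^10 + X^9 - X^7 - X^6 - X^5 - X^4 - X^3 + X + 1 : ℂ[X])).roots.map fun x => (P42_1).eval x) from
    Multiset.map_congr rfl fun x hx => ?_]
  · exact h42_1
  · simp only [P42_1, eval_add, eval_sub, eval_neg, eval_mul, eval_pow, eval_C, eval_X, eval_one]
    linear_combination pw42 x (hroot x hx)
set_option maxHeartbeats 1000000 in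
private theorem hQ45 : (((X^10 + X^9 - X^7 - X^6 - X^5 - X^4 - X^3 + X + 1 : ℂ[X])).roots.map fun x => x ^ 45 - 1).prod = ((-841 : ℂ)) := by
  have hd45_1 : (P45_1).natDegree = 9 := by unfold P45_1; compute_degree!
  have hl45_1 : (P45_1).leadingCoeff = (61 : ℂ) := by
    rw [Polynomial.leadingCoeff, hd45_1]; unfold P45_1; compute_degree!
  have hd45_2 : (P45_2).natDegree = 8 := by unfold P45_2; compute_degree!
  have hl45_2 : (P45_2).leadingCoeff = (163 : ℂ) := by
    rw [Polynomial.leadingCoeff, hd45_2]; unfold P45_2; compute_degree!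
  have hd45_3 : (P45_3).natDegree = 7 := by unfold P45_3; compute_degree!
  have hl45_3 : (P45_3).leadingCoeff = (126 : ℂ) := by
    rw [Polynomial.leadingCoeff, hd45_3]; unfold P45_3; compute_degree!
  have hd45_4 : (P45_4).natDegree = 6 := by unfold P45_4; compute_degree!
  have hl45_4 : (P45_4).leadingCoeff = (43 : ℂ) := by
    rw [Polynomial.leadingCoeff, hd45_4]; unfold P45_4; compute_degree!
  have hd45_5 : (P45_5).natDegree = 5 := by unfold P45_5; compute_degree!
  have hl45_5 : (P45_5).leadingCoeff = (8 : ℂ) := by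
    rw [Polynomial.leadingCoeff, hd45_5]; unfold P45_5; compute_degree!
  have hd45_6 : (P45_6).natDegree = 4 := by unfold P45_6; compute_degree!
  have hl45_6 : (P45_6).leadingCoeff = (1 : ℂ) := by
    rw [Polynomial.leadingCoeff, hd45_6]; unfold P45_6; compute_degree!
  have hd45_7 : (P45_7).natDegree = 3 := by unfold P45_7; compute_degree!
  have hl45_7 : (P45_7).leadingCoeff = (69 : ℂ) := by
    rw [Polynomial.leadingCoeff, hd45_7]; unfold P45_7; compute_degree!
  have hd45_8 : (P45_8).natDegree = 2 := by unfold P45_8; compute_degree!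
  have hl45_8 : (P45_8).leadingCoeff = (512 : ℂ) := by
    rw [Polynomial.leadingCoeff, hd45_8]; unfold P45_8; compute_degree!
  have hd45_9 : (P45_9).natDegree = 1 := by unfold P45_9; compute_degree!
  have hl45_9 : (P45_9).leadingCoeff = (4 : ℂ) := by
    rw [Polynomial.leadingCoeff, hd45_9]; unfold P45_9; compute_degree!
  have h45_10 : ((P45_9).roots.map fun x => (C (1 : ℂ)).eval x).prod = (1 : ℂ) :=
    res_const _ _ _ 1 hd45_9 (by norm_num)
  have h45_9 : ((P45_8).roots.map fun x => (P45_9).eval x).prod = (32 : ℂ) := by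
    refine res_step _ _ _ ((1 : ℂ) / 1024) ((512 : ℂ) : ℂ) (4 : ℂ) (1 : ℂ) _ 2 1 hd45_8 hd45_9 hl45_8 hl45_9 ?_ h45_10 (by norm_num) (by norm_num)
    intro x hx
    simp only [P45_8, P45_9, eval_add, eval_sub, eval_neg, eval_mul, eval_pow, eval_C, eval_X, eval_one] at hx ⊢
    linear_combination (((1 : ℂ) / 8) * x + ((-185 : ℂ) / 1024)) * hx
  have h45_8 : ((P45_7).roots.map fun x => (P45_8).eval x).prod = (4004001 : ℂ) := by
    refine res_step _ _ _ ((65536 : ℂ) / 138069) ((69 : ℂ) : ℂ) (512 : ℂ) (32 : ℂ) _ 3 2 hd45_7 hd45_8 hl45_7 hl45_8 ?_ h45_9 (by norm_num) (by norm_num)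
    intro x hx
    simp only [P45_7, P45_8, P45_9, eval_add, eval_sub, eval_neg, eval_mul, eval_pow, eval_C, eval_X, eval_one] at hx ⊢
    linear_combination (((128 : ℂ) / 2001) * x + ((5501 : ℂ) / 138069)) * hx
  have h45_7 : ((P45_6).roots.map fun x => (P45_7).eval x).prod = (430592 : ℂ) := by
    refine res_step _ _ _ ((4761 : ℂ) / 8) ((1 : ℂ) : ℂ) (69 : ℂ) (4004001 : ℂ) _ 4 3 hd45_6 hd45_7 hl45_6 hl45_7 ?_ h45_8 (by norm_num) (by norm_num)
    intro x hx
    simp only [P45_6, P45_7, P45_8, eval_add, eval_sub, eval_neg, eval_mul, eval_pow, eval_C, eval_X, eval_one] at hx ⊢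
    linear_combination (((69 : ℂ) / 8) * x + ((-271 : ℂ) / 8)) * hx
  have h45_6 : ((P45_5).roots.map fun x => (P45_6).eval x).prod = ((841 : ℂ) / 8) := by
    refine res_step _ _ _ (1 : ℂ) ((8 : ℂ) : ℂ) (1 : ℂ) (430592 : ℂ) _ 5 4 hd45_5 hd45_6 hl45_5 hl45_6 ?_ h45_7 (by norm_num) (by norm_num)
    intro x hx
    simp only [P45_5, P45_6, P45_7, eval_add, eval_sub, eval_neg, eval_mul, eval_pow, eval_C, eval_X, eval_one] at hx ⊢
    linear_combination ((8 : ℂ) * x + (8 : ℂ)) * hx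
  have h45_5 : ((P45_4).roots.map fun x => (P45_5).eval x).prod = (123634100563 : ℂ) := by
    refine res_step _ _ _ ((8 : ℂ) / 1849) ((43 : ℂ) : ℂ) (8 : ℂ) ((841 : ℂ) / 8) _ 6 5 hd45_4 hd45_5 hl45_4 hl45_5 ?_ h45_6 (by norm_num) (by norm_num)
    intro x hx
    simp only [P45_4, P45_5, P45_6, eval_add, eval_sub, eval_neg, eval_mul, eval_pow, eval_C, eval_X, eval_one] at hx ⊢
    linear_combination (((1 : ℂ) / 43) * x + ((143 : ℂ) / 1849)) * hx
  have h45_4 : ((P45_3).roots.map fun x => (P45_4).eval x).prod = (3365264982897216 : ℂ) := by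
    refine res_step _ _ _ ((-1849 : ℂ) / 15876) ((126 : ℂ) : ℂ) (43 : ℂ) (123634100563 : ℂ) _ 7 6 hd45_3 hd45_4 hl45_3 hl45_4 ?_ h45_5 (by norm_num) (by norm_num)
    intro x hx
    simp only [P45_3, P45_4, P45_5, eval_add, eval_sub, eval_neg, eval_mul, eval_pow, eval_C, eval_X, eval_one] at hx ⊢
    linear_combination (((-43 : ℂ) / 126) * x + ((-4987 : ℂ) / 15876)) * hx
  have h45_3 : ((P45_2).roots.map fun x => (P45_3).eval x).prod = (2571042327862207747 : ℂ) := by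
    refine res_step _ _ _ ((15876 : ℂ) / 26569) ((163 : ℂ) : ℂ) (126 : ℂ) (3365264982897216 : ℂ) _ 8 7 hd45_2 hd45_3 hl45_2 hl45_3 ?_ h45_4 (by norm_num) (by norm_num)
    intro x hx
    simp only [P45_2, P45_3, P45_4, eval_add, eval_sub, eval_neg, eval_mul, eval_pow, eval_C, eval_X, eval_one] at hx ⊢
    linear_combination (((126 : ℂ) / 163) * x + ((-4423 : ℂ) / 26569)) * hx
  have h45_2 : ((P45_1).roots.map fun x => (P45_2).eval x).prod = (161225850230713321 : ℂ) := by
    refine res_step _ _ _ ((26569 : ℂ) / 3721) ((61 : ℂ) : ℂ) (163 : ℂ) (2571042327862207747 : ℂ) _ 9 8 hd45_1 hd45_2 hl45_1 hl45_2 ?_ h45_3 (by norm_num) (by norm_num)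
    intro x hx
    simp only [P45_1, P45_2, P45_3, eval_add, eval_sub, eval_neg, eval_mul, eval_pow, eval_C, eval_X, eval_one] at hx ⊢
    linear_combination (((163 : ℂ) / 61) * x + ((1162 : ℂ) / 3721)) * hx
  have h45_1 : (((X^10 + X^9 - X^7 - X^6 - X^5 - X^4 - X^3 + X + 1 : ℂ[X])).roots.map fun x => (P45_1).eval x).prod = ((-841 : ℂ)) := by
    refine res_step _ _ _ ((-3721 : ℂ)) (1 : ℂ) (61 : ℂ) (161225850230713321 : ℂ) _ 10 9 hdL hd45_1 hlL hl45_1 ?_ h45_2 (by norm_num) (by norm_num)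
    intro x hx
    simp only [P45_1, P45_2, eval_add, eval_sub, eval_neg, eval_mul, eval_pow, eval_C, eval_X, eval_one] at hx ⊢
    linear_combination (((-61 : ℂ)) * x + (70 : ℂ)) * hx
  rw [show (((X^10 + X^9 - X^7 - X^6 - X^5 - X^4 - X^3 + X + 1 : ℂ[X])).roots.map fun x => x ^ 45 - 1)
      = (((X^10 + X^9 - X^7 - X^6 - X^5 - X^4 - X^3 + X + 1 : ℂ[X])).roots.map fun x => (P45_1).eval x) from
    Multiset.map_congr rfl fun x hx => ?_]
  · exact h45_1
  · simp only [P45_1, eval_add, eval_sub, eval_neg, eval_mul, eval_pow, eval_C, eval_X, eval_one]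
    linear_combination pw45 x (hroot x hx)
set_option maxHeartbeats 1000000 in
private theorem hQ63 : (((X^10 + X^9 - X^7 - X^6 - X^5 - X^4 - X^3 + X + 1 : ℂ[X])).roots.map fun x => x ^ 63 - 1).prod = ((-1 : ℂ)) := by
  have hd63_1 : (P63_1).natDegree = 9 := by unfold P63_1; compute_degree!
  have hl63_1 : (P63_1).leadingCoeff = (1116 : ℂ) := by
    rw [Polynomial.leadingCoeff, hd63_1]; unfold P63_1; compute_degree!
  have hd63_2 : (P63_2).natDegree = 8 := by unfold P63_2; compute_degree!
  have hl63_2 : (P63_2).leadingCoeff = (440 : ℂ) := by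
    rw [Polynomial.leadingCoeff, hd63_2]; unfold P63_2; compute_degree!
  have hd63_3 : (P63_3).natDegree = 7 := by unfold P63_3; compute_degree!
  have hl63_3 : (P63_3).leadingCoeff = (32 : ℂ) := by
    rw [Polynomial.leadingCoeff, hd63_3]; unfold P63_3; compute_degree!
  have hd63_4 : (P63_4).natDegree = 6 := by unfold P63_4; compute_degree!
  have hl63_4 : (P63_4).leadingCoeff = (8 : ℂ) := by
    rw [Polynomial.leadingCoeff, hd63_4]; unfold P63_4; compute_degree!
  have hd63_5 : (P63_5).natDegree = 4 := by unfold P63_5; compute_degree!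
  have hl63_5 : (P63_5).leadingCoeff = (2 : ℂ) := by
    rw [Polynomial.leadingCoeff, hd63_5]; unfold P63_5; compute_degree!
  have hd63_6 : (P63_6).natDegree = 3 := by unfold P63_6; compute_degree!
  have hl63_6 : (P63_6).leadingCoeff = (1 : ℂ) := by
    rw [Polynomial.leadingCoeff, hd63_6]; unfold P63_6; compute_degree!
  have hd63_7 : (P63_7).natDegree = 2 := by unfold P63_7; compute_degree!
  have hl63_7 : (P63_7).leadingCoeff = (7 : ℂ) := by
    rw [Polynomial.leadingCoeff, hd63_7]; unfold P63_7; compute_degree!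
  have hd63_8 : (P63_8).natDegree = 1 := by unfold P63_8; compute_degree!
  have hl63_8 : (P63_8).leadingCoeff = (3 : ℂ) := by
    rw [Polynomial.leadingCoeff, hd63_8]; unfold P63_8; compute_degree!
  have h63_9 : ((P63_8).roots.map fun x => (C (1 : ℂ)).eval x).prod = (1 : ℂ) :=
    res_const _ _ _ 1 hd63_8 (by norm_num)
  have h63_8 : ((P63_7).roots.map fun x => (P63_8).eval x).prod = (28 : ℂ) := by
    refine res_step _ _ _ ((9 : ℂ) / 196) ((7 : ℂ) : ℂ) (3 : ℂ) (1 : ℂ) _ 2 1 hd63_7 hd63_8 hl63_7 hl63_8 ?_ h63_9 (by norm_num) (by norm_num)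
    intro x hx
    simp only [P63_7, P63_8, eval_add, eval_sub, eval_neg, eval_mul, eval_pow, eval_C, eval_X, eval_one] at hx ⊢
    linear_combination (((3 : ℂ) / 28) * x + ((-8 : ℂ) / 49)) * hx
  have h63_7 : ((P63_6).roots.map fun x => (P63_7).eval x).prod = (16 : ℂ) := by
    refine res_step _ _ _ ((-49 : ℂ) / 2) ((1 : ℂ) : ℂ) (7 : ℂ) (28 : ℂ) _ 3 2 hd63_6 hd63_7 hl63_6 hl63_7 ?_ h63_8 (by norm_num) (by norm_num)
    intro x hx
    simp only [P63_6, P63_7, P63_8, eval_add, eval_sub, eval_neg, eval_mul, eval_pow, eval_C, eval_X, eval_one] at hx ⊢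
    linear_combination (((-7 : ℂ) / 2) * x + ((-27 : ℂ) / 2)) * hx
  have h63_6 : ((P63_5).roots.map fun x => (P63_6).eval x).prod = (128 : ℂ) := by
    refine res_step _ _ _ ((1 : ℂ) / 4) ((2 : ℂ) : ℂ) (1 : ℂ) (16 : ℂ) _ 4 3 hd63_5 hd63_6 hl63_5 hl63_6 ?_ h63_7 (by norm_num) (by norm_num)
    intro x hx
    simp only [P63_5, P63_6, P63_7, eval_add, eval_sub, eval_neg, eval_mul, eval_pow, eval_C, eval_X, eval_one] at hx ⊢
    linear_combination (((1 : ℂ) / 2) * x + ((-7 : ℂ) / 4)) * hx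
  have h63_5 : ((P63_4).roots.map fun x => (P63_5).eval x).prod = (2 : ℂ) := by
    refine res_step _ _ _ (1 : ℂ) ((8 : ℂ) : ℂ) (2 : ℂ) (128 : ℂ) _ 6 4 hd63_4 hd63_5 hl63_4 hl63_5 ?_ h63_6 (by norm_num) (by norm_num)
    intro x hx
    simp only [P63_4, P63_5, P63_6, eval_add, eval_sub, eval_neg, eval_mul, eval_pow, eval_C, eval_X, eval_one] at hx ⊢
    linear_combination ((4 : ℂ) * x ^ 2 + ((-4 : ℂ))) * hx
  have h63_4 : ((P63_3).roots.map fun x => (P63_4).eval x).prod = (16 : ℂ) := by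
    refine res_step _ _ _ ((-1 : ℂ) / 4) ((32 : ℂ) : ℂ) (8 : ℂ) (2 : ℂ) _ 7 6 hd63_3 hd63_4 hl63_3 hl63_4 ?_ h63_5 (by norm_num) (by norm_num)
    intro x hx
    simp only [P63_3, P63_4, P63_5, eval_add, eval_sub, eval_neg, eval_mul, eval_pow, eval_C, eval_X, eval_one] at hx ⊢
    linear_combination (((-1 : ℂ)) * x + ((-9 : ℂ) / 4)) * hx
  have h63_3 : ((P63_2).roots.map fun x => (P63_3).eval x).prod = ((1522435234375 : ℂ) / 32) := by
    refine res_step _ _ _ ((16 : ℂ) / 3025) ((440 : ℂ) : ℂ) (32 : ℂ) (16 : ℂ) _ 8 7 hd63_2 hd63_3 hl63_2 hl63_3 ?_ h63_4 (by norm_num) (by norm_num)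
    intro x hx
    simp only [P63_2, P63_3, P63_4, eval_add, eval_sub, eval_neg, eval_mul, eval_pow, eval_C, eval_X, eval_one] at hx ⊢
    linear_combination (((4 : ℂ) / 55) * x + ((-269 : ℂ) / 3025)) * hx
  have h63_2 : ((P63_1).roots.map fun x => (P63_2).eval x).prod = ((36714162532123280961 : ℂ) / 4) := by
    refine res_step _ _ _ ((6050 : ℂ) / 77841) ((1116 : ℂ) : ℂ) (440 : ℂ) ((1522435234375 : ℂ) / 32) _ 9 8 hd63_1 hd63_2 hl63_1 hl63_2 ?_ h63_3 (by norm_num) (by norm_num)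
    intro x hx
    simp only [P63_1, P63_2, P63_3, eval_add, eval_sub, eval_neg, eval_mul, eval_pow, eval_C, eval_X, eval_one] at hx ⊢
    linear_combination (((55 : ℂ) / 279) * x + ((9949 : ℂ) / 77841)) * hx
  have h63_1 : (((X^10 + X^9 - X^7 - X^6 - X^5 - X^4 - X^3 + X + 1 : ℂ[X])).roots.map fun x => (P63_1).eval x).prod = ((-1 : ℂ)) := by
    refine res_step _ _ _ ((-311364 : ℂ)) (1 : ℂ) (1116 : ℂ) ((36714162532123280961 : ℂ) / 4) _ 10 9 hdL hd63_1 hlL hl63_1 ?_ h63_2 (by norm_num) (by norm_num)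
    intro x hx
    simp only [P63_1, P63_2, eval_add, eval_sub, eval_neg, eval_mul, eval_pow, eval_C, eval_X, eval_one] at hx ⊢
    linear_combination (((-279 : ℂ)) * x + (328 : ℂ)) * hx
  rw [show (((X^10 + X^9 - X^7 - X^6 - X^5 - X^4 - X^3 + X + 1 : ℂ[X])).roots.map fun x => x ^ 63 - 1)
      = (((X^10 + X^9 - X^7 - X^6 - X^5 - X^4 - X^3 + X + 1 : ℂ[X])).roots.map fun x => (P63_1).eval x) from
    Multiset.map_congr rfl fun x hx => ?_]
  · exact h63_1
  · simp only [P63_1, eval_add, eval_sub, eval_neg, eval_mul, eval_pow, eval_C, eval_X, eval_one]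
    linear_combination pw63 x (hroot x hx)
set_option maxHeartbeats 1000000 in
private theorem hQ90 : (((X^10 + X^9 - X^7 - X^6 - X^5 - X^4 - X^3 + X + 1 : ℂ[X])).roots.map fun x => x ^ 90 - 1).prod = ((-27552001 : ℂ)) := by
  have hd90_1 : (P90_1).natDegree = 9 := by unfold P90_1; compute_degree!
  have hl90_1 : (P90_1).leadingCoeff = (89403 : ℂ) := by
    rw [Polynomial.leadingCoeff, hd90_1]; unfold P90_1; compute_degree!
  have hd90_2 : (P90_2).natDegree = 8 := by unfold P90_2; compute_degree!
  have hl90_2 : (P90_2).leadingCoeff = (404582 : ℂ) := by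
    rw [Polynomial.leadingCoeff, hd90_2]; unfold P90_2; compute_degree!
  have hd90_3 : (P90_3).natDegree = 7 := by unfold P90_3; compute_degree!
  have hl90_3 : (P90_3).leadingCoeff = (609485 : ℂ) := by
    rw [Polynomial.leadingCoeff, hd90_3]; unfold P90_3; compute_degree!
  have hd90_4 : (P90_4).natDegree = 6 := by unfold P90_4; compute_degree!
  have hl90_4 : (P90_4).leadingCoeff = (140218 : ℂ) := by
    rw [Polynomial.leadingCoeff, hd90_4]; unfold P90_4; compute_degree!
  have hd90_5 : (P90_5).natDegree = 5 := by unfold P90_5; compute_degree!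
  have hl90_5 : (P90_5).leadingCoeff = (108794 : ℂ) := by
    rw [Polynomial.leadingCoeff, hd90_5]; unfold P90_5; compute_degree!
  have hd90_6 : (P90_6).natDegree = 4 := by unfold P90_6; compute_degree!
  have hl90_6 : (P90_6).leadingCoeff = (262915 : ℂ) := by
    rw [Polynomial.leadingCoeff, hd90_6]; unfold P90_6; compute_degree!
  have hd90_7 : (P90_7).natDegree = 3 := by unfold P90_7; compute_degree!
  have hl90_7 : (P90_7).leadingCoeff = (220975 : ℂ) := by
    rw [Polynomial.leadingCoeff, hd90_7]; unfold P90_7; compute_degree!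
  have hd90_8 : (P90_8).natDegree = 2 := by unfold P90_8; compute_degree!
  have hl90_8 : (P90_8).leadingCoeff = (1546589 : ℂ) := by
    rw [Polynomial.leadingCoeff, hd90_8]; unfold P90_8; compute_degree!
  have hd90_9 : (P90_9).natDegree = 1 := by unfold P90_9; compute_degree!
  have hl90_9 : (P90_9).leadingCoeff = (578 : ℂ) := by
    rw [Polynomial.leadingCoeff, hd90_9]; unfold P90_9; compute_degree!
  have h90_10 : ((P90_9).roots.map fun x => (C (1 : ℂ)).eval x).prod = (1 : ℂ) :=
    res_const _ _ _ 1 hd90_9 (by norm_num)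
  have h90_9 : ((P90_8).roots.map fun x => (P90_9).eval x).prod = (7732945 : ℂ) := by
    refine res_step _ _ _ ((334084 : ℂ) / 11959687674605) ((1546589 : ℂ) : ℂ) (578 : ℂ) (1 : ℂ) _ 2 1 hd90_8 hd90_9 hl90_8 hl90_9 ?_ h90_10 (by norm_num) (by norm_num)
    intro x hx
    simp only [P90_8, P90_9, eval_add, eval_sub, eval_neg, eval_mul, eval_pow, eval_C, eval_X, eval_one] at hx ⊢
    linear_combination (((578 : ℂ) / 7732945) * x + ((-4078010797 : ℂ) / 11959687674605)) * hx
  have h90_8 : ((P90_7).roots.map fun x => (P90_8).eval x).prod = (269072569689990125 : ℂ) := by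
    refine res_step _ _ _ ((-2391937534921 : ℂ) / 51261682166125) ((220975 : ℂ) : ℂ) (1546589 : ℂ) (7732945 : ℂ) _ 3 2 hd90_7 hd90_8 hl90_7 hl90_8 ?_ h90_9 (by norm_num) (by norm_num)
    intro x hx
    simp only [P90_7, P90_8, P90_9, eval_add, eval_sub, eval_neg, eval_mul, eval_pow, eval_C, eval_X, eval_one] at hx ⊢
    linear_combination (((-1546589 : ℂ) / 231979555) * x + ((588931733898 : ℂ) / 51261682166125)) * hx
  have h90_7 : ((P90_6).roots.map fun x => (P90_7).eval x).prod = ((32046397322772418106296 : ℂ) / 5) := by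
    refine res_step _ _ _ ((9765990125 : ℂ) / 5529943778) ((262915 : ℂ) : ℂ) (220975 : ℂ) (269072569689990125 : ℂ) _ 4 3 hd90_6 hd90_7 hl90_6 hl90_7 ?_ h90_8 (by norm_num) (by norm_num)
    intro x hx
    simp only [P90_6, P90_7, P90_8, eval_add, eval_sub, eval_neg, eval_mul, eval_pow, eval_C, eval_X, eval_one] at hx ⊢
    linear_combination (((220975 : ℂ) / 105166) * x + ((12180553278 : ℂ) / 2764971889)) * hx
  have h90_6 : ((P90_5).roots.map fun x => (P90_6).eval x).prod = (1929936093907247158343015048 : ℂ) := by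
    refine res_step _ _ _ ((13824859445 : ℂ) / 5918067218) ((108794 : ℂ) : ℂ) (262915 : ℂ) ((32046397322772418106296 : ℂ) / 5) _ 5 4 hd90_5 hd90_6 hl90_5 hl90_6 ?_ h90_7 (by norm_num) (by norm_num)
    intro x hx
    simp only [P90_5, P90_6, P90_7, eval_add, eval_sub, eval_neg, eval_mul, eval_pow, eval_C, eval_X, eval_one] at hx ⊢
    linear_combination (((52583 : ℂ) / 54397) * x + ((4975155753 : ℂ) / 5918067218)) * hx
  have h90_5 : ((P90_4).roots.map fun x => (P90_5).eval x).prod = ((46668302956359377027668996637549 : ℂ) / 2) := by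
    refine res_step _ _ _ ((5918067218 : ℂ) / 4915271881) ((140218 : ℂ) : ℂ) (108794 : ℂ) (1929936093907247158343015048 : ℂ) _ 6 5 hd90_4 hd90_5 hl90_4 hl90_5 ?_ h90_6 (by norm_num) (by norm_num)
    intro x hx
    simp only [P90_4, P90_5, P90_6, eval_add, eval_sub, eval_neg, eval_mul, eval_pow, eval_C, eval_X, eval_one] at hx ⊢
    linear_combination (((108794 : ℂ) / 70109) * x + ((-23709844021 : ℂ) / 4915271881)) * hx
  have h90_4 : ((P90_3).roots.map fun x => (P90_4).eval x).prod = (1412314037268998411591601888160991070765625 : ℂ) := by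
    refine res_step _ _ _ ((9830543762 : ℂ) / 371471965225) ((609485 : ℂ) : ℂ) (140218 : ℂ) ((46668302956359377027668996637549 : ℂ) / 2) _ 7 6 hd90_3 hd90_4 hl90_3 hl90_4 ?_ h90_5 (by norm_num) (by norm_num)
    intro x hx
    simp only [P90_3, P90_4, P90_5, eval_add, eval_sub, eval_neg, eval_mul, eval_pow, eval_C, eval_X, eval_one] at hx ⊢
    linear_combination (((70109 : ℂ) / 609485) * x + ((105672821554 : ℂ) / 371471965225)) * hx
  have h90_3 : ((P90_2).roots.map fun x => (P90_3).eval x).prod = (48887636791757721224711340557478318202076048768 : ℂ) := by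
    refine res_step _ _ _ ((371471965225 : ℂ) / 163686594724) ((404582 : ℂ) : ℂ) (609485 : ℂ) (1412314037268998411591601888160991070765625 : ℂ) _ 8 7 hd90_2 hd90_3 hl90_2 hl90_3 ?_ h90_4 (by norm_num) (by norm_num)
    intro x hx
    simp only [P90_2, P90_3, P90_4, eval_add, eval_sub, eval_neg, eval_mul, eval_pow, eval_C, eval_X, eval_one] at hx ⊢
    linear_combination (((609485 : ℂ) / 404582) * x + ((47724972953 : ℂ) / 163686594724)) * hx
  have h90_2 : ((P90_1).roots.map fun x => (P90_2).eval x).prod = (112452698892177098443845740445028915868701940961 : ℂ) := by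
    refine res_step _ _ _ ((163686594724 : ℂ) / 7992896409) ((89403 : ℂ) : ℂ) (404582 : ℂ) (48887636791757721224711340557478318202076048768 : ℂ) _ 9 8 hd90_1 hd90_2 hl90_1 hl90_2 ?_ h90_3 (by norm_num) (by norm_num)
    intro x hx
    simp only [P90_1, P90_2, P90_3, eval_add, eval_sub, eval_neg, eval_mul, eval_pow, eval_C, eval_X, eval_one] at hx ⊢
    linear_combination (((404582 : ℂ) / 89403) * x + ((28951895731 : ℂ) / 7992896409)) * hx
  have h90_1 : (((X^10 + X^9 - X^7 - X^6 - X^5 - X^4 - X^3 + X + 1 : ℂ[X])).roots.map fun x => (P90_1).eval x).prod = ((-27552001 : ℂ)) := by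
    refine res_step _ _ _ ((-7992896409 : ℂ)) (1 : ℂ) (89403 : ℂ) (112452698892177098443845740445028915868701940961 : ℂ) _ 10 9 hdL hd90_1 hlL hl90_1 ?_ h90_2 (by norm_num) (by norm_num)
    intro x hx
    simp only [P90_1, P90_2, eval_add, eval_sub, eval_neg, eval_mul, eval_pow, eval_C, eval_X, eval_one] at hx ⊢
    linear_combination (((-89403 : ℂ)) * x + (105161 : ℂ)) * hx
  rw [show (((X^10 + X^9 - X^7 - X^6 - X^5 - X^4 - X^3 + X + 1 : ℂ[X])).roots.map fun x => x ^ 90 - 1)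
      = (((X^10 + X^9 - X^7 - X^6 - X^5 - X^4 - X^3 + X + 1 : ℂ[X])).roots.map fun x => (P90_1).eval x) from
    Multiset.map_congr rfl fun x hx => ?_]
  · exact h90_1
  · simp only [P90_1, eval_add, eval_sub, eval_neg, eval_mul, eval_pow, eval_C, eval_X, eval_one]
    linear_combination pw90 x (hroot x hx)
set_option maxHeartbeats 1000000 in
private theorem hQ105 : (((X^10 + X^9 - X^7 - X^6 - X^5 - X^4 - X^3 + X + 1 : ℂ[X])).roots.map fun x => x ^ 105 - 1).prod = ((-4239481 : ℂ)) := by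
  have hd105_1 : (P105_1).natDegree = 9 := by unfold P105_1; compute_degree!
  have hl105_1 : (P105_1).leadingCoeff = (1020972 : ℂ) := by
    rw [Polynomial.leadingCoeff, hd105_1]; unfold P105_1; compute_degree!
  have hd105_2 : (P105_2).natDegree = 8 := by unfold P105_2; compute_degree!
  have hl105_2 : (P105_2).leadingCoeff = (871892 : ℂ) := by
    rw [Polynomial.leadingCoeff, hd105_2]; unfold P105_2; compute_degree!
  have hd105_3 : (P105_3).natDegree = 7 := by unfold P105_3; compute_degree!
  have hl105_3 : (P105_3).leadingCoeff = (5181941 : ℂ) := by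
    rw [Polynomial.leadingCoeff, hd105_3]; unfold P105_3; compute_degree!
  have hd105_4 : (P105_4).natDegree = 6 := by unfold P105_4; compute_degree!
  have hl105_4 : (P105_4).leadingCoeff = (336790 : ℂ) := by
    rw [Polynomial.leadingCoeff, hd105_4]; unfold P105_4; compute_degree!
  have hd105_5 : (P105_5).natDegree = 5 := by unfold P105_5; compute_degree!
  have hl105_5 : (P105_5).leadingCoeff = (27181 : ℂ) := by
    rw [Polynomial.leadingCoeff, hd105_5]; unfold P105_5; compute_degree!
  have hd105_6 : (P105_6).natDegree = 4 := by unfold P105_6; compute_degree!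
  have hl105_6 : (P105_6).leadingCoeff = (585038 : ℂ) := by
    rw [Polynomial.leadingCoeff, hd105_6]; unfold P105_6; compute_degree!
  have hd105_7 : (P105_7).natDegree = 3 := by unfold P105_7; compute_degree!
  have hl105_7 : (P105_7).leadingCoeff = (11267813 : ℂ) := by
    rw [Polynomial.leadingCoeff, hd105_7]; unfold P105_7; compute_degree!
  have hd105_8 : (P105_8).natDegree = 2 := by unfold P105_8; compute_degree!
  have hl105_8 : (P105_8).leadingCoeff = (11259577 : ℂ) := by
    rw [Polynomial.leadingCoeff, hd105_8]; unfold P105_8; compute_degree!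
  have hd105_9 : (P105_9).natDegree = 1 := by unfold P105_9; compute_degree!
  have hl105_9 : (P105_9).leadingCoeff = (4261 : ℂ) := by
    rw [Polynomial.leadingCoeff, hd105_9]; unfold P105_9; compute_degree!
  have h105_10 : ((P105_9).roots.map fun x => (C (1 : ℂ)).eval x).prod = (1 : ℂ) :=
    res_const _ _ _ 1 hd105_9 (by norm_num)
  have h105_9 : ((P105_8).roots.map fun x => (P105_9).eval x).prod = (11259577 : ℂ) := by
    refine res_step _ _ _ ((18156121 : ℂ) / 126778074218929) ((11259577 : ℂ) : ℂ) (4261 : ℂ) (1 : ℂ) _ 2 1 hd105_8 hd105_9 hl105_8 hl105_9 ?_ h105_10 (by norm_num) (by norm_num)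
    intro x hx
    simp only [P105_8, P105_9, eval_add, eval_sub, eval_neg, eval_mul, eval_pow, eval_C, eval_X, eval_one] at hx ⊢
    linear_combination (((4261 : ℂ) / 11259577) * x + ((34188590511 : ℂ) / 126778074218929)) * hx
  have h105_8 : ((P105_7).roots.map fun x => (P105_8).eval x).prod = (538259811451100819089 : ℂ) := by
    refine res_step _ _ _ ((-126778074218929 : ℂ) / 261418072584313171) ((11267813 : ℂ) : ℂ) (11259577 : ℂ) (11259577 : ℂ) _ 3 2 hd105_7 hd105_8 hl105_7 hl105_8 ?_ h105_9 (by norm_num) (by norm_num)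
    intro x hx
    simp only [P105_7, P105_8, P105_9, eval_add, eval_sub, eval_neg, eval_mul, eval_pow, eval_C, eval_X, eval_one] at hx ⊢
    linear_combination (((-11259577 : ℂ) / 23200426967) * x + ((78182497344858 : ℂ) / 261418072584313171)) * hx
  have h105_7 : ((P105_6).roots.map fun x => (P105_7).eval x).prod = ((-848916393728550818621432 : ℂ)) := by
    refine res_step _ _ _ ((-126963609802969 : ℂ) / 342269461444) ((585038 : ℂ) : ℂ) (11267813 : ℂ) (538259811451100819089 : ℂ) _ 4 3 hd105_6 hd105_7 hl105_6 hl105_7 ?_ h105_8 (by norm_num) (by norm_num)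
    intro x hx
    simp only [P105_6, P105_7, P105_8, eval_add, eval_sub, eval_neg, eval_mul, eval_pow, eval_C, eval_X, eval_one] at hx ⊢
    linear_combination (((-11267813 : ℂ) / 585038) * x + ((-8779949201685 : ℂ) / 342269461444)) * hx
  have h105_6 : ((P105_5).roots.map fun x => (P105_6).eval x).prod = ((-2314058935032857610568201 : ℂ)) := by
    refine res_step _ _ _ ((342269461444 : ℂ) / 738806761) ((27181 : ℂ) : ℂ) (585038 : ℂ) ((-848916393728550818621432 : ℂ)) _ 5 4 hd105_5 hd105_6 hl105_5 hl105_6 ?_ h105_7 (by norm_num) (by norm_num)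
    intro x hx
    simp only [P105_5, P105_6, P105_7, eval_add, eval_sub, eval_neg, eval_mul, eval_pow, eval_C, eval_X, eval_one] at hx ⊢
    linear_combination (((585038 : ℂ) / 27181) * x + ((-276585461825 : ℂ) / 738806761)) * hx
  have h105_5 : ((P105_4).roots.map fun x => (P105_5).eval x).prod = ((-18369977855265099094236333691900000 : ℂ)) := by
    refine res_step _ _ _ ((738806761 : ℂ) / 113427504100) ((336790 : ℂ) : ℂ) (27181 : ℂ) ((-2314058935032857610568201 : ℂ)) _ 6 5 hd105_4 hd105_5 hl105_4 hl105_5 ?_ h105_6 (by norm_num) (by norm_num)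
    intro x hx
    simp only [P105_4, P105_5, P105_6, eval_add, eval_sub, eval_neg, eval_mul, eval_pow, eval_C, eval_X, eval_one] at hx ⊢
    linear_combination (((27181 : ℂ) / 336790) * x + ((138382429319 : ℂ) / 113427504100)) * hx
  have h105_4 : ((P105_3).roots.map fun x => (P105_4).eval x).prod = ((-82085694476578061743810233137575932796320532321 : ℂ)) := by
    refine res_step _ _ _ ((113427504100 : ℂ) / 26852512527481) ((5181941 : ℂ) : ℂ) (336790 : ℂ) ((-18369977855265099094236333691900000 : ℂ)) _ 7 6 hd105_3 hd105_4 hl105_3 hl105_4 ?_ h105_5 (by norm_num) (by norm_num)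
    intro x hx
    simp only [P105_3, P105_4, P105_5, eval_add, eval_sub, eval_neg, eval_mul, eval_pow, eval_C, eval_X, eval_one] at hx ⊢
    linear_combination (((336790 : ℂ) / 5181941) * x + ((2726829610961 : ℂ) / 26852512527481)) * hx
  have h105_3 : ((P105_2).roots.map fun x => (P105_3).eval x).prod = ((-207855496173314590262323312668776576308008938635264 : ℂ)) := by
    refine res_step _ _ _ ((26852512527481 : ℂ) / 1520391319328) ((871892 : ℂ) : ℂ) (5181941 : ℂ) ((-82085694476578061743810233137575932796320532321 : ℂ)) _ 8 7 hd105_2 hd105_3 hl105_2 hl105_3 ?_ h105_4 (by norm_num) (by norm_num)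
    intro x hx
    simp only [P105_2, P105_3, P105_4, eval_add, eval_sub, eval_neg, eval_mul, eval_pow, eval_C, eval_X, eval_one] at hx ⊢
    linear_combination (((5181941 : ℂ) / 1743784) * x + ((-3852368858089 : ℂ) / 1520391319328)) * hx
  have h105_2 : ((P105_1).roots.map fun x => (P105_2).eval x).prod = ((-9775824280954481974452731169387565024187300719651968 : ℂ)) := by
    refine res_step _ _ _ ((190048914916 : ℂ) / 65148989049) ((1020972 : ℂ) : ℂ) (871892 : ℂ) ((-207855496173314590262323312668776576308008938635264 : ℂ)) _ 9 8 hd105_1 hd105_2 hl105_1 hl105_2 ?_ h105_3 (by norm_num) (by norm_num)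
    intro x hx
    simp only [P105_1, P105_2, P105_3, eval_add, eval_sub, eval_neg, eval_mul, eval_pow, eval_C, eval_X, eval_one] at hx ⊢
    linear_combination (((871892 : ℂ) / 255243) * x + ((400967105269 : ℂ) / 65148989049)) * hx
  have h105_1 : (((X^10 + X^9 - X^7 - X^6 - X^5 - X^4 - X^3 + X + 1 : ℂ[X])).roots.map fun x => (P105_1).eval x).prod = ((-4239481 : ℂ)) := by
    refine res_step _ _ _ (521191912392 : ℂ) (1 : ℂ) (1020972 : ℂ) ((-9775824280954481974452731169387565024187300719651968 : ℂ)) _ 10 9 hdL hd105_1 hlL hl105_1 ?_ h105_2 (by norm_num) (by norm_num)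
    intro x hx
    simp only [P105_1, P105_2, eval_add, eval_sub, eval_neg, eval_mul, eval_pow, eval_C, eval_X, eval_one] at hx ⊢
    linear_combination ((510486 : ℂ) * x + ((-600475 : ℂ))) * hx
  rw [show (((X^10 + X^9 - X^7 - X^6 - X^5 - X^4 - X^3 + X + 1 : ℂ[X])).roots.map fun x => x ^ 105 - 1)
      = (((X^10 + X^9 - X^7 - X^6 - X^5 - X^4 - X^3 + X + 1 : ℂ[X])).roots.map fun x => (P105_1).eval x) from
    Multiset.map_congr rfl fun x hx => ?_]
  · exact h105_1
  · simp only [P105_1, eval_add, eval_sub, eval_neg, eval_mul, eval_pow, eval_C, eval_X, eval_one]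
    linear_combination pw105 x (hroot x hx)
set_option maxHeartbeats 1000000 in
private theorem hQ126 : (((X^10 + X^9 - X^7 - X^6 - X^5 - X^4 - X^3 + X + 1 : ℂ[X])).roots.map fun x => x ^ 126 - 1).prod = ((-2640625 : ℂ)) := by
  have hd126_1 : (P126_1).natDegree = 9 := by unfold P126_1; compute_degree!
  have hl126_1 : (P126_1).leadingCoeff = (30884816 : ℂ) := by
    rw [Polynomial.leadingCoeff, hd126_1]; unfold P126_1; compute_degree!
  have hd126_2 : (P126_2).natDegree = 8 := by unfold P126_2; compute_degree!
  have hl126_2 : (P126_2).leadingCoeff = (1592944 : ℂ) := by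
    rw [Polynomial.leadingCoeff, hd126_2]; unfold P126_2; compute_degree!
  have hd126_3 : (P126_3).natDegree = 7 := by unfold P126_3; compute_degree!
  have hl126_3 : (P126_3).leadingCoeff = (22464 : ℂ) := by
    rw [Polynomial.leadingCoeff, hd126_3]; unfold P126_3; compute_degree!
  have hd126_4 : (P126_4).natDegree = 6 := by unfold P126_4; compute_degree!
  have hl126_4 : (P126_4).leadingCoeff = (136 : ℂ) := by
    rw [Polynomial.leadingCoeff, hd126_4]; unfold P126_4; compute_degree!
  have hd126_5 : (P126_5).natDegree = 5 := by unfold P126_5; compute_degree!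
  have hl126_5 : (P126_5).leadingCoeff = (5920 : ℂ) := by
    rw [Polynomial.leadingCoeff, hd126_5]; unfold P126_5; compute_degree!
  have hd126_6 : (P126_6).natDegree = 4 := by unfold P126_6; compute_degree!
  have hl126_6 : (P126_6).leadingCoeff = (12263 : ℂ) := by
    rw [Polynomial.leadingCoeff, hd126_6]; unfold P126_6; compute_degree!
  have hd126_7 : (P126_7).natDegree = 3 := by unfold P126_7; compute_degree!
  have hl126_7 : (P126_7).leadingCoeff = (6857 : ℂ) := by
    rw [Polynomial.leadingCoeff, hd126_7]; unfold P126_7; compute_degree!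
  have hd126_8 : (P126_8).natDegree = 2 := by unfold P126_8; compute_degree!
  have hl126_8 : (P126_8).leadingCoeff = (29495 : ℂ) := by
    rw [Polynomial.leadingCoeff, hd126_8]; unfold P126_8; compute_degree!
  have hd126_9 : (P126_9).natDegree = 1 := by unfold P126_9; compute_degree!
  have hl126_9 : (P126_9).leadingCoeff = (19 : ℂ) := by
    rw [Polynomial.leadingCoeff, hd126_9]; unfold P126_9; compute_degree!
  have h126_10 : ((P126_9).roots.map fun x => (C (1 : ℂ)).eval x).prod = (1 : ℂ) :=
    res_const _ _ _ 1 hd126_9 (by norm_num)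
  have h126_9 : ((P126_8).roots.map fun x => (P126_9).eval x).prod = ((5899 : ℂ) / 5) := by
    refine res_step _ _ _ ((361 : ℂ) / 34798201) ((29495 : ℂ) : ℂ) (19 : ℂ) (1 : ℂ) _ 2 1 hd126_8 hd126_9 hl126_8 hl126_9 ?_ h126_10 (by norm_num) (by norm_num)
    intro x hx
    simp only [P126_8, P126_9, eval_add, eval_sub, eval_neg, eval_mul, eval_pow, eval_C, eval_X, eval_one] at hx ⊢
    linear_combination (((95 : ℂ) / 5899) * x + ((-895200 : ℂ) / 34798201)) * hx
  have h126_8 : ((P126_7).roots.map fun x => (P126_8).eval x).prod = (2034206177536 : ℂ) := by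
    refine res_step _ _ _ ((-173991005 : ℂ) / 9779837392) ((6857 : ℂ) : ℂ) (29495 : ℂ) ((5899 : ℂ) / 5) _ 3 2 hd126_7 hd126_8 hl126_7 hl126_8 ?_ h126_9 (by norm_num) (by norm_num)
    intro x hx
    simp only [P126_7, P126_8, P126_9, eval_add, eval_sub, eval_neg, eval_mul, eval_pow, eval_C, eval_X, eval_one] at hx ⊢
    linear_combination (((-5899 : ℂ) / 1426256) * x + ((-7549559 : ℂ) / 611239837)) * hx
  have h126_7 : ((P126_6).roots.map fun x => (P126_7).eval x).prod = (79784192652939008 : ℂ) := by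
    refine res_step _ _ _ ((47018449 : ℂ) / 150381169) ((12263 : ℂ) : ℂ) (6857 : ℂ) (2034206177536 : ℂ) _ 4 3 hd126_6 hd126_7 hl126_6 hl126_7 ?_ h126_8 (by norm_num) (by norm_num)
    intro x hx
    simp only [P126_6, P126_7, P126_8, eval_add, eval_sub, eval_neg, eval_mul, eval_pow, eval_C, eval_X, eval_one] at hx ⊢
    linear_combination (((6857 : ℂ) / 12263) * x + ((-197625488 : ℂ) / 150381169)) * hx
  have h126_6 : ((P126_5).roots.map fun x => (P126_6).eval x).prod = (3321188413603840000 : ℂ) := by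
    refine res_step _ _ _ ((150381169 : ℂ) / 17523200) ((5920 : ℂ) : ℂ) (12263 : ℂ) (79784192652939008 : ℂ) _ 5 4 hd126_5 hd126_6 hl126_5 hl126_6 ?_ h126_7 (by norm_num) (by norm_num)
    intro x hx
    simp only [P126_5, P126_6, P126_7, eval_add, eval_sub, eval_neg, eval_mul, eval_pow, eval_C, eval_X, eval_one] at hx ⊢
    linear_combination (((12263 : ℂ) / 2960) * x + ((-146029307 : ℂ) / 17523200)) * hx
  have h126_5 : ((P126_4).roots.map fun x => (P126_5).eval x).prod = (20454406210542809417328 : ℂ) := by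
    refine res_step _ _ _ ((4380800 : ℂ) / 101439) ((136 : ℂ) : ℂ) (5920 : ℂ) (3321188413603840000 : ℂ) _ 6 5 hd126_4 hd126_5 hl126_4 hl126_5 ?_ h126_6 (by norm_num) (by norm_num)
    intro x hx
    simp only [P126_4, P126_5, P126_6, eval_add, eval_sub, eval_neg, eval_mul, eval_pow, eval_C, eval_X, eval_one] at hx ⊢
    linear_combination (((5920 : ℂ) / 5967) * x + ((135613 : ℂ) / 101439)) * hx
  have h126_4 : ((P126_3).roots.map fun x => (P126_4).eval x).prod = ((26000000 : ℂ) / 27) := by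
    refine res_step _ _ _ ((289 : ℂ) / 40) ((22464 : ℂ) : ℂ) (136 : ℂ) (20454406210542809417328 : ℂ) _ 7 6 hd126_3 hd126_4 hl126_3 hl126_4 ?_ h126_5 (by norm_num) (by norm_num)
    intro x hx
    simp only [P126_3, P126_4, P126_5, eval_add, eval_sub, eval_neg, eval_mul, eval_pow, eval_C, eval_X, eval_one] at hx ⊢
    linear_combination (((5967 : ℂ) / 5) * x + ((93717 : ℂ) / 8)) * hx
  have h126_3 : ((P126_2).roots.map fun x => (P126_3).eval x).prod = ((256017947236883473290168358648364576734375 : ℂ) / 256) := by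
    refine res_step _ _ _ ((11232 : ℂ) / 9911994481) ((1592944 : ℂ) : ℂ) (22464 : ℂ) ((26000000 : ℂ) / 27) _ 8 7 hd126_2 hd126_3 hl126_2 hl126_3 ?_ h126_4 (by norm_num) (by norm_num)
    intro x hx
    simp only [P126_2, P126_3, P126_4, eval_add, eval_sub, eval_neg, eval_mul, eval_pow, eval_C, eval_X, eval_one] at hx ⊢
    linear_combination (((8 : ℂ) / 99559) * x + ((-5898353 : ℂ) / 9911994481)) * hx
  have h126_2 : ((P126_1).roots.map fun x => (P126_2).eval x).prod = ((508987381770963160405412161767825045636350600306965140625 : ℂ) / 16) := by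
    refine res_step _ _ _ ((9911994481 : ℂ) / 3726061950601) ((30884816 : ℂ) : ℂ) (1592944 : ℂ) ((256017947236883473290168358648364576734375 : ℂ) / 256) _ 9 8 hd126_1 hd126_2 hl126_1 hl126_2 ?_ h126_3 (by norm_num) (by norm_num)
    intro x hx
    simp only [P126_1, P126_2, P126_3, eval_add, eval_sub, eval_neg, eval_mul, eval_pow, eval_C, eval_X, eval_one] at hx ⊢
    linear_combination (((99559 : ℂ) / 1930301) * x + ((-56331317908 : ℂ) / 3726061950601)) * hx
  have h126_1 : (((X^10 + X^9 - X^7 - X^6 - X^5 - X^4 - X^3 + X + 1 : ℂ[X])).roots.map fun x => (P126_1).eval x).prod = ((-2640625 : ℂ)) := by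
    refine res_step _ _ _ ((-59616991209616 : ℂ)) (1 : ℂ) (30884816 : ℂ) ((508987381770963160405412161767825045636350600306965140625 : ℂ) / 16) _ 10 9 hdL hd126_1 hlL hl126_1 ?_ h126_2 (by norm_num) (by norm_num)
    intro x hx
    simp only [P126_1, P126_2, eval_add, eval_sub, eval_neg, eval_mul, eval_pow, eval_C, eval_X, eval_one] at hx ⊢
    linear_combination (((-1930301 : ℂ)) * x + (2270576 : ℂ)) * hx
  rw [show (((X^10 + X^9 - X^7 - X^6 - X^5 - X^4 - X^3 + X + 1 : ℂ[X])).roots.map fun x => x ^ 126 - 1)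
      = (((X^10 + X^9 - X^7 - X^6 - X^5 - X^4 - X^3 + X + 1 : ℂ[X])).roots.map fun x => (P126_1).eval x) from
    Multiset.map_congr rfl fun x hx => ?_]
  · exact h126_1
  · simp only [P126_1, eval_add, eval_sub, eval_neg, eval_mul, eval_pow, eval_C, eval_X, eval_one]
    linear_combination pw126 x (hroot x hx)
set_option maxHeartbeats 1000000 in
private theorem hQ210 : (((X^10 + X^9 - X^7 - X^6 - X^5 - X^4 - X^3 + X + 1 : ℂ[X])).roots.map fun x => x ^ 210 - 1).prod = ((-3819858395830009 : ℂ)) := by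
  have hd210_1 : (P210_1).natDegree = 9 := by unfold P210_1; compute_degree!
  have hl210_1 : (P210_1).leadingCoeff = (25862486198938 : ℂ) := by
    rw [Polynomial.leadingCoeff, hd210_1]; unfold P210_1; compute_degree!
  have hd210_2 : (P210_2).natDegree = 8 := by unfold P210_2; compute_degree!
  have hl210_2 : (P210_2).leadingCoeff = (59561201007485 : ℂ) := by
    rw [Polynomial.leadingCoeff, hd210_2]; unfold P210_2; compute_degree!
  have hd210_3 : (P210_3).natDegree = 7 := by unfold P210_3; compute_degree!
  have hl210_3 : (P210_3).leadingCoeff = (58591879813067 : ℂ) := by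
    rw [Polynomial.leadingCoeff, hd210_3]; unfold P210_3; compute_degree!
  have hd210_4 : (P210_4).natDegree = 6 := by unfold P210_4; compute_degree!
  have hl210_4 : (P210_4).leadingCoeff = (257945992548012 : ℂ) := by
    rw [Polynomial.leadingCoeff, hd210_4]; unfold P210_4; compute_degree!
  have hd210_5 : (P210_5).natDegree = 5 := by unfold P210_5; compute_degree!
  have hl210_5 : (P210_5).leadingCoeff = (2594734881608 : ℂ) := by
    rw [Polynomial.leadingCoeff, hd210_5]; unfold P210_5; compute_degree!
  have hd210_6 : (P210_6).natDegree = 4 := by unfold P210_6; compute_degree!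
  have hl210_6 : (P210_6).leadingCoeff = (18279500972335 : ℂ) := by
    rw [Polynomial.leadingCoeff, hd210_6]; unfold P210_6; compute_degree!
  have hd210_7 : (P210_7).natDegree = 3 := by unfold P210_7; compute_degree!
  have hl210_7 : (P210_7).leadingCoeff = (2691404993579616 : ℂ) := by
    rw [Polynomial.leadingCoeff, hd210_7]; unfold P210_7; compute_degree!
  have hd210_8 : (P210_8).natDegree = 2 := by unfold P210_8; compute_degree!
  have hl210_8 : (P210_8).leadingCoeff = (93823196082392 : ℂ) := by
    rw [Polynomial.leadingCoeff, hd210_8]; unfold P210_8; compute_degree!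
  have hd210_9 : (P210_9).natDegree = 1 := by unfold P210_9; compute_degree!
  have hl210_9 : (P210_9).leadingCoeff = (1853863 : ℂ) := by
    rw [Polynomial.leadingCoeff, hd210_9]; unfold P210_9; compute_degree!
  have h210_10 : ((P210_9).roots.map fun x => (C (1 : ℂ)).eval x).prod = (1 : ℂ) :=
    res_const _ _ _ 1 hd210_9 (by norm_num)
  have h210_9 : ((P210_8).roots.map fun x => (P210_9).eval x).prod = ((11727899510299 : ℂ) / 4) := by
    refine res_step _ _ _ ((3436808022769 : ℂ) / 275087253847343048014138802) ((93823196082392 : ℂ) : ℂ) (1853863 : ℂ) (1 : ℂ) _ 2 1 hd210_8 hd210_9 hl210_8 hl210_9 ?_ h210_10 (by norm_num) (by norm_num)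
    intro x hx
    simp only [P210_8, P210_9, eval_add, eval_sub, eval_neg, eval_mul, eval_pow, eval_C, eval_X, eval_one] at hx ⊢
    linear_combination (((7415452 : ℂ) / 11727899510299) * x + ((16567529003879996425 : ℂ) / 275087253847343048014138802)) * hx
  have h210_8 : ((P210_7).roots.map fun x => (P210_8).eval x).prod = ((27021248705250536976604994591594897277621921 : ℂ) / 32) := by
    refine res_step _ _ _ ((-275087253847343048014138802 : ℂ) / 437201640541147404791890303631162307) ((2691404993579616 : ℂ) : ℂ) (93823196082392 : ℂ) ((11727899510299 : ℂ) / 4) _ 3 2 hd210_7 hd210_8 hl210_7 hl210_8 ?_ h210_9 (by norm_num) (by norm_num)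
    intro x hx
    simp only [P210_7, P210_8, P210_9, eval_add, eval_sub, eval_neg, eval_mul, eval_pow, eval_C, eval_X, eval_one] at hx ⊢
    linear_combination (((-93823196082392 : ℂ) / 5198196678200098363089) * x + ((272249914344649444921413733 : ℂ) / 437201640541147404791890303631162307)) * hx
  have h210_7 : ((P210_6).roots.map fun x => (P210_7).eval x).prod = ((-114627028427178018024867601081494032417254969003825078646375 : ℂ)) := by
    refine res_step _ _ _ ((-226364401233290401318166584608 : ℂ) / 5680382648559135577400987825) ((18279500972335 : ℂ) : ℂ) (2691404993579616 : ℂ) ((27021248705250536976604994591594897277621921 : ℂ) / 32) _ 4 3 hd210_6 hd210_7 hl210_6 hl210_7 ?_ h210_8 (by norm_num) (by norm_num)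
    intro x hx
    simp only [P210_6, P210_7, P210_8, eval_add, eval_sub, eval_neg, eval_mul, eval_pow, eval_C, eval_X, eval_one] at hx ⊢
    linear_combination (((-84106406049363 : ℂ) / 310751516529695) * x + ((2239180205741179129294945981 : ℂ) / 5680382648559135577400987825)) * hx
  have h210_6 : ((P210_5).roots.map fun x => (P210_6).eval x).prod = ((-33169851069526691728428293298758773141476544246641932574982144 : ℂ) / 17) := by
    refine res_step _ _ _ ((334140155797596210435352225 : ℂ) / 46592727376008870426752) ((2594734881608 : ℂ) : ℂ) (18279500972335 : ℂ) ((-114627028427178018024867601081494032417254969003825078646375 : ℂ)) _ 5 4 hd210_5 hd210_6 hl210_5 hl210_6 ?_ h210_7 (by norm_num) (by norm_num)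
    intro x hx
    simp only [P210_5, P210_6, P210_7, eval_add, eval_sub, eval_neg, eval_mul, eval_pow, eval_C, eval_X, eval_one] at hx ⊢
    linear_combination (((310751516529695 : ℂ) / 305262927248) * x + ((-2539021158595855068762011089 : ℂ) / 46592727376008870426752)) * hx
  have h210_5 : ((P210_4).roots.map fun x => (P210_5).eval x).prod = ((-68157117502810149614539902570999793349816008394041513878445892201938232992033856914992 : ℂ)) := by
    refine res_step _ _ _ ((99009545674018849656848 : ℂ) / 4158508441973691389757822009) ((257945992548012 : ℂ) : ℂ) (2594734881608 : ℂ) ((-33169851069526691728428293298758773141476544246641932574982144 : ℂ) / 17) _ 6 5 hd210_4 hd210_5 hl210_4 hl210_5 ?_ h210_6 (by norm_num) (by norm_num)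
    intro x hx
    simp only [P210_4, P210_5, P210_6, eval_add, eval_sub, eval_neg, eval_mul, eval_pow, eval_C, eval_X, eval_one] at hx ⊢
    linear_combination (((152631463624 : ℂ) / 64486498137003) * x + ((546562752056058928288238041 : ℂ) / 4158508441973691389757822009)) * hx
  have h210_4 : ((P210_3).roots.map fun x => (P210_4).eval x).prod = ((-2414859568927414128474271677696469227746611605286217171820122930226564364329939691235468565394117515625 : ℂ)) := by
    refine res_step _ _ _ ((33268067535789531118062576072 : ℂ) / 17165041900144441134319732445) ((58591879813067 : ℂ) : ℂ) (257945992548012 : ℂ) ((-68157117502810149614539902570999793349816008394041513878445892201938232992033856914992 : ℂ)) _ 7 6 hd210_3 hd210_4 hl210_3 hl210_4 ?_ h210_5 (by norm_num) (by norm_num)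
    intro x hx
    simp only [P210_3, P210_4, P210_5, eval_add, eval_sub, eval_neg, eval_mul, eval_pow, eval_C, eval_X, eval_one] at hx ⊢
    linear_combination (((128972996274006 : ℂ) / 292959399065335) * x + ((-4153779273985781795952082009 : ℂ) / 17165041900144441134319732445)) * hx
  have h210_3 : ((P210_2).roots.map fun x => (P210_3).eval x).prod = ((-130017364384091143506044848550590955503561870314779626819291978187203057185236638398983583534086741378310817 : ℂ) / 5) := by
    refine res_step _ _ _ ((3433008380028888226863946489 : ℂ) / 141901466618161287161041009) ((59561201007485 : ℂ) : ℂ) (58591879813067 : ℂ) ((-2414859568927414128474271677696469227746611605286217171820122930226564364329939691235468565394117515625 : ℂ)) _ 8 7 hd210_2 hd210_3 hl210_2 hl210_3 ?_ h210_4 (by norm_num) (by norm_num)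
    intro x hx
    simp only [P210_2, P210_3, P210_4, eval_add, eval_sub, eval_neg, eval_mul, eval_pow, eval_C, eval_X, eval_one] at hx ⊢
    linear_combination (((292959399065335 : ℂ) / 11912240201497) * x + ((-2191614935251164791159395145 : ℂ) / 141901466618161287161041009)) * hx
  have h210_2 : ((P210_1).roots.map fun x => (P210_2).eval x).prod = ((-764556243257590606708678256219698956076047144177711145575066617814660034973341764082909606533479281055245255187447337720064 : ℂ)) := by
    refine res_step _ _ _ ((709507333090806435805205045 : ℂ) / 668868192390258519312327844) ((25862486198938 : ℂ) : ℂ) (59561201007485 : ℂ) ((-130017364384091143506044848550590955503561870314779626819291978187203057185236638398983583534086741378310817 : ℂ) / 5) _ 9 8 hd210_1 hd210_2 hl210_1 hl210_2 ?_ h210_3 (by norm_num) (by norm_num)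
    intro x hx
    simp only [P210_1, P210_2, P210_3, eval_add, eval_sub, eval_neg, eval_mul, eval_pow, eval_C, eval_X, eval_one] at hx ⊢
    linear_combination (((11912240201497 : ℂ) / 25862486198938) * x + ((630825850931101929628793063 : ℂ) / 668868192390258519312327844)) * hx
  have h210_1 : (((X^10 + X^9 - X^7 - X^6 - X^5 - X^4 - X^3 + X + 1 : ℂ[X])).roots.map fun x => (P210_1).eval x).prod = ((-3819858395830009 : ℂ)) := by
    refine res_step _ _ _ (668868192390258519312327844 : ℂ) (1 : ℂ) (25862486198938 : ℂ) ((-764556243257590606708678256219698956076047144177711145575066617814660034973341764082909606533479281055245255187447337720064 : ℂ)) _ 10 9 hdL hd210_1 hlL hl210_1 ?_ h210_2 (by norm_num) (by norm_num)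
    intro x hx
    simp only [P210_1, P210_2, eval_add, eval_sub, eval_neg, eval_mul, eval_pow, eval_C, eval_X, eval_one] at hx ⊢
    linear_combination ((25862486198938 : ℂ) * x + ((-30421546428323 : ℂ))) * hx
  rw [show (((X^10 + X^9 - X^7 - X^6 - X^5 - X^4 - X^3 + X + 1 : ℂ[X])).roots.map fun x => x ^ 210 - 1)
      = (((X^10 + X^9 - X^7 - X^6 - X^5 - X^4 - X^3 + X + 1 : ℂ[X])).roots.map fun x => (P210_1).eval x) from
    Multiset.map_congr rfl fun x hx => ?_]
  · exact h210_1
  · simp only [P210_1, eval_add, eval_sub, eval_neg, eval_mul, eval_pow, eval_C, eval_X, eval_one]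
    linear_combination pw210 x (hroot x hx)
set_option maxHeartbeats 1000000 in
private theorem hQ315 : (((X^10 + X^9 - X^7 - X^6 - X^5 - X^4 - X^3 + X + 1 : ℂ[X])).roots.map fun x => x ^ 315 - 1).prod = ((-4704473278159824154441 : ℂ)) := by
  have hd315_1 : (P315_1).natDegree = 9 := by unfold P315_1; compute_degree!
  have hl315_1 : (P315_1).leadingCoeff = (655129032415041026264 : ℂ) := by
    rw [Polynomial.leadingCoeff, hd315_1]; unfold P315_1; compute_degree!
  have hd315_2 : (P315_2).natDegree = 8 := by unfold P315_2; compute_degree!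
  have hl315_2 : (P315_2).leadingCoeff = (9085679898012875244 : ℂ) := by
    rw [Polynomial.leadingCoeff, hd315_2]; unfold P315_2; compute_degree!
  have hd315_3 : (P315_3).natDegree = 7 := by unfold P315_3; compute_degree!
  have hl315_3 : (P315_3).leadingCoeff = (33305351226816299326 : ℂ) := by
    rw [Polynomial.leadingCoeff, hd315_3]; unfold P315_3; compute_degree!
  have hd315_4 : (P315_4).natDegree = 6 := by unfold P315_4; compute_degree!
  have hl315_4 : (P315_4).leadingCoeff = (930991449816223829399 : ℂ) := by
    rw [Polynomial.leadingCoeff, hd315_4]; unfold P315_4; compute_degree!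
  have hd315_5 : (P315_5).natDegree = 5 := by unfold P315_5; compute_degree!
  have hl315_5 : (P315_5).leadingCoeff = (7208025490112709574625 : ℂ) := by
    rw [Polynomial.leadingCoeff, hd315_5]; unfold P315_5; compute_degree!
  have hd315_6 : (P315_6).natDegree = 4 := by unfold P315_6; compute_degree!
  have hl315_6 : (P315_6).leadingCoeff = (3914601403108780727832 : ℂ) := by
    rw [Polynomial.leadingCoeff, hd315_6]; unfold P315_6; compute_degree!
  have hd315_7 : (P315_7).natDegree = 3 := by unfold P315_7; compute_degree!
  have hl315_7 : (P315_7).leadingCoeff = (3967190342958049069121 : ℂ) := by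
    rw [Polynomial.leadingCoeff, hd315_7]; unfold P315_7; compute_degree!
  have hd315_8 : (P315_8).natDegree = 2 := by unfold P315_8; compute_degree!
  have hl315_8 : (P315_8).leadingCoeff = (5331756908754002058316 : ℂ) := by
    rw [Polynomial.leadingCoeff, hd315_8]; unfold P315_8; compute_degree!
  have hd315_9 : (P315_9).natDegree = 1 := by unfold P315_9; compute_degree!
  have hl315_9 : (P315_9).leadingCoeff = (31079650841 : ℂ) := by
    rw [Polynomial.leadingCoeff, hd315_9]; unfold P315_9; compute_degree!
  have h315_10 : ((P315_9).roots.map fun x => (C (1 : ℂ)).eval x).prod = (1 : ℂ) :=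
    res_const _ _ _ 1 hd315_9 (by norm_num)
  have h315_9 : ((P315_8).roots.map fun x => (P315_9).eval x).prod = (5331756908754002058316 : ℂ) := by
    refine res_step _ _ _ ((965944696398472007281 : ℂ) / 28427631734046031830713622797800764664755856) ((5331756908754002058316 : ℂ) : ℂ) (31079650841 : ℂ) (1 : ℂ) _ 2 1 hd315_8 hd315_9 hl315_8 hl315_9 ?_ h315_10 (by norm_num) (by norm_num)
    intro x hx
    simp only [P315_8, P315_9, eval_add, eval_sub, eval_neg, eval_mul, eval_pow, eval_C, eval_X, eval_one] at hx ⊢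
    linear_combination (((31079650841 : ℂ) / 5331756908754002058316) * x + ((-367016002486990877963431525215471 : ℂ) / 28427631734046031830713622797800764664755856)) * hx
  have h315_8 : ((P315_7).roots.map fun x => (P315_8).eval x).prod = (74041819453264926982738650848803124388516764487842947089279988681 : ℂ) := by
    refine res_step _ _ _ ((-28427631734046031830713622797800764664755856 : ℂ) / 1079497346773780739458623316010347203460320047359517539) ((3967190342958049069121 : ℂ) : ℂ) (5331756908754002058316 : ℂ) (5331756908754002058316 : ℂ) _ 3 2 hd315_7 hd315_8 hl315_7 hl315_8 ?_ h315_9 (by norm_num) (by norm_num)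
    intro x hx
    simp only [P315_7, P315_8, P315_9, eval_add, eval_sub, eval_neg, eval_mul, eval_pow, eval_C, eval_X, eval_one] at hx ⊢
    linear_combination (((-5331756908754002058316 : ℂ) / 272106265001864532561819505271459) * x + ((-35426145256866600270829459099132470996920579 : ℂ) / 1079497346773780739458623316010347203460320047359517539)) * hx
  have h315_7 : ((P315_6).roots.map fun x => (P315_7).eval x).prod = (282210811999683186491211128117725243705853122923418186080057413864521833227924753868288 : ℂ) := by
    refine res_step _ _ _ ((15738599217259602993275701277607614635712641 : ℂ) / 15324104145221234788592849943339659659420224) ((3914601403108780727832 : ℂ) : ℂ) (3967190342958049069121 : ℂ) (74041819453264926982738650848803124388516764487842947089279988681 : ℂ) _ 4 3 hd315_6 hd315_7 hl315_6 hl315_7 ?_ h315_8 (by norm_num) (by norm_num)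
    intro x hx
    simp only [P315_6, P315_7, P315_8, eval_add, eval_sub, eval_neg, eval_mul, eval_pow, eval_C, eval_X, eval_one] at hx ⊢
    linear_combination (((3967190342958049069121 : ℂ) / 3914601403108780727832) * x + ((-32812924824415979098457660127911614232051 : ℂ) / 15324104145221234788592849943339659659420224)) * hx
  have h315_6 : ((P315_5).roots.map fun x => (P315_6).eval x).prod = (12699197024680331974215190098910013694185582694148218376527697425716400948058966736531642265765147685791015625 : ℂ) := by
    refine res_step _ _ _ ((15324104145221234788592849943339659659420224 : ℂ) / 51955631466114567073740817830712148443890625) ((7208025490112709574625 : ℂ) : ℂ) (3914601403108780727832 : ℂ) (282210811999683186491211128117725243705853122923418186080057413864521833227924753868288 : ℂ) _ 5 4 hd315_5 hd315_6 hl315_5 hl315_6 ?_ h315_7 (by norm_num) (by norm_num)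
    intro x hx
    simp only [P315_5, P315_6, P315_7, eval_add, eval_sub, eval_neg, eval_mul, eval_pow, eval_C, eval_X, eval_one] at hx ⊢
    linear_combination (((3914601403108780727832 : ℂ) / 7208025490112709574625) * x + ((-50176873119433185437940562256661592502671813 : ℂ) / 51955631466114567073740817830712148443890625)) * hx
  have h315_5 : ((P315_4).roots.map fun x => (P315_5).eval x).prod = ((-107817536200119617434930155796181172464650843481984044396992936116356979493446487779411382739810151397311752530364007617988937613312 : ℂ)) := by
    refine res_step _ _ _ ((-51955631466114567073740817830712148443890625 : ℂ) / 6933960637047315303577831663846142853609608) ((930991449816223829399 : ℂ) : ℂ) (7208025490112709574625 : ℂ) (12699197024680331974215190098910013694185582694148218376527697425716400948058966736531642265765147685791015625 : ℂ) _ 6 5 hd315_4 hd315_5 hl315_4 hl315_5 ?_ h315_6 (by norm_num) (by norm_num)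
    intro x hx
    simp only [P315_4, P315_5, P315_6, eval_add, eval_sub, eval_neg, eval_mul, eval_pow, eval_C, eval_X, eval_one] at hx ⊢
    linear_combination (((-7208025490112709574625 : ℂ) / 7447931598529790635192) * x + ((-645446245599531827284104068849315042687827 : ℂ) / 866745079630914412947228957980767856701201)) * hx
  have h315_4 : ((P315_3).roots.map fun x => (P315_4).eval x).prod = ((-37446620464261543595902201561057381978442683412070580507488512536868785751900737625084386961446280238387040100440198843496689158178414539981312 : ℂ)) := by
    refine res_step _ _ _ ((866745079630914412947228957980767856701201 : ℂ) / 831934815256195480944465368956221040707) ((33305351226816299326 : ℂ) : ℂ) (930991449816223829399 : ℂ) ((-107817536200119617434930155796181172464650843481984044396992936116356979493446487779411382739810151397311752530364007617988937613312 : ℂ)) _ 7 6 hd315_3 hd315_4 hl315_3 hl315_4 ?_ h315_5 (by norm_num) (by norm_num)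
    intro x hx
    simp only [P315_3, P315_4, P315_5, eval_add, eval_sub, eval_neg, eval_mul, eval_pow, eval_C, eval_X, eval_one] at hx ⊢
    linear_combination (((1861982899632447658798 : ℂ) / 49958026840224448989) * x + ((-52449384926653832958968892479909312625046 : ℂ) / 831934815256195480944465368956221040707)) * hx
  have h315_3 : ((P315_2).roots.map fun x => (P315_3).eval x).prod = ((-2202808500422516822184132001141638244721556383369058729621433820197373709950818351867572676337127534517889421079145045059009613640549808531658048241043324552 : ℂ) / 3) := by
    refine res_step _ _ _ ((277311605085398493648155122985407013569 : ℂ) / 9745436434414161587626060777294701473) ((9085679898012875244 : ℂ) : ℂ) (33305351226816299326 : ℂ) ((-37446620464261543595902201561057381978442683412070580507488512536868785751900737625084386961446280238387040100440198843496689158178414539981312 : ℂ)) _ 8 7 hd315_2 hd315_3 hl315_2 hl315_3 ?_ h315_4 (by norm_num) (by norm_num)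
    intro x hx
    simp only [P315_2, P315_3, P315_4, eval_add, eval_sub, eval_neg, eval_mul, eval_pow, eval_C, eval_X, eval_one] at hx ⊢
    linear_combination (((99916053680448897978 : ℂ) / 12871379855518239929) * x + ((119582424535572285560470663272960447402 : ℂ) / 9745436434414161587626060777294701473)) * hx
  have h315_2 : ((P315_1).roots.map fun x => (P315_2).eval x).prod = ((-1364000426134995014906425669993281481025037084556244382422748034933100905309011420981342464622017524298493420524840427299197194537591525333995396780034263802393378963267241 : ℂ) / 136) := by
    refine res_step _ _ _ ((1719782900190734397816363666581417907 : ℂ) / 23204695561908946568203981746230230201) ((655129032415041026264 : ℂ) : ℂ) (9085679898012875244 : ℂ) ((-2202808500422516822184132001141638244721556383369058729621433820197373709950818351867572676337127534517889421079145045059009613640549808531658048241043324552 : ℂ) / 3) _ 9 8 hd315_1 hd315_2 hl315_1 hl315_2 ?_ h315_3 (by norm_num) (by norm_num)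
    intro x hx
    simp only [P315_1, P315_2, P315_3, eval_add, eval_sub, eval_neg, eval_mul, eval_pow, eval_C, eval_X, eval_one] at hx ⊢
    linear_combination (((25742759711036479858 : ℂ) / 4817125238345889899) * x + ((207306437108511216114266337970999737614 : ℂ) / 23204695561908946568203981746230230201)) * hx
  have h315_1 : (((X^10 + X^9 - X^7 - X^6 - X^5 - X^4 - X^3 + X + 1 : ℂ[X])).roots.map fun x => (P315_1).eval x).prod = ((-4704473278159824154441 : ℂ)) := by
    refine res_step _ _ _ (3155838596419616733275741517487311307336 : ℂ) (1 : ℂ) (655129032415041026264 : ℂ) ((-1364000426134995014906425669993281481025037084556244382422748034933100905309011420981342464622017524298493420524840427299197194537591525333995396780034263802393378963267241 : ℂ) / 136) _ 10 9 hdL hd315_1 hlL hl315_1 ?_ h315_2 (by norm_num) (by norm_num)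
    intro x hx
    simp only [P315_1, P315_2, eval_add, eval_sub, eval_neg, eval_mul, eval_pow, eval_C, eval_X, eval_one] at hx ⊢
    linear_combination ((4817125238345889899 : ℂ) * x + ((-5666292017022003518 : ℂ))) * hx
  rw [show (((X^10 + X^9 - X^7 - X^6 - X^5 - X^4 - X^3 + X + 1 : ℂ[X])).roots.map fun x => x ^ 315 - 1)
      = (((X^10 + X^9 - X^7 - X^6 - X^5 - X^4 - X^3 + X + 1 : ℂ[X])).roots.map fun x => (P315_1).eval x) from
    Multiset.map_congr rfl fun x hx => ?_]
  · exact h315_1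
  · simp only [P315_1, eval_add, eval_sub, eval_neg, eval_mul, eval_pow, eval_C, eval_X, eval_one]
    linear_combination pw315 x (hroot x hx)
set_option maxHeartbeats 1000000 in
private theorem hQ630 : (((X^10 + X^9 - X^7 - X^6 - X^5 - X^4 - X^3 + X + 1 : ℂ[X])).roots.map fun x => x ^ 630 - 1).prod = ((-33903362894257980738488599137070968994140625 : ℂ)) := by
  have hd630_1 : (P630_1).natDegree = 9 := by unfold P630_1; compute_degree!
  have hl630_1 : (P630_1).leadingCoeff = (10648699402510886229334132989629606002223831 : ℂ) := by
    rw [Polynomial.leadingCoeff, hd630_1]; unfold P630_1; compute_degree!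
  have hd630_2 : (P630_2).natDegree = 8 := by unfold P630_2; compute_degree!
  have hl630_2 : (P630_2).leadingCoeff = (28814166879975559291049040304062144167956015 : ℂ) := by
    rw [Polynomial.leadingCoeff, hd630_2]; unfold P630_2; compute_degree!
  have hd630_3 : (P630_3).natDegree = 7 := by unfold P630_3; compute_degree!
  have hl630_3 : (P630_3).leadingCoeff = (10138761289754509163400653791294987859432721 : ℂ) := by
    rw [Polynomial.leadingCoeff, hd630_3]; unfold P630_3; compute_degree!
  have hd630_4 : (P630_4).natDegree = 6 := by unfold P630_4; compute_degree!
  have hl630_4 : (P630_4).leadingCoeff = (3558813844013272046057047260638264946371552 : ℂ) := by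
    rw [Polynomial.leadingCoeff, hd630_4]; unfold P630_4; compute_degree!
  have hd630_5 : (P630_5).natDegree = 5 := by unfold P630_5; compute_degree!
  have hl630_5 : (P630_5).leadingCoeff = (227031140059125053617325535635985291531705 : ℂ) := by
    rw [Polynomial.leadingCoeff, hd630_5]; unfold P630_5; compute_degree!
  have hd630_6 : (P630_6).natDegree = 4 := by unfold P630_6; compute_degree!
  have hl630_6 : (P630_6).leadingCoeff = (3640169712318783053349877956190497334371 : ℂ) := by
    rw [Polynomial.leadingCoeff, hd630_6]; unfold P630_6; compute_degree!
  have hd630_7 : (P630_7).natDegree = 3 := by unfold P630_7; compute_degree!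
  have hl630_7 : (P630_7).leadingCoeff = (251394060956804148735817534941840031781 : ℂ) := by
    rw [Polynomial.leadingCoeff, hd630_7]; unfold P630_7; compute_degree!
  have hd630_8 : (P630_8).natDegree = 2 := by unfold P630_8; compute_degree!
  have hl630_8 : (P630_8).leadingCoeff = (61829236598379014270829828188872393090 : ℂ) := by
    rw [Polynomial.leadingCoeff, hd630_8]; unfold P630_8; compute_degree!
  have hd630_9 : (P630_9).natDegree = 1 := by unfold P630_9; compute_degree!
  have hl630_9 : (P630_9).leadingCoeff = (792900597110923453 : ℂ) := by
    rw [Polynomial.leadingCoeff, hd630_9]; unfold P630_9; compute_degree!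
  have h630_10 : ((P630_9).roots.map fun x => (C (1 : ℂ)).eval x).prod = (1 : ℂ) :=
    res_const _ _ _ 1 hd630_9 (by norm_num)
  have h630_9 : ((P630_8).roots.map fun x => (P630_9).eval x).prod = ((12365847319675802854165965637774478618 : ℂ) / 5) := by
    refine res_step _ _ _ ((628691356898858953222306894425443209 : ℂ) / 152914179933533237586178217823538188509411640593734640987958316461739189924) ((61829236598379014270829828188872393090 : ℂ) : ℂ) (792900597110923453 : ℂ) (1 : ℂ) _ 2 1 hd630_8 hd630_9 hl630_8 hl630_9 ?_ h630_10 (by norm_num) (by norm_num)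
    intro x hx
    simp only [P630_8, P630_9, eval_add, eval_sub, eval_neg, eval_mul, eval_pow, eval_C, eval_X, eval_one] at hx ⊢
    linear_combination (((3964502985554617265 : ℂ) / 12365847319675802854165965637774478618) * x + ((-100771827076884043698923021336359292699954686052181901825 : ℂ) / 152914179933533237586178217823538188509411640593734640987958316461739189924)) * hx
  have h630_8 : ((P630_7).roots.map fun x => (P630_8).eval x).prod = (78986935153924849071603739091608076478813930085272064515282972483463031510808848008198531196320769358635614048161 : ℂ) := by
    refine res_step _ _ _ ((764570899667666187930891089117690942547058202968673204939791582308695949620 : ℂ) / 70653331499639908241537499882028069941449494823908232934611526601946812692264256844114059371189) ((251394060956804148735817534941840031781 : ℂ) : ℂ) (61829236598379014270829828188872393090 : ℂ) ((12365847319675802854165965637774478618 : ℂ) / 5) _ 3 2 hd630_7 hd630_8 hl630_7 hl630_8 ?_ h630_9 (by norm_num) (by norm_num)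
    intro x hx
    simp only [P630_7, P630_8, P630_9, eval_add, eval_sub, eval_neg, eval_mul, eval_pow, eval_C, eval_X, eval_one] at hx ⊢
    linear_combination (((12365847319675802854165965637774478618 : ℂ) / 281046144171957728482541071096732000957478069101362924369) * x + ((-436614706933393926146128066304544309429092047982530229281833903506257826171 : ℂ) / 70653331499639908241537499882028069941449494823908232934611526601946812692264256844114059371189)) * hx
  have h630_7 : ((P630_6).roots.map fun x => (P630_7).eval x).prod = (2232782229683207141296338996519005383824918810105263152538413916141227420195095171392778100684829945913699043623360477998947389831537764384093896219471593 : ℂ) := by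
    refine res_step _ _ _ ((63198973884353360066556254094514502668311648768911231278216741573235090031961 : ℂ) / 4416945178161003925035944795048431244271376702070112667102879095251485525988547) ((3640169712318783053349877956190497334371 : ℂ) : ℂ) (251394060956804148735817534941840031781 : ℂ) (78986935153924849071603739091608076478813930085272064515282972483463031510808848008198531196320769358635614048161 : ℂ) _ 4 3 hd630_6 hd630_7 hl630_6 hl630_7 ?_ h630_8 (by norm_num) (by norm_num)
    intro x hx
    simp only [P630_6, P630_7, P630_8, eval_add, eval_sub, eval_neg, eval_mul, eval_pow, eval_C, eval_X, eval_one] at hx ⊢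
    linear_combination (((251394060956804148735817534941840031781 : ℂ) / 1213389904106261017783292652063499111457) * x + ((201542416534739197144426116595548264728714842708427280197992071766877897867942 : ℂ) / 4416945178161003925035944795048431244271376702070112667102879095251485525988547)) * hx
  have h630_6 : ((P630_5).roots.map fun x => (P630_6).eval x).prod = ((4554696333256168483647574883099365641236820732965417508748372340695053104302658245577869699539974211464415823286182872911616808892130292511540284059985563486899786694135650428680584559172416823380625 : ℂ) / 3) := by
    refine res_step _ _ _ ((-4416945178161003925035944795048431244271376702070112667102879095251485525988547 : ℂ) / 5727015395171784072677872464260927880655946630413462745454312024335311065002245225) ((227031140059125053617325535635985291531705 : ℂ) : ℂ) (3640169712318783053349877956190497334371 : ℂ) (2232782229683207141296338996519005383824918810105263152538413916141227420195095171392778100684829945913699043623360477998947389831537764384093896219471593 : ℂ) _ 5 4 hd630_5 hd630_6 hl630_5 hl630_6 ?_ h630_7 (by norm_num) (by norm_num)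
    intro x hx
    simp only [P630_5, P630_6, P630_7, eval_add, eval_sub, eval_neg, eval_mul, eval_pow, eval_C, eval_X, eval_one] at hx ⊢
    linear_combination (((-3640169712318783053349877956190497334371 : ℂ) / 75677046686375017872441845211995097177235) * x + ((-134979024251236169370912496388439371541386252408362066768469543790881069005617776 : ℂ) / 5727015395171784072677872464260927880655946630413462745454312024335311065002245225)) * hx
  have h630_5 : ((P630_4).roots.map fun x => (P630_5).eval x).prod = ((-79273691617934158180193168135632893619963450230882590844662041440966825135245597304769193608720577678141787141114377738056829057966126886138944753121499206788810938695425775131895851441019195401458891132723112773964228447636434913092789904812802048 : ℂ)) := by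
    refine res_step _ _ _ ((-17181046185515352218033617392782783641967839891240388236362936073005933195006735675 : ℂ) / 12665155976340521818492226957050007518311978124134967675567254108861720150570434888704) ((3558813844013272046057047260638264946371552 : ℂ) : ℂ) (227031140059125053617325535635985291531705 : ℂ) ((4554696333256168483647574883099365641236820732965417508748372340695053104302658245577869699539974211464415823286182872911616808892130292511540284059985563486899786694135650428680584559172416823380625 : ℂ) / 3) _ 6 5 hd630_4 hd630_5 hl630_4 hl630_5 ?_ h630_6 (by norm_num) (by norm_num)
    intro x hx
    simp only [P630_4, P630_5, P630_6, eval_add, eval_sub, eval_neg, eval_mul, eval_pow, eval_C, eval_X, eval_one] at hx ⊢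
    linear_combination (((-75677046686375017872441845211995097177235 : ℂ) / 3558813844013272046057047260638264946371552) * x + ((172172455301268155614933468133206317261740319565519589516462916625290077861637250237 : ℂ) / 12665155976340521818492226957050007518311978124134967675567254108861720150570434888704)) * hx
  have h630_4 : ((P630_3).roots.map fun x => (P630_4).eval x).prod = ((-36825797974597277089317227562726123926252887138851195759247042151986489400667819893040443750842961636409022246967221495731843952270427444859575441752896115261576755802174559908970283529860782958546582172122451642969225670120257631406058744085753236733798197969384902614879132096532971184582804931640625 : ℂ)) := by
    refine res_step _ _ _ ((12665155976340521818492226957050007518311978124134967675567254108861720150570434888704 : ℂ) / 2569862012265612952943348314765024266512223244044631841062336334835083019096398136596025) ((10138761289754509163400653791294987859432721 : ℂ) : ℂ) (3558813844013272046057047260638264946371552 : ℂ) ((-79273691617934158180193168135632893619963450230882590844662041440966825135245597304769193608720577678141787141114377738056829057966126886138944753121499206788810938695425775131895851441019195401458891132723112773964228447636434913092789904812802048 : ℂ)) _ 7 6 hd630_3 hd630_4 hl630_3 hl630_4 ?_ h630_5 (by norm_num) (by norm_num)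
    intro x hx
    simp only [P630_3, P630_4, P630_5, eval_add, eval_sub, eval_neg, eval_mul, eval_pow, eval_C, eval_X, eval_one] at hx ⊢
    linear_combination (((3558813844013272046057047260638264946371552 : ℂ) / 253469032243862729085016344782374696485818025) * x + ((64730543445328956740640711380960636862303409636054867385886231813779132518163918228063 : ℂ) / 2569862012265612952943348314765024266512223244044631841062336334835083019096398136596025)) * hx
  have h630_3 : ((P630_2).roots.map fun x => (P630_3).eval x).prod = (559094536033567474078209236082669974891865865208637159760617532085378955109412083390037499642124997260558626005117975508058065341366332555477474767707220968024555850677040603093182557447277487303015821234130649836906538852132117246774668636171925922908907093263710804694504625272774710948092337020743341891880823100759566361510649323329925537109375 : ℂ) := by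
    refine res_step _ _ _ ((-102794480490624518117733932590600970660488929761785273642493453393403320763855925463841 : ℂ) / 830256212987080457067243672518439153413607425603938787378951371966068065401542974680225) ((28814166879975559291049040304062144167956015 : ℂ) : ℂ) (10138761289754509163400653791294987859432721 : ℂ) ((-36825797974597277089317227562726123926252887138851195759247042151986489400667819893040443750842961636409022246967221495731843952270427444859575441752896115261576755802174559908970283529860782958546582172122451642969225670120257631406058744085753236733798197969384902614879132096532971184582804931640625 : ℂ)) _ 8 7 hd630_2 hd630_3 hl630_2 hl630_3 ?_ h630_4 (by norm_num) (by norm_num)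
    intro x hx
    simp only [P630_2, P630_3, P630_4, eval_add, eval_sub, eval_neg, eval_mul, eval_pow, eval_C, eval_X, eval_one] at hx ⊢
    linear_combination (((-10138761289754509163400653791294987859432721 : ℂ) / 28814166879975559291049040304062144167956015) * x + ((37614107028478459969876693140299832928768470009354847920663199598962883147227030940944 : ℂ) / 830256212987080457067243672518439153413607425603938787378951371966068065401542974680225)) * hx
  have h630_2 : ((P630_1).roots.map fun x => (P630_2).eval x).prod = (5605512428937444393715699543726124498106434881237942487142950480729297181837290322842826680992928841779523809441446868151000025874949123953011638126630850820157660366215280108457608305841936756017320374044226197068224970282032045899621336979881500578974795271689953557818562521896100799025245641702536779426521038570514255752676371873403165234326703051476282879691516018493359484619140625 : ℂ) := by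
    refine res_step _ _ _ ((830256212987080457067243672518439153413607425603938787378951371966068065401542974680225 : ℂ) / 113394798965035705373861838389037763601977415568920739659273780316157992686117424316561) ((10648699402510886229334132989629606002223831 : ℂ) : ℂ) (28814166879975559291049040304062144167956015 : ℂ) (559094536033567474078209236082669974891865865208637159760617532085378955109412083390037499642124997260558626005117975508058065341366332555477474767707220968024555850677040603093182557447277487303015821234130649836906538852132117246774668636171925922908907093263710804694504625272774710948092337020743341891880823100759566361510649323329925537109375 : ℂ) _ 9 8 hd630_1 hd630_2 hl630_1 hl630_2 ?_ h630_3 (by norm_num) (by norm_num)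
    intro x hx
    simp only [P630_1, P630_2, P630_3, eval_add, eval_sub, eval_neg, eval_mul, eval_pow, eval_C, eval_X, eval_one] at hx ⊢
    linear_combination (((28814166879975559291049040304062144167956015 : ℂ) / 10648699402510886229334132989629606002223831) * x + ((116421245880595658699706716615788177293118634056083203496303154614703483306195089104679 : ℂ) / 113394798965035705373861838389037763601977415568920739659273780316157992686117424316561)) * hx
  have h630_1 : (((X^10 + X^9 - X^7 - X^6 - X^5 - X^4 - X^3 + X + 1 : ℂ[X])).roots.map fun x => (P630_1).eval x).prod = ((-33903362894257980738488599137070968994140625 : ℂ)) := by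
    refine res_step _ _ _ ((-113394798965035705373861838389037763601977415568920739659273780316157992686117424316561 : ℂ)) (1 : ℂ) (10648699402510886229334132989629606002223831 : ℂ) (5605512428937444393715699543726124498106434881237942487142950480729297181837290322842826680992928841779523809441446868151000025874949123953011638126630850820157660366215280108457608305841936756017320374044226197068224970282032045899621336979881500578974795271689953557818562521896100799025245641702536779426521038570514255752676371873403165234326703051476282879691516018493359484619140625 : ℂ) _ 10 9 hdL hd630_1 hlL hl630_1 ?_ h630_2 (by norm_num) (by norm_num)
    intro x hx
    simp only [P630_1, P630_2, eval_add, eval_sub, eval_neg, eval_mul, eval_pow, eval_C, eval_X, eval_one] at hx ⊢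
    linear_combination (((-10648699402510886229334132989629606002223831 : ℂ)) * x + (12525860846589399904384050723172923033211969 : ℂ)) * hx
  rw [show (((X^10 + X^9 - X^7 - X^6 - X^5 - X^4 - X^3 + X + 1 : ℂ[X])).roots.map fun x => x ^ 630 - 1)
      = (((X^10 + X^9 - X^7 - X^6 - X^5 - X^4 - X^3 + X + 1 : ℂ[X])).roots.map fun x => (P630_1).eval x) from
    Multiset.map_congr rfl fun x hx => ?_]
  · exact h630_1
  · simp only [P630_1, eval_add, eval_sub, eval_neg, eval_mul, eval_pow, eval_C, eval_X, eval_one]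
    linear_combination pw630 x (hroot x hx)
private theorem hXd : ∀ d : ℕ, 0 < d → ((X : ℂ[X]) ^ d - 1)
    = (Multiset.map (fun i => cyclotomic i ℂ) (Nat.divisors d).val).prod := by
  intro d hd
  rw [← prod_cyclotomic_eq_X_pow_sub_one hd ℂ, Finset.prod_eq_multiset_prod]
set_option maxRecDepth 40000 in
private theorem hPHI630 : cyclotomic 630 ℂ * ((X ^ 315 - 1)*(X ^ 210 - 1)*(X ^ 126 - 1)*(X ^ 90 - 1)*(X ^ 21 - 1)*(X ^ 15 - 1)*(X ^ 9 - 1)*(X ^ 6 - 1)) = (X ^ 630 - 1)*(X ^ 105 - 1)*(X ^ 63 - 1)*(X ^ 45 - 1)*(X ^ 42 - 1)*(X ^ 30 - 1)*(X ^ 18 - 1)*(X ^ 3 - 1) := by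
  rw [hXd 630 (by norm_num), hXd 315 (by norm_num), hXd 210 (by norm_num), hXd 126 (by norm_num), hXd 105 (by norm_num), hXd 90 (by norm_num), hXd 63 (by norm_num), hXd 45 (by norm_num), hXd 42 (by norm_num), hXd 30 (by norm_num), hXd 21 (by norm_num), hXd 18 (by norm_num), hXd 15 (by norm_num), hXd 9 (by norm_num), hXd 6 (by norm_num), hXd 3 (by norm_num)]
  have hm : ({630} : Multiset ℕ) + ((Nat.divisors 315).val + (Nat.divisors 210).val + (Nat.divisors 126).val + (Nat.divisors 90).val + (Nat.divisors 21).val + (Nat.divisors 15).val + (Nat.divisors 9).val + (Nat.divisors 6).val) = (Nat.divisors 630).val + (Nat.divisors 105).val + (Nat.divisors 63).val + (Nat.divisors 45).val + (Nat.divisors 42).val + (Nat.divisors 30).val + (Nat.divisors 18).val + (Nat.divisors 3).val := by decide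
  calc cyclotomic 630 ℂ * ((Multiset.map (fun i => cyclotomic i ℂ) (Nat.divisors 315).val).prod*(Multiset.map (fun i => cyclotomic i ℂ) (Nat.divisors 210).val).prod*(Multiset.map (fun i => cyclotomic i ℂ) (Nat.divisors 126).val).prod*(Multiset.map (fun i => cyclotomic i ℂ) (Nat.divisors 90).val).prod*(Multiset.map (fun i => cyclotomic i ℂ) (Nat.divisors 21).val).prod*(Multiset.map (fun i => cyclotomic i ℂ) (Nat.divisors 15).val).prod*(Multiset.map (fun i => cyclotomic i ℂ) (Nat.divisors 9).val).prod*(Multiset.map (fun i => cyclotomic i ℂ) (Nat.divisors 6).val).prod)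
      = (Multiset.map (fun i => cyclotomic i ℂ) (({630} : Multiset ℕ) + ((Nat.divisors 315).val + (Nat.divisors 210).val + (Nat.divisors 126).val + (Nat.divisors 90).val + (Nat.divisors 21).val + (Nat.divisors 15).val + (Nat.divisors 9).val + (Nat.divisors 6).val))).prod := by
        simp only [Multiset.map_add, Multiset.prod_add, Multiset.map_singleton,
          Multiset.prod_singleton]
    _ = (Multiset.map (fun i => cyclotomic i ℂ) ((Nat.divisors 630).val + (Nat.divisors 105).val + (Nat.divisors 63).val + (Nat.divisors 45).val + (Nat.divisors 42).val + (Nat.divisors 30).val + (Nat.divisors 18).val + (Nat.divisors 3).val)).prod := by rw [hm]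
    _ = (Multiset.map (fun i => cyclotomic i ℂ) (Nat.divisors 630).val).prod*(Multiset.map (fun i => cyclotomic i ℂ) (Nat.divisors 105).val).prod*(Multiset.map (fun i => cyclotomic i ℂ) (Nat.divisors 63).val).prod*(Multiset.map (fun i => cyclotomic i ℂ) (Nat.divisors 45).val).prod*(Multiset.map (fun i => cyclotomic i ℂ) (Nat.divisors 42).val).prod*(Multiset.map (fun i => cyclotomic i ℂ) (Nat.divisors 30).val).prod*(Multiset.map (fun i => cyclotomic i ℂ) (Nat.divisors 18).val).prod*(Multiset.map (fun i => cyclotomic i ℂ) (Nat.divisors 3).val).prod := by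
        simp only [Multiset.map_add, Multiset.prod_add]
set_option maxRecDepth 40000 in
private theorem hPHI126 : cyclotomic 126 ℂ * ((X ^ 63 - 1)*(X ^ 42 - 1)*(X ^ 18 - 1)*(X ^ 3 - 1)) = (X ^ 126 - 1)*(X ^ 21 - 1)*(X ^ 9 - 1)*(X ^ 6 - 1) := by
  rw [hXd 126 (by norm_num), hXd 63 (by norm_num), hXd 42 (by norm_num), hXd 21 (by norm_num), hXd 18 (by norm_num), hXd 9 (by norm_num), hXd 6 (by norm_num), hXd 3 (by norm_num)]
  have hm : ({126} : Multiset ℕ) + ((Nat.divisors 63).val + (Nat.divisors 42).val + (Nat.divisors 18).val + (Nat.divisors 3).val) = (Nat.divisors 126).val + (Nat.divisors 21).val + (Nat.divisors 9).val + (Nat.divisors 6).val := by decide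
  calc cyclotomic 126 ℂ * ((Multiset.map (fun i => cyclotomic i ℂ) (Nat.divisors 63).val).prod*(Multiset.map (fun i => cyclotomic i ℂ) (Nat.divisors 42).val).prod*(Multiset.map (fun i => cyclotomic i ℂ) (Nat.divisors 18).val).prod*(Multiset.map (fun i => cyclotomic i ℂ) (Nat.divisors 3).val).prod)
      = (Multiset.map (fun i => cyclotomic i ℂ) (({126} : Multiset ℕ) + ((Nat.divisors 63).val + (Nat.divisors 42).val + (Nat.divisors 18).val + (Nat.divisors 3).val))).prod := by
        simp only [Multiset.map_add, Multiset.prod_add, Multiset.map_singleton,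
          Multiset.prod_singleton]
    _ = (Multiset.map (fun i => cyclotomic i ℂ) ((Nat.divisors 126).val + (Nat.divisors 21).val + (Nat.divisors 9).val + (Nat.divisors 6).val)).prod := by rw [hm]
    _ = (Multiset.map (fun i => cyclotomic i ℂ) (Nat.divisors 126).val).prod*(Multiset.map (fun i => cyclotomic i ℂ) (Nat.divisors 21).val).prod*(Multiset.map (fun i => cyclotomic i ℂ) (Nat.divisors 9).val).prod*(Multiset.map (fun i => cyclotomic i ℂ) (Nat.divisors 6).val).prod := by
        simp only [Multiset.map_add, Multiset.prod_add]

/-- Let `x_1, …, x_10` be the complex roots (with multiplicity) of Lehmer's polynomial.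
Then the cyclotomic norms `N₆₃₀ = ∏ Φ₆₃₀(x_r)` and `N₁₂₆ = ∏ Φ₁₂₆(x_r)` both equal `5^6`. -/
theorem lehmer_cyclotomic_norms (L : Polynomial ℂ)
    (hL : L = X^10 + X^9 - X^7 - X^6 - X^5 - X^4 - X^3 + X + 1) :
    L.roots.card = 10 ∧
    (L.roots.map fun x => (Polynomial.cyclotomic 630 ℂ).eval x).prod = 5^6 ∧
    (L.roots.map fun x => (Polynomial.cyclotomic 126 ℂ).eval x).prod = 5^6 := by
  subst hL
  refine ⟨by rw [card_roots_cx, hdL], ?_, ?_⟩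
  · have key : ((X^10 + X^9 - X^7 - X^6 - X^5 - X^4 - X^3 + X + 1 : ℂ[X]).roots.map
        fun x => (cyclotomic 630 ℂ).eval x * ((x ^ 315 - 1)*(x ^ 210 - 1)*(x ^ 126 - 1)*(x ^ 90 - 1)*(x ^ 21 - 1)*(x ^ 15 - 1)*(x ^ 9 - 1)*(x ^ 6 - 1))).prod
        = ((X^10 + X^9 - X^7 - X^6 - X^5 - X^4 - X^3 + X + 1 : ℂ[X]).roots.map
        fun x => (x ^ 630 - 1)*(x ^ 105 - 1)*(x ^ 63 - 1)*(x ^ 45 - 1)*(x ^ 42 - 1)*(x ^ 30 - 1)*(x ^ 18 - 1)*(x ^ 3 - 1)).prod := by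
      refine congrArg Multiset.prod (Multiset.map_congr rfl fun x _ => ?_)
      have h := congrArg (eval x) hPHI630
      simpa only [eval_mul, eval_sub, eval_pow, eval_X, eval_one] using h
    simp only [Multiset.prod_map_mul] at key
    rw [hQ630, hQ315, hQ210, hQ126, hQ105, hQ90, hQ63, hQ45, hQ42, hQ30, hQ21, hQ18, hQ15, hQ9, hQ6, hQ3] at key
    linear_combination ((1 : ℂ) / 1099547870265674353373856281169358815798248551968765625) * key
  · have key : ((X^10 + X^9 - X^7 - X^6 - X^5 - X^4 - X^3 + X + 1 : ℂ[X]).roots.map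
        fun x => (cyclotomic 126 ℂ).eval x * ((x ^ 63 - 1)*(x ^ 42 - 1)*(x ^ 18 - 1)*(x ^ 3 - 1))).prod
        = ((X^10 + X^9 - X^7 - X^6 - X^5 - X^4 - X^3 + X + 1 : ℂ[X]).roots.map
        fun x => (x ^ 126 - 1)*(x ^ 21 - 1)*(x ^ 9 - 1)*(x ^ 6 - 1)).prod := by
      refine congrArg Multiset.prod (Multiset.map_congr rfl fun x _ => ?_)
      have h := congrArg (eval x) hPHI126
      simpa only [eval_mul, eval_sub, eval_pow, eval_X, eval_one] using h
    simp only [Multiset.prod_map_mul] at key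
    rw [hQ126, hQ63, hQ42, hQ21, hQ18, hQ9, hQ6, hQ3] at key
    linear_combination ((1 : ℂ) / 169) * key
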